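/- arXiv:1308.4172 — 11 statements merged into one kernel-verified Lean document; each statement's English description precedes it below -/
import Mathlib

section
/- Let R be a (unital, possibly noncommutative) ring and let T4 be the two-sided ideal of R generated by all left-normed commutators [a1,a2,a3,a4] = [[[a1,a2],a3],a4] with a1,a2,a3,a4 ∈ R. Then for all a1,...,a5 ∈ R, the element [a1,a2,a3]·[a4,a5] + [a1,a2,a4]·[a3,a5] belongs to T4. -/
/-- Commutator `[a,b] = a*b - b*a`. -/
def br {R : Type*} [Ring R] (a b : R) : R := a * b - b * a

/-- Left-normed triple commutator `[a,b,c] = [[a,b],c]`. -/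
def br3 {R : Type*} [Ring R] (a b c : R) : R := br (br a b) c

/-- Left-normed fourth commutator `[a,b,c,d] = [[[a,b],c],d]`. -/
def br4 {R : Type*} [Ring R] (a b c d : R) : R := br (br3 a b c) d

/-- The two-sided ideal generated by all fourth left-normed commutators. -/
def T4 (R : Type*) [Ring R] : TwoSidedIdeal R :=
  TwoSidedIdeal.span {x | ∃ a b c d : R, x = br4 a b c d}

theorem comm32_plus_comm32_mem_T4 {R : Type*} [Ring R] (a1 a2 a3 a4 a5 : R) :
    br3 a1 a2 a3 * br a4 a5 + br3 a1 a2 a4 * br a3 a5 ∈ T4 R := by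
  have hg : ∀ x y : R, br4 a1 a2 x y ∈ T4 R := fun x y =>
    TwoSidedIdeal.subset_span ⟨a1, a2, x, y, rfl⟩
  have key : br3 a1 a2 a3 * br a4 a5 + br3 a1 a2 a4 * br a3 a5 =
      br4 a1 a2 a3 a4 * a5 + br4 a1 a2 a4 a3 * a5 + a4 * br4 a1 a2 a5 a3
        + a3 * br4 a1 a2 a5 a4 - br4 a1 a2 (a4 * a5) a3 - br4 a1 a2 (a3 * a5) a4 := by
    simp only [br4, br3, br]
    noncomm_ring
  rw [key]
  refine TwoSidedIdeal.sub_mem _ (TwoSidedIdeal.sub_mem _ ?_ (hg _ _)) (hg _ _)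
  exact TwoSidedIdeal.add_mem _
    (TwoSidedIdeal.add_mem _
      (TwoSidedIdeal.add_mem _ (TwoSidedIdeal.mul_mem_right _ _ _ (hg _ _))
        (TwoSidedIdeal.mul_mem_right _ _ _ (hg _ _)))
      (TwoSidedIdeal.mul_mem_left _ _ _ (hg _ _)))
    (TwoSidedIdeal.mul_mem_left _ _ _ (hg _ _))
end

section
/- Let R be a ring and T4 the two-sided ideal of R generated by all commutators [a1,a2,a3,a4]. Then for all a1,...,a5 ∈ R, the element [a1,a2,a3]·[a4,a5] + [a1,a4,a3]·[a2,a5] belongs to T4. -/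
theorem comm32_plus_comm32_swap_mem_T4 {R : Type*} [Ring R] (a1 a2 a3 a4 a5 : R) :
    br3 a1 a2 a3 * br a4 a5 + br3 a1 a4 a3 * br a2 a5 ∈ T4 R := by
  have hgen : ∀ a b c d : R, br4 a b c d ∈ T4 R := fun a b c d =>
    TwoSidedIdeal.subset_span ⟨a, b, c, d, rfl⟩
  have key : br3 a1 a2 a3 * br a4 a5 + br3 a1 a4 a3 * br a2 a5 =
      ((2 : ℤ) • (a1 * br4 a2 a3 a4 a5)) +
      ((-1 : ℤ) • (br4 a2 a3 a4 a5 * a1)) +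
      ((-2 : ℤ) • (a1 * br4 a2 a3 a5 a4)) +
      ((-2 : ℤ) • (a1 * br4 a2 a4 a5 a3)) +
      ((1 : ℤ) • (br4 a2 a4 a5 a3 * a1)) +
      ((1 : ℤ) • (a1 * br4 a2 a5 a3 a4)) +
      ((-1 : ℤ) • (br4 a2 a5 a4 a3 * a1)) +
      ((-1 : ℤ) • (a2 * br4 a1 a3 a4 a5)) +
      ((1 : ℤ) • (br4 a1 a3 a4 a5 * a2)) +
      ((1 : ℤ) • (a2 * br4 a1 a3 a5 a4)) +
      ((-2 : ℤ) • (br4 a1 a3 a5 a4 * a2)) +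
      ((-2 : ℤ) • (br4 a1 a4 a5 a3 * a2)) +
      ((-1 : ℤ) • (a2 * br4 a1 a5 a4 a3)) +
      ((2 : ℤ) • (br4 a1 a5 a4 a3 * a2)) +
      ((-1 : ℤ) • (a3 * br4 a1 a2 a4 a5)) +
      ((1 : ℤ) • (br4 a1 a2 a4 a5 * a3)) +
      ((1 : ℤ) • (a3 * br4 a1 a2 a5 a4)) +
      ((1 : ℤ) • (br4 a1 a2 a5 a4 * a3)) +
      ((-2 : ℤ) • (br4 a1 a4 a2 a5 * a3)) +
      ((1 : ℤ) • (br4 a1 a4 a5 a2 * a3)) +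
      ((1 : ℤ) • (a3 * br4 a1 a5 a2 a4)) +
      ((-2 : ℤ) • (br4 a1 a5 a2 a4 * a3)) +
      ((1 : ℤ) • (br4 a1 a2 a3 a5 * a4)) +
      ((1 : ℤ) • (a4 * br4 a1 a2 a5 a3)) +
      ((-1 : ℤ) • (br4 a1 a2 a5 a3 * a4)) +
      ((-1 : ℤ) • (br4 a1 a3 a2 a5 * a4)) +
      ((-1 : ℤ) • (a4 * br4 a1 a5 a2 a3)) +
      ((1 : ℤ) • (br4 a1 a5 a2 a3 * a4)) +
      ((1 : ℤ) • (a5 * br4 a1 a2 a3 a4)) +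
      ((1 : ℤ) • (a5 * br4 a1 a2 a4 a3)) +
      ((-1 : ℤ) • (a5 * br4 a1 a3 a2 a4)) +
      ((-1 : ℤ) • (a5 * br4 a1 a4 a2 a3)) +
      ((-1 : ℤ) • (br4 (a1 * a2) a3 a4 a5)) +
      ((1 : ℤ) • (br4 a1 (a2 * a3) a4 a5)) +
      ((-1 : ℤ) • (br4 a1 a2 (a3 * a4) a5)) +
      ((2 : ℤ) • (br4 (a1 * a2) a3 a5 a4)) +
      ((-1 : ℤ) • (br4 a1 (a2 * a3) a5 a4)) +
      ((-1 : ℤ) • (br4 a1 a2 (a3 * a5) a4)) +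
      ((1 : ℤ) • (br4 (a1 * a2) a4 a5 a3)) +
      ((-1 : ℤ) • (br4 a1 (a2 * a5) a4 a3)) +
      ((1 : ℤ) • (br4 (a1 * a3) a4 a2 a5)) +
      ((1 : ℤ) • (br4 a1 (a3 * a4) a2 a5)) +
      ((-1 : ℤ) • (br4 (a1 * a3) a4 a5 a2)) +
      ((1 : ℤ) • (br4 a1 (a3 * a5) a2 a4)) +
      ((1 : ℤ) • (br4 a1 a4 (a2 * a5) a3)) := by
    simp only [br, br3, br4, zsmul_eq_mul]
    push_cast
    noncomm_ring
  rw [key]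
  exact ((T4 R).add_mem ((T4 R).add_mem ((T4 R).add_mem ((T4 R).add_mem ((T4 R).add_mem ((T4 R).add_mem ((T4 R).add_mem ((T4 R).add_mem ((T4 R).add_mem ((T4 R).add_mem ((T4 R).add_mem ((T4 R).add_mem ((T4 R).add_mem ((T4 R).add_mem ((T4 R).add_mem ((T4 R).add_mem ((T4 R).add_mem ((T4 R).add_mem ((T4 R).add_mem ((T4 R).add_mem ((T4 R).add_mem ((T4 R).add_mem ((T4 R).add_mem ((T4 R).add_mem ((T4 R).add_mem ((T4 R).add_mem ((T4 R).add_mem ((T4 R).add_mem ((T4 R).add_mem ((T4 R).add_mem ((T4 R).add_mem ((T4 R).add_mem ((T4 R).add_mem ((T4 R).add_mem ((T4 R).add_mem ((T4 R).add_mem ((T4 R).add_mem ((T4 R).add_mem ((T4 R).add_mem ((T4 R).add_mem ((T4 R).add_mem ((T4 R).add_mem ((T4 R).add_mem ((T4 R).add_mem ((T4 R).zsmul_mem (2) ((T4 R).mul_mem_left _ _ (hgen _ _ _ _))) ((T4 R).zsmul_mem (-1) ((T4 R).mul_mem_right _ _ (hgen _ _ _ _)))) ((T4 R).zsmul_mem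 (-2) ((T4 R).mul_mem_left _ _ (hgen _ _ _ _)))) ((T4 R).zsmul_mem (-2) ((T4 R).mul_mem_left _ _ (hgen _ _ _ _)))) ((T4 R).zsmul_mem (1) ((T4 R).mul_mem_right _ _ (hgen _ _ _ _)))) ((T4 R).zsmul_mem (1) ((T4 R).mul_mem_left _ _ (hgen _ _ _ _)))) ((T4 R).zsmul_mem (-1) ((T4 R).mul_mem_right _ _ (hgen _ _ _ _)))) ((T4 R).zsmul_mem (-1) ((T4 R).mul_mem_left _ _ (hgen _ _ _ _)))) ((T4 R).zsmul_mem (1) ((T4 R).mul_mem_right _ _ (hgen _ _ _ _)))) ((T4 R).zsmul_mem (1) ((T4 R).mul_mem_left _ _ (hgen _ _ _ _)))) ((T4 R).zsmul_mem (-2) ((T4 R).mul_mem_right _ _ (hgen _ _ _ _)))) ((T4 R).zsmul_mem (-2) ((T4 R).mul_mem_right _ _ (hgen _ _ _ _)))) ((T4 R).zsmul_mem (-1) ((T4 R).mul_mem_left _ _ (hgen _ _ _ _)))) ((T4 R).zsmul_mem (2) ((T4 R).mul_mem_right _ _ (hgen _ _ _ _)))) ((T4 R).zsmul_mem (-1)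 ((T4 R).mul_mem_left _ _ (hgen _ _ _ _)))) ((T4 R).zsmul_mem (1) ((T4 R).mul_mem_right _ _ (hgen _ _ _ _)))) ((T4 R).zsmul_mem (1) ((T4 R).mul_mem_left _ _ (hgen _ _ _ _)))) ((T4 R).zsmul_mem (1) ((T4 R).mul_mem_right _ _ (hgen _ _ _ _)))) ((T4 R).zsmul_mem (-2) ((T4 R).mul_mem_right _ _ (hgen _ _ _ _)))) ((T4 R).zsmul_mem (1) ((T4 R).mul_mem_right _ _ (hgen _ _ _ _)))) ((T4 R).zsmul_mem (1) ((T4 R).mul_mem_left _ _ (hgen _ _ _ _)))) ((T4 R).zsmul_mem (-2) ((T4 R).mul_mem_right _ _ (hgen _ _ _ _)))) ((T4 R).zsmul_mem (1) ((T4 R).mul_mem_right _ _ (hgen _ _ _ _)))) ((T4 R).zsmul_mem (1) ((T4 R).mul_mem_left _ _ (hgen _ _ _ _)))) ((T4 R).zsmul_mem (-1) ((T4 R).mul_mem_right _ _ (hgen _ _ _ _)))) ((T4 R).zsmul_mem (-1) ((T4 R).mul_mem_right _ _ (hgen _ _ _ _)))) ((T4 R).zsmul_mem (-1) ((T4 R).mul_mem_left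 _ _ (hgen _ _ _ _)))) ((T4 R).zsmul_mem (1) ((T4 R).mul_mem_right _ _ (hgen _ _ _ _)))) ((T4 R).zsmul_mem (1) ((T4 R).mul_mem_left _ _ (hgen _ _ _ _)))) ((T4 R).zsmul_mem (1) ((T4 R).mul_mem_left _ _ (hgen _ _ _ _)))) ((T4 R).zsmul_mem (-1) ((T4 R).mul_mem_left _ _ (hgen _ _ _ _)))) ((T4 R).zsmul_mem (-1) ((T4 R).mul_mem_left _ _ (hgen _ _ _ _)))) ((T4 R).zsmul_mem (-1) (hgen _ _ _ _))) ((T4 R).zsmul_mem (1) (hgen _ _ _ _))) ((T4 R).zsmul_mem (-1) (hgen _ _ _ _))) ((T4 R).zsmul_mem (2) (hgen _ _ _ _))) ((T4 R).zsmul_mem (-1) (hgen _ _ _ _))) ((T4 R).zsmul_mem (-1) (hgen _ _ _ _))) ((T4 R).zsmul_mem (1) (hgen _ _ _ _))) ((T4 R).zsmul_mem (-1) (hgen _ _ _ _))) ((T4 R).zsmul_mem (1) (hgen _ _ _ _))) ((T4 R).zsmul_mem (1) (hgen _ _ _ _))) ((T4 R).zsmul_mem (-1) (hgen _ _ _ _)))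 ((T4 R).zsmul_mem (1) (hgen _ _ _ _))) ((T4 R).zsmul_mem (1) (hgen _ _ _ _)))
end

section
/- Let R be a ring and T4 the two-sided ideal of R generated by all commutators [a1,a2,a3,a4]. Then for all a1,...,a6 ∈ R, the product [a1,a2,a3]·[a4,a5,a6] of two triple commutators belongs to T4. -/
lemma mem_br4 {R : Type*} [Ring R] (a b c d : R) : br4 a b c d ∈ T4 R :=
  TwoSidedIdeal.subset_span ⟨a, b, c, d, rfl⟩

lemma br_mem_T4 {R : Type*} [Ring R] {x : R} (h : x ∈ T4 R) (r : R) : br x r ∈ T4 R :=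
  (T4 R).sub_mem ((T4 R).mul_mem_right x r h) ((T4 R).mul_mem_left r x h)

set_option maxHeartbeats 4000000 in
lemma Rsum_mem {R : Type*} [Ring R] (x y b c d e : R) :
    br3 x b d * br3 y c e + br3 x b e * br3 y c d + br3 x c d * br3 y b e +
      br3 x c e * br3 y b d + br3 x d e * br3 y b c + br3 x b c * br3 y d e ∈ T4 R := by
  have h : br3 x b d * br3 y c e + br3 x b e * br3 y c d + br3 x c d * br3 y b e +
      br3 x c e * br3 y b d + br3 x d e * br3 y b c + br3 x b c * br3 y d e =
      br (br4 (x * y) b c d) e - x * br (br4 y b c d) e - br x e * br4 y b c d -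
        br x d * br4 y b c e - br (br4 x b c d) e * y - br4 x b c e * br y d -
        br4 x b c d * br y e - br x b * br4 y c d e - br4 x b d e * br y c -
        br x c * br4 y b d e - br4 x c d e * br y b := by
    simp only [br, br3, br4]
    noncomm_ring
  rw [h]
  exact ((T4 R).sub_mem ((T4 R).sub_mem ((T4 R).sub_mem ((T4 R).sub_mem ((T4 R).sub_mem ((T4 R).sub_mem ((T4 R).sub_mem ((T4 R).sub_mem ((T4 R).sub_mem ((T4 R).sub_mem (br_mem_T4 (mem_br4 (x * y) b c d) e) ((T4 R).mul_mem_left x _ (br_mem_T4 (mem_br4 y b c d) e))) ((T4 R).mul_mem_left (br x e) _ (mem_br4 y b c d))) ((T4 R).mul_mem_left (br x d) _ (mem_br4 y b c e))) ((T4 R).mul_mem_right _ y (br_mem_T4 (mem_br4 x b c d) e))) ((T4 R).mul_mem_right _ (br y d) (mem_br4 x b c e))) ((T4 R).mul_mem_right _ (br y e) (mem_br4 x b c d))) ((T4 R).mul_mem_left (br x b) _ (mem_br4 y c d e))) ((T4 R).mul_mem_right _ (br y c) (mem_br4 x b d e))) ((T4 R).mul_mem_left (br x c) _ (mem_br4 y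 b d e))) ((T4 R).mul_mem_right _ (br y b) (mem_br4 x c d e)))

set_option maxHeartbeats 4000000 in
theorem comm33_mem_T4 {R : Type*} [Ring R] (a1 a2 a3 a4 a5 a6 : R) :
    br3 a1 a2 a3 * br3 a4 a5 a6 ∈ T4 R := by
  have h : br3 a1 a2 a3 * br3 a4 a5 a6 =
      (((((((((((((((((((((((((((((((((((((((((((((((((((0 - (br3 a1 a4 a6 * br3 a2 a3 a5 + br3 a1 a4 a5 * br3 a2 a3 a6 + br3 a1 a3 a6 * br3 a2 a4 a5 + br3 a1 a3 a5 * br3 a2 a4 a6 + br3 a1 a6 a5 * br3 a2 a4 a3 + br3 a1 a4 a3 * br3 a2 a6 a5)) - (br3 a1 a5 a3 * br3 a4 a6 a2 + br3 a1 a5 a2 * br3 a4 a6 a3 + br3 a1 a6 a3 * br3 a4 a5 a2 + br3 a1 a6 a2 * br3 a4 a5 a3 + br3 a1 a3 a2 * br3 a4 a5 a6 + br3 a1 a5 a6 * br3 a4 a3 a2)) + (br3 a1 a6 a3 * br3 a4 a2 a5 + br3 a1 a6 a5 * br3 a4 a2 a3 + br3 a1 a2 a3 * br3 a4 a6 a5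 + br3 a1 a2 a5 * br3 a4 a6 a3 + br3 a1 a3 a5 * br3 a4 a6 a2 + br3 a1 a6 a2 * br3 a4 a3 a5)) - (br3 a1 a4 a2 * br3 a6 a3 a5 + br3 a1 a4 a5 * br3 a6 a3 a2 + br3 a1 a3 a2 * br3 a6 a4 a5 + br3 a1 a3 a5 * br3 a6 a4 a2 + br3 a1 a2 a5 * br3 a6 a4 a3 + br3 a1 a4 a3 * br3 a6 a2 a5)) + (br3 a2 a3 a5 * br3 a1 a4 a6 + br3 a2 a3 a6 * br3 a1 a4 a5 + br3 a2 a4 a5 * br3 a1 a3 a6 + br3 a2 a4 a6 * br3 a1 a3 a5 + br3 a2 a5 a6 * br3 a1 a3 a4 + br3 a2 a3 a4 * br3 a1 a5 a6)) + (br3 a2 a5 a6 * br3 a4 a3 a1 + br3 a2 a5 a1 * br3 a4 a3 a6 + br3 a2 a3 a6 * br3 a4 a5 a1 + br3 a2 a3 a1 * br3 a4 a5 a6 + br3 a2 a6 a1 * br3 a4 a5 a3 + br3 a2 a5 a3 * br3 a4 a6 a1)) + (br3 a2 a4 a6 * br3 a5 a3 a1 + br3 a2 a4 a1 * br3 a5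 a3 a6 + br3 a2 a3 a6 * br3 a5 a4 a1 + br3 a2 a3 a1 * br3 a5 a4 a6 + br3 a2 a6 a1 * br3 a5 a4 a3 + br3 a2 a4 a3 * br3 a5 a6 a1)) + (br3 a2 a4 a6 * br3 a5 a3 a1 + br3 a2 a4 a1 * br3 a5 a3 a6 + br3 a2 a3 a6 * br3 a5 a4 a1 + br3 a2 a3 a1 * br3 a5 a4 a6 + br3 a2 a6 a1 * br3 a5 a4 a3 + br3 a2 a4 a3 * br3 a5 a6 a1)) - (br3 a2 a6 a3 * br3 a5 a4 a1 + br3 a2 a6 a1 * br3 a5 a4 a3 + br3 a2 a4 a3 * br3 a5 a6 a1 + br3 a2 a4 a1 * br3 a5 a6 a3 + br3 a2 a3 a1 * br3 a5 a6 a4 + br3 a2 a6 a4 * br3 a5 a3 a1)) - (br3 a2 a3 a5 * br3 a6 a1 a4 + br3 a2 a3 a4 * br3 a6 a1 a5 + br3 a2 a1 a5 * br3 a6 a3 a4 + br3 a2 a1 a4 * br3 a6 a3 a5 + br3 a2 a5 a4 * br3 a6 a3 a1 + br3 a2 a3 a1 * br3 a6 a5 a4)) - (br3 a3 a2 a1 *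 br3 a5 a6 a4 + br3 a3 a2 a4 * br3 a5 a6 a1 + br3 a3 a6 a1 * br3 a5 a2 a4 + br3 a3 a6 a4 * br3 a5 a2 a1 + br3 a3 a1 a4 * br3 a5 a2 a6 + br3 a3 a2 a6 * br3 a5 a1 a4)) - (br3 a3 a1 a5 * br3 a6 a2 a4 + br3 a3 a1 a4 * br3 a6 a2 a5 + br3 a3 a2 a5 * br3 a6 a1 a4 + br3 a3 a2 a4 * br3 a6 a1 a5 + br3 a3 a5 a4 * br3 a6 a1 a2 + br3 a3 a1 a2 * br3 a6 a5 a4)) + (br3 a4 a5 a6 * br3 a1 a3 a2 + br3 a4 a5 a2 * br3 a1 a3 a6 + br3 a4 a3 a6 * br3 a1 a5 a2 + br3 a4 a3 a2 * br3 a1 a5 a6 + br3 a4 a6 a2 * br3 a1 a5 a3 + br3 a4 a5 a3 * br3 a1 a6 a2)) - (br3 a4 a6 a5 * br3 a1 a2 a3 + br3 a4 a6 a3 * br3 a1 a2 a5 + br3 a4 a2 a5 * br3 a1 a6 a3 + br3 a4 a2 a3 * br3 a1 a6 a5 + br3 a4 a5 a3 * br3 a1 a6 a2 + br3 a4 a6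 a2 * br3 a1 a5 a3)) + (br3 a4 a6 a2 * br3 a3 a1 a5 + br3 a4 a6 a5 * br3 a3 a1 a2 + br3 a4 a1 a2 * br3 a3 a6 a5 + br3 a4 a1 a5 * br3 a3 a6 a2 + br3 a4 a2 a5 * br3 a3 a6 a1 + br3 a4 a6 a1 * br3 a3 a2 a5)) - (br3 a5 a3 a1 * br3 a2 a6 a4 + br3 a5 a3 a4 * br3 a2 a6 a1 + br3 a5 a6 a1 * br3 a2 a3 a4 + br3 a5 a6 a4 * br3 a2 a3 a1 + br3 a5 a1 a4 * br3 a2 a3 a6 + br3 a5 a3 a6 * br3 a2 a1 a4)) + (br3 a5 a1 a2 * br3 a4 a3 a6 + br3 a5 a1 a6 * br3 a4 a3 a2 + br3 a5 a3 a2 * br3 a4 a1 a6 + br3 a5 a3 a6 * br3 a4 a1 a2 + br3 a5 a2 a6 * br3 a4 a1 a3 + br3 a5 a1 a3 * br3 a4 a2 a6)) - (br3 a6 a3 a5 * br3 a1 a4 a2 + br3 a6 a3 a2 * br3 a1 a4 a5 + br3 a6 a4 a5 * br3 a1 a3 a2 + br3 a6 a4 a2 * br3 a1 a3 a5 + br3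 a6 a5 a2 * br3 a1 a3 a4 + br3 a6 a3 a4 * br3 a1 a5 a2)) - (br3 a6 a3 a1 * br3 a5 a2 a4 + br3 a6 a3 a4 * br3 a5 a2 a1 + br3 a6 a2 a1 * br3 a5 a3 a4 + br3 a6 a2 a4 * br3 a5 a3 a1 + br3 a6 a1 a4 * br3 a5 a3 a2 + br3 a6 a3 a2 * br3 a5 a1 a4)) - br4 a1 a2 a3 (br3 a4 a5 a6)) - br4 a1 a2 a4 (br3 a3 a5 a6)) + br4 a1 a2 a5 (br3 a3 a4 a6)) - br4 a1 a2 a5 (br3 a3 a6 a4)) - br4 a1 a2 a6 (br3 a3 a5 a4)) + br4 a1 a3 a2 (br3 a4 a5 a6)) + br4 a1 a3 a2 (br3 a4 a5 a6)) - br4 a1 a3 a2 (br3 a4 a6 a5)) + br4 a1 a3 a4 (br3 a2 a5 a6)) + br4 a1 a3 a4 (br3 a2 a6 a5)) + br4 a1 a3 a5 (br3 a2 a4 a6)) + br4 a1 a3 a5 (br3 a2 a4 a6)) + br4 a1 a3 a5 (br3 a2 a4 a6)) + br4 a1 a3 a6 (br3 a2 a4 a5)) + br4 a1 a4 a2 (br3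 a3 a5 a6)) + br4 a1 a4 a2 (br3 a3 a6 a5)) + br4 a1 a4 a5 (br3 a2 a3 a6)) - br4 a1 a5 a2 (br3 a3 a4 a6)) + br4 a1 a5 a2 (br3 a3 a6 a4)) - br4 a1 a5 a3 (br3 a2 a4 a6)) - br4 a1 a5 a3 (br3 a2 a4 a6)) - br4 a1 a5 a4 (br3 a2 a3 a6)) + br4 a1 a5 a6 (br3 a2 a3 a4)) - br4 a1 a5 a6 (br3 a2 a4 a3)) - br4 a1 a5 a6 (br3 a2 a4 a3)) + br4 a1 a6 a2 (br3 a3 a5 a4)) + br4 a1 a6 a2 (br3 a3 a5 a4)) + br4 a1 a6 a3 (br3 a2 a5 a4)) + br4 a1 a6 a4 (br3 a2 a5 a3)) + br4 a1 a6 a5 (br3 a2 a3 a4)) + br4 a1 a6 a5 (br3 a2 a4 a3)) + br4 a1 a6 a5 (br3 a2 a4 a3)) := by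
    simp only [br, br3, br4]
    noncomm_ring
  rw [h]
  exact ((T4 R).add_mem ((T4 R).add_mem ((T4 R).add_mem ((T4 R).add_mem ((T4 R).add_mem ((T4 R).add_mem ((T4 R).add_mem ((T4 R).sub_mem ((T4 R).sub_mem ((T4 R).add_mem ((T4 R).sub_mem ((T4 R).sub_mem ((T4 R).sub_mem ((T4 R).add_mem ((T4 R).sub_mem ((T4 R).add_mem ((T4 R).add_mem ((T4 R).add_mem ((T4 R).add_mem ((T4 R).add_mem ((T4 R).add_mem ((T4 R).add_mem ((T4 R).add_mem ((T4 R).add_mem ((T4 R).sub_mem ((T4 R).add_mem ((T4 R).add_mem ((T4 R).sub_mem ((T4 R).sub_mem ((T4 R).add_mem ((T4 R).sub_mem ((T4 R).sub_mem ((T4 R).sub_mem ((T4 R).sub_mem ((T4 R).add_mem ((T4 R).sub_mem ((T4 R).add_mem ((T4 R).sub_mem ((T4 R).add_mem ((T4 R).sub_mem ((T4 R).sub_mem ((T4 R).sub_mem ((T4 R).sub_mem ((T4 R).add_mem ((T4 R).add_mem ((T4 R).add_mem ((T4 R).add_mem ((T4 R).sub_mem ((T4 R).add_mem ((T4 R).sub_mem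 ((T4 R).sub_mem (T4 R).zero_mem (Rsum_mem a1 a2 a4 a3 a6 a5)) (Rsum_mem a1 a4 a5 a6 a3 a2)) (Rsum_mem a1 a4 a6 a2 a3 a5)) (Rsum_mem a1 a6 a4 a3 a2 a5)) (Rsum_mem a2 a1 a3 a4 a5 a6)) (Rsum_mem a2 a4 a5 a3 a6 a1)) (Rsum_mem a2 a5 a4 a3 a6 a1)) (Rsum_mem a2 a5 a4 a3 a6 a1)) (Rsum_mem a2 a5 a6 a4 a3 a1)) (Rsum_mem a2 a6 a3 a1 a5 a4)) (Rsum_mem a3 a5 a2 a6 a1 a4)) (Rsum_mem a3 a6 a1 a2 a5 a4)) (Rsum_mem a4 a1 a5 a3 a6 a2)) (Rsum_mem a4 a1 a6 a2 a5 a3)) (Rsum_mem a4 a3 a6 a1 a2 a5)) (Rsum_mem a5 a2 a3 a6 a1 a4)) (Rsum_mem a5 a4 a1 a3 a2 a6)) (Rsum_mem a6 a1 a3 a4 a5 a2)) (Rsum_mem a6 a5 a3 a2 a1 a4)) (mem_br4 a1 a2 a3 (br3 a4 a5 a6))) (mem_br4 a1 a2 a4 (br3 a3 a5 a6))) (mem_br4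 a1 a2 a5 (br3 a3 a4 a6))) (mem_br4 a1 a2 a5 (br3 a3 a6 a4))) (mem_br4 a1 a2 a6 (br3 a3 a5 a4))) (mem_br4 a1 a3 a2 (br3 a4 a5 a6))) (mem_br4 a1 a3 a2 (br3 a4 a5 a6))) (mem_br4 a1 a3 a2 (br3 a4 a6 a5))) (mem_br4 a1 a3 a4 (br3 a2 a5 a6))) (mem_br4 a1 a3 a4 (br3 a2 a6 a5))) (mem_br4 a1 a3 a5 (br3 a2 a4 a6))) (mem_br4 a1 a3 a5 (br3 a2 a4 a6))) (mem_br4 a1 a3 a5 (br3 a2 a4 a6))) (mem_br4 a1 a3 a6 (br3 a2 a4 a5))) (mem_br4 a1 a4 a2 (br3 a3 a5 a6))) (mem_br4 a1 a4 a2 (br3 a3 a6 a5))) (mem_br4 a1 a4 a5 (br3 a2 a3 a6))) (mem_br4 a1 a5 a2 (br3 a3 a4 a6))) (mem_br4 a1 a5 a2 (br3 a3 a6 a4))) (mem_br4 a1 a5 a3 (br3 a2 a4 a6))) (mem_br4 a1 a5 a3 (br3 a2 a4 a6))) (mem_br4 a1 a5 a4 (br3 a2 a3 a6))) (mem_br4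 a1 a5 a6 (br3 a2 a3 a4))) (mem_br4 a1 a5 a6 (br3 a2 a4 a3))) (mem_br4 a1 a5 a6 (br3 a2 a4 a3))) (mem_br4 a1 a6 a2 (br3 a3 a5 a4))) (mem_br4 a1 a6 a2 (br3 a3 a5 a4))) (mem_br4 a1 a6 a3 (br3 a2 a5 a4))) (mem_br4 a1 a6 a4 (br3 a2 a5 a3))) (mem_br4 a1 a6 a5 (br3 a2 a3 a4))) (mem_br4 a1 a6 a5 (br3 a2 a4 a3))) (mem_br4 a1 a6 a5 (br3 a2 a4 a3)))
end

section
/- Let R be a ring and T4 the two-sided ideal of R generated by all commutators [a1,a2,a3,a4]. Then for all a1,...,a5 ∈ R and every permutation σ of {1,2,3,4,5}, the element [a1,a2]·[a3,a4,a5] − sgn(σ)·[a_{σ(1)},a_{σ(2)}]·[a_{σ(3)},a_{σ(4)},a_{σ(5)}] belongs to T4. In other words, modulo T4 the product [a1,a2][a3,a4,a5] is alternating in its five arguments. -/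
/-- The fundamental six-term relation, valid in any ring where all fourth
commutators vanish. -/
private lemma Srel {S : Type*} [Ring S] (h4 : ∀ a b c d : S, br4 a b c d = 0)
    (a b c d e : S) :
    br a e * br3 b c d + br b e * br3 a c d + br a d * br3 b c e +
      br b c * br3 a d e + br a c * br3 b d e + br b d * br3 a c e = 0 := by
  have key : br a e * br3 b c d + br b e * br3 a c d + br a d * br3 b c e +
      br b c * br3 a d e + br a c * br3 b d e + br b d * br3 a c e =
      br4 (a * b) c d e - a * br4 b c d e - br4 a c d e * b
        - br4 a c d (br b e) - br4 a d e (br b c) - br4 a c e (br b d) := by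
    simp only [br, br3, br4]; noncomm_ring
  rw [key, h4, h4, h4, h4, h4, h4]
  simp

private lemma sw01 {S : Type*} [Ring S] (_h4 : ∀ a b c d : S, br4 a b c d = 0)
    (x0 x1 x2 x3 x4 : S) :
    br x1 x0 * br3 x2 x3 x4 = -(br x0 x1 * br3 x2 x3 x4) := by
  simp only [br, br3]; noncomm_ring

private lemma sw02 {S : Type*} [Ring S] (h4 : ∀ a b c d : S, br4 a b c d = 0)
    (x0 x1 x2 x3 x4 : S) :
    br x2 x1 * br3 x0 x3 x4 = -(br x0 x1 * br3 x2 x3 x4) := by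
  have e0 := Srel h4 x0 x1 x2 x4 x3
  have e1 := Srel h4 x0 x2 x1 x3 x4
  have e2 := Srel h4 x0 x2 x1 x4 x3
  have e3 := Srel h4 x0 x2 x3 x4 x1
  have e4 := Srel h4 x0 x3 x1 x2 x4
  have e5 := Srel h4 x0 x4 x1 x2 x3
  have e6 := Srel h4 x1 x2 x3 x4 x0
  have e7 := Srel h4 x1 x3 x2 x0 x4
  have e8 := Srel h4 x1 x4 x2 x0 x3
  have key : br x2 x1 * br3 x0 x3 x4 + br x0 x1 * br3 x2 x3 x4 =
      (-1) * (br x0 x3 * br3 x1 x2 x4 + br x1 x3 * br3 x0 x2 x4 + br x0 x4 * br3 x1 x2 x3 + br x1 x2 * br3 x0 x4 x3 + br x0 x2 * br3 x1 x4 x3 + br x1 x4 * br3 x0 x2 x3) + (1) * (br x0 x4 * br3 x2 x1 x3 + br x2 x4 * br3 x0 x1 x3 + br x0 x3 * br3 x2 x1 x4 + br x2 x1 * br3 x0 x3 x4 + br x0 x1 * br3 x2 x3 x4 + br x2 x3 * br3 x0 x1 x4) + (-2) * (br x0 x3 * br3 x2 x1 x4 + br x2 x3 * br3 x0 x1 x4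 + br x0 x4 * br3 x2 x1 x3 + br x2 x1 * br3 x0 x4 x3 + br x0 x1 * br3 x2 x4 x3 + br x2 x4 * br3 x0 x1 x3) + (-1) * (br x0 x1 * br3 x2 x3 x4 + br x2 x1 * br3 x0 x3 x4 + br x0 x4 * br3 x2 x3 x1 + br x2 x3 * br3 x0 x4 x1 + br x0 x3 * br3 x2 x4 x1 + br x2 x4 * br3 x0 x3 x1) + (-1) * (br x0 x4 * br3 x3 x1 x2 + br x3 x4 * br3 x0 x1 x2 + br x0 x2 * br3 x3 x1 x4 + br x3 x1 * br3 x0 x2 x4 + br x0 x1 * br3 x3 x2 x4 + br x3 x2 * br3 x0 x1 x4) + (-1) * (br x0 x3 * br3 x4 x1 x2 + br x4 x3 * br3 x0 x1 x2 + br x0 x2 * br3 x4 x1 x3 + br x4 x1 * br3 x0 x2 x3 + br x0 x1 * br3 x4 x2 x3 + br x4 x2 * br3 x0 x1 x3) + (1) * (br x1 x0 * br3 x2 x3 x4 + br x2 x0 * br3 x1 x3 x4 + br x1 x4 * br3 x2 x3 x0 + br x2 x3 * br3 x1 x4 x0 + br x1 x3 * br3 x2 x4 x0 + br x2 x4 *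 br3 x1 x3 x0) + (1) * (br x1 x4 * br3 x3 x2 x0 + br x3 x4 * br3 x1 x2 x0 + br x1 x0 * br3 x3 x2 x4 + br x3 x2 * br3 x1 x0 x4 + br x1 x2 * br3 x3 x0 x4 + br x3 x0 * br3 x1 x2 x4) + (1) * (br x1 x3 * br3 x4 x2 x0 + br x4 x3 * br3 x1 x2 x0 + br x1 x0 * br3 x4 x2 x3 + br x4 x2 * br3 x1 x0 x3 + br x1 x2 * br3 x4 x0 x3 + br x4 x0 * br3 x1 x2 x3) := by
    simp only [br, br3]; noncomm_ring
  rw [e0, e1, e2, e3, e4, e5, e6, e7, e8] at key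
  norm_num at key
  exact eq_neg_of_add_eq_zero_left key

private lemma sw03 {S : Type*} [Ring S] (h4 : ∀ a b c d : S, br4 a b c d = 0)
    (x0 x1 x2 x3 x4 : S) :
    br x3 x1 * br3 x2 x0 x4 = -(br x0 x1 * br3 x2 x3 x4) := by
  have e0 := Srel h4 x0 x1 x3 x4 x2
  have e1 := Srel h4 x0 x2 x1 x3 x4
  have e2 := Srel h4 x0 x2 x1 x4 x3
  have e3 := Srel h4 x0 x3 x1 x2 x4
  have e4 := Srel h4 x0 x3 x1 x4 x2
  have e5 := Srel h4 x0 x3 x2 x4 x1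
  have e6 := Srel h4 x0 x4 x1 x3 x2
  have e7 := Srel h4 x1 x2 x3 x0 x4
  have e8 := Srel h4 x1 x2 x3 x4 x0
  have e9 := Srel h4 x1 x4 x2 x0 x3
  have key : br x3 x1 * br3 x2 x0 x4 + br x0 x1 * br3 x2 x3 x4 =
      (1) * (br x0 x2 * br3 x1 x3 x4 + br x1 x2 * br3 x0 x3 x4 + br x0 x4 * br3 x1 x3 x2 + br x1 x3 * br3 x0 x4 x2 + br x0 x3 * br3 x1 x4 x2 + br x1 x4 * br3 x0 x3 x2) + (1) * (br x0 x4 * br3 x2 x1 x3 + br x2 x4 * br3 x0 x1 x3 + br x0 x3 * br3 x2 x1 x4 + br x2 x1 * br3 x0 x3 x4 + br x0 x1 * br3 x2 x3 x4 + br x2 x3 * br3 x0 x1 x4) + (-1) * (br x0 x3 * br3 x2 x1 x4 + br x2 x3 * br3 x0 x1 x4 + br x0 x4 * br3 x2 x1 x3 + br x2 x1 * br3 x0 x4 x3 + br x0 x1 * br3 x2 x4 x3 + br x2 x4 * br3 x0 x1 x3) + (-1) * (br x0 x4 * br3 x3 x1 x2 + br x3 x4 * br3 x0 x1 x2 + br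 x0 x2 * br3 x3 x1 x4 + br x3 x1 * br3 x0 x2 x4 + br x0 x1 * br3 x3 x2 x4 + br x3 x2 * br3 x0 x1 x4) + (1) * (br x0 x2 * br3 x3 x1 x4 + br x3 x2 * br3 x0 x1 x4 + br x0 x4 * br3 x3 x1 x2 + br x3 x1 * br3 x0 x4 x2 + br x0 x1 * br3 x3 x4 x2 + br x3 x4 * br3 x0 x1 x2) + (1) * (br x0 x1 * br3 x3 x2 x4 + br x3 x1 * br3 x0 x2 x4 + br x0 x4 * br3 x3 x2 x1 + br x3 x2 * br3 x0 x4 x1 + br x0 x2 * br3 x3 x4 x1 + br x3 x4 * br3 x0 x2 x1) + (1) * (br x0 x2 * br3 x4 x1 x3 + br x4 x2 * br3 x0 x1 x3 + br x0 x3 * br3 x4 x1 x2 + br x4 x1 * br3 x0 x3 x2 + br x0 x1 * br3 x4 x3 x2 + br x4 x3 * br3 x0 x1 x2) + (-1) * (br x1 x4 * br3 x2 x3 x0 + br x2 x4 * br3 x1 x3 x0 + br x1 x0 * br3 x2 x3 x4 + br x2 x3 * br3 x1 x0 x4 + br x1 x3 * br3 x2 x0 x4 + br x2 x0 * br3 x1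 x3 x4) + (1) * (br x1 x0 * br3 x2 x3 x4 + br x2 x0 * br3 x1 x3 x4 + br x1 x4 * br3 x2 x3 x0 + br x2 x3 * br3 x1 x4 x0 + br x1 x3 * br3 x2 x4 x0 + br x2 x4 * br3 x1 x3 x0) + (1) * (br x1 x3 * br3 x4 x2 x0 + br x4 x3 * br3 x1 x2 x0 + br x1 x0 * br3 x4 x2 x3 + br x4 x2 * br3 x1 x0 x3 + br x1 x2 * br3 x4 x0 x3 + br x4 x0 * br3 x1 x2 x3) := by
    simp only [br, br3]; noncomm_ring
  rw [e0, e1, e2, e3, e4, e5, e6, e7, e8, e9] at key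
  norm_num at key
  exact eq_neg_of_add_eq_zero_left key

private lemma sw04 {S : Type*} [Ring S] (h4 : ∀ a b c d : S, br4 a b c d = 0)
    (x0 x1 x2 x3 x4 : S) :
    br x4 x1 * br3 x2 x3 x0 = -(br x0 x1 * br3 x2 x3 x4) := by
  have e0 := Srel h4 x0 x4 x1 x2 x3
  have e1 := Srel h4 x0 x4 x1 x3 x2
  have key : br x4 x1 * br3 x2 x3 x0 + br x0 x1 * br3 x2 x3 x4 =
      (-1) * (br x0 x3 * br3 x4 x1 x2 + br x4 x3 * br3 x0 x1 x2 + br x0 x2 * br3 x4 x1 x3 + br x4 x1 * br3 x0 x2 x3 + br x0 x1 * br3 x4 x2 x3 + br x4 x2 * br3 x0 x1 x3) + (1) * (br x0 x2 * br3 x4 x1 x3 + br x4 x2 * br3 x0 x1 x3 + br x0 x3 * br3 x4 x1 x2 + br x4 x1 * br3 x0 x3 x2 + br x0 x1 * br3 x4 x3 x2 + br x4 x3 * br3 x0 x1 x2) := by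
    simp only [br, br3]; noncomm_ring
  rw [e0, e1] at key
  norm_num at key
  exact eq_neg_of_add_eq_zero_left key

private lemma sw12 {S : Type*} [Ring S] (h4 : ∀ a b c d : S, br4 a b c d = 0)
    (x0 x1 x2 x3 x4 : S) :
    br x0 x2 * br3 x1 x3 x4 = -(br x0 x1 * br3 x2 x3 x4) := by
  have e0 := Srel h4 x0 x1 x2 x3 x4
  have e1 := Srel h4 x0 x1 x2 x4 x3
  have e2 := Srel h4 x0 x1 x3 x4 x2
  have e3 := Srel h4 x0 x2 x1 x3 x4
  have e4 := Srel h4 x0 x2 x1 x4 x3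
  have e5 := Srel h4 x0 x2 x3 x4 x1
  have e6 := Srel h4 x0 x3 x1 x2 x4
  have e7 := Srel h4 x0 x3 x2 x1 x4
  have e8 := Srel h4 x0 x4 x1 x2 x3
  have e9 := Srel h4 x0 x4 x2 x1 x3
  have e10 := Srel h4 x1 x2 x3 x4 x0
  have key : br x0 x2 * br3 x1 x3 x4 + br x0 x1 * br3 x2 x3 x4 =
      (1) * (br x0 x4 * br3 x1 x2 x3 + br x1 x4 * br3 x0 x2 x3 + br x0 x3 * br3 x1 x2 x4 + br x1 x2 * br3 x0 x3 x4 + br x0 x2 * br3 x1 x3 x4 + br x1 x3 * br3 x0 x2 x4) + (-2) * (br x0 x3 * br3 x1 x2 x4 + br x1 x3 * br3 x0 x2 x4 + br x0 x4 * br3 x1 x2 x3 + br x1 x2 * br3 x0 x4 x3 + br x0 x2 * br3 x1 x4 x3 + br x1 x4 * br3 x0 x2 x3) + (-1) * (br x0 x2 * br3 x1 x3 x4 + br x1 x2 * br3 x0 x3 x4 + br x0 x4 * br3 x1 x3 x2 + br x1 x3 * br3 x0 x4 x2 + br x0 x3 * br3 x1 x4 x2 + br x1 x4 * br3 x0 x3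 x2) + (1) * (br x0 x4 * br3 x2 x1 x3 + br x2 x4 * br3 x0 x1 x3 + br x0 x3 * br3 x2 x1 x4 + br x2 x1 * br3 x0 x3 x4 + br x0 x1 * br3 x2 x3 x4 + br x2 x3 * br3 x0 x1 x4) + (-2) * (br x0 x3 * br3 x2 x1 x4 + br x2 x3 * br3 x0 x1 x4 + br x0 x4 * br3 x2 x1 x3 + br x2 x1 * br3 x0 x4 x3 + br x0 x1 * br3 x2 x4 x3 + br x2 x4 * br3 x0 x1 x3) + (-1) * (br x0 x1 * br3 x2 x3 x4 + br x2 x1 * br3 x0 x3 x4 + br x0 x4 * br3 x2 x3 x1 + br x2 x3 * br3 x0 x4 x1 + br x0 x3 * br3 x2 x4 x1 + br x2 x4 * br3 x0 x3 x1) + (-1) * (br x0 x4 * br3 x3 x1 x2 + br x3 x4 * br3 x0 x1 x2 + br x0 x2 * br3 x3 x1 x4 + br x3 x1 * br3 x0 x2 x4 + br x0 x1 * br3 x3 x2 x4 + br x3 x2 * br3 x0 x1 x4) + (-1) * (br x0 x4 * br3 x3 x2 x1 + br x3 x4 * br3 x0 x2 x1 + br x0 x1 * br3 x3 x2 x4 +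 br x3 x2 * br3 x0 x1 x4 + br x0 x2 * br3 x3 x1 x4 + br x3 x1 * br3 x0 x2 x4) + (-1) * (br x0 x3 * br3 x4 x1 x2 + br x4 x3 * br3 x0 x1 x2 + br x0 x2 * br3 x4 x1 x3 + br x4 x1 * br3 x0 x2 x3 + br x0 x1 * br3 x4 x2 x3 + br x4 x2 * br3 x0 x1 x3) + (-1) * (br x0 x3 * br3 x4 x2 x1 + br x4 x3 * br3 x0 x2 x1 + br x0 x1 * br3 x4 x2 x3 + br x4 x2 * br3 x0 x1 x3 + br x0 x2 * br3 x4 x1 x3 + br x4 x1 * br3 x0 x2 x3) + (1) * (br x1 x0 * br3 x2 x3 x4 + br x2 x0 * br3 x1 x3 x4 + br x1 x4 * br3 x2 x3 x0 + br x2 x3 * br3 x1 x4 x0 + br x1 x3 * br3 x2 x4 x0 + br x2 x4 * br3 x1 x3 x0) := by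
    simp only [br, br3]; noncomm_ring
  rw [e0, e1, e2, e3, e4, e5, e6, e7, e8, e9, e10] at key
  norm_num at key
  exact eq_neg_of_add_eq_zero_left key

private lemma sw13 {S : Type*} [Ring S] (h4 : ∀ a b c d : S, br4 a b c d = 0)
    (x0 x1 x2 x3 x4 : S) :
    br x0 x3 * br3 x2 x1 x4 = -(br x0 x1 * br3 x2 x3 x4) := by
  have e0 := Srel h4 x0 x1 x3 x2 x4
  have e1 := Srel h4 x0 x1 x3 x4 x2
  have e2 := Srel h4 x0 x2 x1 x3 x4
  have e3 := Srel h4 x0 x2 x1 x4 x3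
  have e4 := Srel h4 x0 x2 x3 x1 x4
  have e5 := Srel h4 x0 x2 x3 x4 x1
  have e6 := Srel h4 x0 x3 x1 x2 x4
  have e7 := Srel h4 x0 x3 x1 x4 x2
  have e8 := Srel h4 x0 x4 x1 x3 x2
  have e9 := Srel h4 x0 x4 x2 x1 x3
  have e10 := Srel h4 x1 x3 x2 x4 x0
  have key : br x0 x3 * br3 x2 x1 x4 + br x0 x1 * br3 x2 x3 x4 =
      (-1) * (br x0 x4 * br3 x1 x3 x2 + br x1 x4 * br3 x0 x3 x2 + br x0 x2 * br3 x1 x3 x4 + br x1 x3 * br3 x0 x2 x4 + br x0 x3 * br3 x1 x2 x4 + br x1 x2 * br3 x0 x3 x4) + (1) * (br x0 x2 * br3 x1 x3 x4 + br x1 x2 * br3 x0 x3 x4 + br x0 x4 * br3 x1 x3 x2 + br x1 x3 * br3 x0 x4 x2 + br x0 x3 * br3 x1 x4 x2 + br x1 x4 * br3 x0 x3 x2) + (1) * (br x0 x4 * br3 x2 x1 x3 + br x2 x4 * br3 x0 x1 x3 + br x0 x3 * br3 x2 x1 x4 + br x2 x1 * br3 x0 x3 x4 + br x0 x1 * br3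 x2 x3 x4 + br x2 x3 * br3 x0 x1 x4) + (-1) * (br x0 x3 * br3 x2 x1 x4 + br x2 x3 * br3 x0 x1 x4 + br x0 x4 * br3 x2 x1 x3 + br x2 x1 * br3 x0 x4 x3 + br x0 x1 * br3 x2 x4 x3 + br x2 x4 * br3 x0 x1 x3) + (1) * (br x0 x4 * br3 x2 x3 x1 + br x2 x4 * br3 x0 x3 x1 + br x0 x1 * br3 x2 x3 x4 + br x2 x3 * br3 x0 x1 x4 + br x0 x3 * br3 x2 x1 x4 + br x2 x1 * br3 x0 x3 x4) + (-1) * (br x0 x1 * br3 x2 x3 x4 + br x2 x1 * br3 x0 x3 x4 + br x0 x4 * br3 x2 x3 x1 + br x2 x3 * br3 x0 x4 x1 + br x0 x3 * br3 x2 x4 x1 + br x2 x4 * br3 x0 x3 x1) + (-1) * (br x0 x4 * br3 x3 x1 x2 + br x3 x4 * br3 x0 x1 x2 + br x0 x2 * br3 x3 x1 x4 + br x3 x1 * br3 x0 x2 x4 + br x0 x1 * br3 x3 x2 x4 + br x3 x2 * br3 x0 x1 x4) + (1) * (br x0 x2 * br3 x3 x1 x4 + br x3 x2 * br3 x0 x1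 x4 + br x0 x4 * br3 x3 x1 x2 + br x3 x1 * br3 x0 x4 x2 + br x0 x1 * br3 x3 x4 x2 + br x3 x4 * br3 x0 x1 x2) + (1) * (br x0 x2 * br3 x4 x1 x3 + br x4 x2 * br3 x0 x1 x3 + br x0 x3 * br3 x4 x1 x2 + br x4 x1 * br3 x0 x3 x2 + br x0 x1 * br3 x4 x3 x2 + br x4 x3 * br3 x0 x1 x2) + (-1) * (br x0 x3 * br3 x4 x2 x1 + br x4 x3 * br3 x0 x2 x1 + br x0 x1 * br3 x4 x2 x3 + br x4 x2 * br3 x0 x1 x3 + br x0 x2 * br3 x4 x1 x3 + br x4 x1 * br3 x0 x2 x3) + (-1) * (br x1 x0 * br3 x3 x2 x4 + br x3 x0 * br3 x1 x2 x4 + br x1 x4 * br3 x3 x2 x0 + br x3 x2 * br3 x1 x4 x0 + br x1 x2 * br3 x3 x4 x0 + br x3 x4 * br3 x1 x2 x0) := by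
    simp only [br, br3]; noncomm_ring
  rw [e0, e1, e2, e3, e4, e5, e6, e7, e8, e9, e10] at key
  norm_num at key
  exact eq_neg_of_add_eq_zero_left key

private lemma sw14 {S : Type*} [Ring S] (h4 : ∀ a b c d : S, br4 a b c d = 0)
    (x0 x1 x2 x3 x4 : S) :
    br x0 x4 * br3 x2 x3 x1 = -(br x0 x1 * br3 x2 x3 x4) := by
  have e0 := Srel h4 x0 x1 x2 x3 x4
  have e1 := Srel h4 x0 x1 x3 x2 x4
  have e2 := Srel h4 x0 x4 x1 x2 x3
  have e3 := Srel h4 x0 x4 x1 x3 x2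
  have key : br x0 x4 * br3 x2 x3 x1 + br x0 x1 * br3 x2 x3 x4 =
      (-1) * (br x0 x4 * br3 x1 x2 x3 + br x1 x4 * br3 x0 x2 x3 + br x0 x3 * br3 x1 x2 x4 + br x1 x2 * br3 x0 x3 x4 + br x0 x2 * br3 x1 x3 x4 + br x1 x3 * br3 x0 x2 x4) + (1) * (br x0 x4 * br3 x1 x3 x2 + br x1 x4 * br3 x0 x3 x2 + br x0 x2 * br3 x1 x3 x4 + br x1 x3 * br3 x0 x2 x4 + br x0 x3 * br3 x1 x2 x4 + br x1 x2 * br3 x0 x3 x4) + (-1) * (br x0 x3 * br3 x4 x1 x2 + br x4 x3 * br3 x0 x1 x2 + br x0 x2 * br3 x4 x1 x3 + br x4 x1 * br3 x0 x2 x3 + br x0 x1 * br3 x4 x2 x3 + br x4 x2 * br3 x0 x1 x3) + (1) * (br x0 x2 * br3 x4 x1 x3 + br x4 x2 * br3 x0 x1 x3 + br x0 x3 * br3 x4 x1 x2 + br x4 x1 * br3 x0 x3 x2 + br x0 x1 * br3 x4 x3 x2 + br x4 x3 * br3 x0 x1 x2) := by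
    simp only [br, br3]; noncomm_ring
  rw [e0, e1, e2, e3] at key
  norm_num at key
  exact eq_neg_of_add_eq_zero_left key

private lemma sw23 {S : Type*} [Ring S] (_h4 : ∀ a b c d : S, br4 a b c d = 0)
    (x0 x1 x2 x3 x4 : S) :
    br x0 x1 * br3 x3 x2 x4 = -(br x0 x1 * br3 x2 x3 x4) := by
  simp only [br, br3]; noncomm_ring

private lemma sw24 {S : Type*} [Ring S] (h4 : ∀ a b c d : S, br4 a b c d = 0)
    (x0 x1 x2 x3 x4 : S) :
    br x0 x1 * br3 x4 x3 x2 = -(br x0 x1 * br3 x2 x3 x4) := by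
  have e0 := Srel h4 x0 x1 x3 x4 x2
  have e1 := Srel h4 x0 x2 x1 x3 x4
  have e2 := Srel h4 x0 x2 x1 x4 x3
  have e3 := Srel h4 x0 x3 x1 x2 x4
  have e4 := Srel h4 x0 x3 x1 x4 x2
  have e5 := Srel h4 x0 x3 x2 x4 x1
  have e6 := Srel h4 x0 x4 x1 x2 x3
  have e7 := Srel h4 x0 x4 x1 x3 x2
  have e8 := Srel h4 x1 x3 x2 x4 x0
  have key : br x0 x1 * br3 x4 x3 x2 + br x0 x1 * br3 x2 x3 x4 =
      (1) * (br x0 x2 * br3 x1 x3 x4 + br x1 x2 * br3 x0 x3 x4 + br x0 x4 * br3 x1 x3 x2 + br x1 x3 * br3 x0 x4 x2 + br x0 x3 * br3 x1 x4 x2 + br x1 x4 * br3 x0 x3 x2) + (2) * (br x0 x4 * br3 x2 x1 x3 + br x2 x4 * br3 x0 x1 x3 + br x0 x3 * br3 x2 x1 x4 + br x2 x1 * br3 x0 x3 x4 + br x0 x1 * br3 x2 x3 x4 + br x2 x3 * br3 x0 x1 x4) + (-1) * (br x0 x3 * br3 x2 x1 x4 + br x2 x3 * br3 x0 x1 x4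 + br x0 x4 * br3 x2 x1 x3 + br x2 x1 * br3 x0 x4 x3 + br x0 x1 * br3 x2 x4 x3 + br x2 x4 * br3 x0 x1 x3) + (-1) * (br x0 x4 * br3 x3 x1 x2 + br x3 x4 * br3 x0 x1 x2 + br x0 x2 * br3 x3 x1 x4 + br x3 x1 * br3 x0 x2 x4 + br x0 x1 * br3 x3 x2 x4 + br x3 x2 * br3 x0 x1 x4) + (1) * (br x0 x2 * br3 x3 x1 x4 + br x3 x2 * br3 x0 x1 x4 + br x0 x4 * br3 x3 x1 x2 + br x3 x1 * br3 x0 x4 x2 + br x0 x1 * br3 x3 x4 x2 + br x3 x4 * br3 x0 x1 x2) + (1) * (br x0 x1 * br3 x3 x2 x4 + br x3 x1 * br3 x0 x2 x4 + br x0 x4 * br3 x3 x2 x1 + br x3 x2 * br3 x0 x4 x1 + br x0 x2 * br3 x3 x4 x1 + br x3 x4 * br3 x0 x2 x1) + (-1) * (br x0 x3 * br3 x4 x1 x2 + br x4 x3 * br3 x0 x1 x2 + br x0 x2 * br3 x4 x1 x3 + br x4 x1 * br3 x0 x2 x3 + br x0 x1 * br3 x4 x2 x3 + br x4 x2 * br3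 x0 x1 x3) + (2) * (br x0 x2 * br3 x4 x1 x3 + br x4 x2 * br3 x0 x1 x3 + br x0 x3 * br3 x4 x1 x2 + br x4 x1 * br3 x0 x3 x2 + br x0 x1 * br3 x4 x3 x2 + br x4 x3 * br3 x0 x1 x2) + (-1) * (br x1 x0 * br3 x3 x2 x4 + br x3 x0 * br3 x1 x2 x4 + br x1 x4 * br3 x3 x2 x0 + br x3 x2 * br3 x1 x4 x0 + br x1 x2 * br3 x3 x4 x0 + br x3 x4 * br3 x1 x2 x0) := by
    simp only [br, br3]; noncomm_ring
  rw [e0, e1, e2, e3, e4, e5, e6, e7, e8] at key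
  norm_num at key
  exact eq_neg_of_add_eq_zero_left key

private lemma sw34 {S : Type*} [Ring S] (h4 : ∀ a b c d : S, br4 a b c d = 0)
    (x0 x1 x2 x3 x4 : S) :
    br x0 x1 * br3 x2 x4 x3 = -(br x0 x1 * br3 x2 x3 x4) := by
  have e0 := Srel h4 x0 x1 x2 x4 x3
  have e1 := Srel h4 x0 x2 x1 x3 x4
  have e2 := Srel h4 x0 x2 x1 x4 x3
  have e3 := Srel h4 x0 x2 x3 x4 x1
  have e4 := Srel h4 x0 x3 x1 x2 x4
  have e5 := Srel h4 x0 x3 x1 x4 x2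
  have e6 := Srel h4 x0 x4 x1 x2 x3
  have e7 := Srel h4 x0 x4 x1 x3 x2
  have e8 := Srel h4 x1 x2 x3 x4 x0
  have key : br x0 x1 * br3 x2 x4 x3 + br x0 x1 * br3 x2 x3 x4 =
      (-1) * (br x0 x3 * br3 x1 x2 x4 + br x1 x3 * br3 x0 x2 x4 + br x0 x4 * br3 x1 x2 x3 + br x1 x2 * br3 x0 x4 x3 + br x0 x2 * br3 x1 x4 x3 + br x1 x4 * br3 x0 x2 x3) + (1) * (br x0 x4 * br3 x2 x1 x3 + br x2 x4 * br3 x0 x1 x3 + br x0 x3 * br3 x2 x1 x4 + br x2 x1 * br3 x0 x3 x4 + br x0 x1 * br3 x2 x3 x4 + br x2 x3 * br3 x0 x1 x4) + (-1) * (br x0 x3 * br3 x2 x1 x4 + br x2 x3 * br3 x0 x1 x4 + br x0 x4 * br3 x2 x1 x3 + br x2 x1 * br3 x0 x4 x3 + br x0 x1 * br3 x2 x4 x3 + br x2 x4 * br3 x0 x1 x3) + (-1) * (br x0 x1 * br3 x2 x3 x4 + br x2 x1 * br3 x0 x3 x4 + br x0 x4 * br3 x2 x3 x1 + br x2 x3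 * br3 x0 x4 x1 + br x0 x3 * br3 x2 x4 x1 + br x2 x4 * br3 x0 x3 x1) + (-2) * (br x0 x4 * br3 x3 x1 x2 + br x3 x4 * br3 x0 x1 x2 + br x0 x2 * br3 x3 x1 x4 + br x3 x1 * br3 x0 x2 x4 + br x0 x1 * br3 x3 x2 x4 + br x3 x2 * br3 x0 x1 x4) + (1) * (br x0 x2 * br3 x3 x1 x4 + br x3 x2 * br3 x0 x1 x4 + br x0 x4 * br3 x3 x1 x2 + br x3 x1 * br3 x0 x4 x2 + br x0 x1 * br3 x3 x4 x2 + br x3 x4 * br3 x0 x1 x2) + (-2) * (br x0 x3 * br3 x4 x1 x2 + br x4 x3 * br3 x0 x1 x2 + br x0 x2 * br3 x4 x1 x3 + br x4 x1 * br3 x0 x2 x3 + br x0 x1 * br3 x4 x2 x3 + br x4 x2 * br3 x0 x1 x3) + (1) * (br x0 x2 * br3 x4 x1 x3 + br x4 x2 * br3 x0 x1 x3 + br x0 x3 * br3 x4 x1 x2 + br x4 x1 * br3 x0 x3 x2 + br x0 x1 * br3 x4 x3 x2 + br x4 x3 * br3 x0 x1 x2) + (1) * (br x1 x0 * br3 x2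 x3 x4 + br x2 x0 * br3 x1 x3 x4 + br x1 x4 * br3 x2 x3 x0 + br x2 x3 * br3 x1 x4 x0 + br x1 x3 * br3 x2 x4 x0 + br x2 x4 * br3 x1 x3 x0) := by
    simp only [br, br3]; noncomm_ring
  rw [e0, e1, e2, e3, e4, e5, e6, e7, e8] at key
  norm_num at key
  exact eq_neg_of_add_eq_zero_left key

private lemma swap_any {S : Type*} [Ring S] (h4 : ∀ a b c d : S, br4 a b c d = 0)
    (i j : Fin 5) (hij : i ≠ j) (a : Fin 5 → S) :
    br (a (Equiv.swap i j 0)) (a (Equiv.swap i j 1)) *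
        br3 (a (Equiv.swap i j 2)) (a (Equiv.swap i j 3)) (a (Equiv.swap i j 4)) =
      -(br (a 0) (a 1) * br3 (a 2) (a 3) (a 4)) := by
  fin_cases i <;> fin_cases j <;>
    simp only [Equiv.swap_apply_def] <;>
    first
    | exact absurd rfl hij
    | (norm_num
       first
       | exact sw01 h4 (a 0) (a 1) (a 2) (a 3) (a 4)
       | exact sw02 h4 (a 0) (a 1) (a 2) (a 3) (a 4)
       | exact sw03 h4 (a 0) (a 1) (a 2) (a 3) (a 4)
       | exact sw04 h4 (a 0) (a 1) (a 2) (a 3) (a 4)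
       | exact sw12 h4 (a 0) (a 1) (a 2) (a 3) (a 4)
       | exact sw13 h4 (a 0) (a 1) (a 2) (a 3) (a 4)
       | exact sw14 h4 (a 0) (a 1) (a 2) (a 3) (a 4)
       | exact sw23 h4 (a 0) (a 1) (a 2) (a 3) (a 4)
       | exact sw24 h4 (a 0) (a 1) (a 2) (a 3) (a 4)
       | exact sw34 h4 (a 0) (a 1) (a 2) (a 3) (a 4))

private lemma main_perm {S : Type*} [Ring S] (h4 : ∀ a b c d : S, br4 a b c d = 0)
    (σ : Equiv.Perm (Fin 5)) :
    ∀ a : Fin 5 → S,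
      br (a (σ 0)) (a (σ 1)) * br3 (a (σ 2)) (a (σ 3)) (a (σ 4)) =
        (Equiv.Perm.sign σ : ℤ) • (br (a 0) (a 1) * br3 (a 2) (a 3) (a 4)) := by
  refine Equiv.Perm.swap_induction_on σ ?_ ?_
  · intro a; simp
  · intro f x y hxy ih a
    have h1 := ih (a ∘ Equiv.swap x y)
    simp only [Function.comp_apply] at h1
    have h2 := swap_any h4 x y hxy a
    calc br (a ((Equiv.swap x y * f) 0)) (a ((Equiv.swap x y * f) 1)) *
          br3 (a ((Equiv.swap x y * f) 2)) (a ((Equiv.swap x y * f) 3))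
            (a ((Equiv.swap x y * f) 4))
        = br (a (Equiv.swap x y (f 0))) (a (Equiv.swap x y (f 1))) *
            br3 (a (Equiv.swap x y (f 2))) (a (Equiv.swap x y (f 3)))
              (a (Equiv.swap x y (f 4))) := by
          simp [Equiv.Perm.mul_apply]
      _ = (Equiv.Perm.sign f : ℤ) •
            (br (a (Equiv.swap x y 0)) (a (Equiv.swap x y 1)) *
              br3 (a (Equiv.swap x y 2)) (a (Equiv.swap x y 3))
                (a (Equiv.swap x y 4))) := h1
      _ = (Equiv.Perm.sign f : ℤ) •
            (-(br (a 0) (a 1) * br3 (a 2) (a 3) (a 4))) := by rw [h2]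
      _ = (Equiv.Perm.sign (Equiv.swap x y * f) : ℤ) •
            (br (a 0) (a 1) * br3 (a 2) (a 3) (a 4)) := by
          rw [Equiv.Perm.sign_mul, Equiv.Perm.sign_swap hxy]
          simp [smul_neg]

theorem comm23_alternating_mod_T4 {R : Type*} [Ring R] (a : Fin 5 → R)
    (σ : Equiv.Perm (Fin 5)) :
    br (a 0) (a 1) * br3 (a 2) (a 3) (a 4)
      - (Equiv.Perm.sign σ : ℤ) •
        (br (a (σ 0)) (a (σ 1)) * br3 (a (σ 2)) (a (σ 3)) (a (σ 4))) ∈ T4 R := by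
  set c := (T4 R).ringCon with hc
  let π : R →+* c.Quotient := RingCon.mk' c
  have hmem : ∀ x : R, x ∈ T4 R ↔ π x = 0 := by
    intro x
    rw [TwoSidedIdeal.mem_iff]
    constructor
    · intro h
      have : π x = π 0 := RingCon.eq c |>.mpr h
      simpa using this
    · intro h
      have : π x = π 0 := by simpa using h
      exact (RingCon.eq c).mp this
  rw [hmem]
  have hbr : ∀ x y : R, π (br x y) = br (π x) (π y) := by
    intro x y; simp [br, map_sub, map_mul]
  have hbr3 : ∀ x y z : R, π (br3 x y z) = br3 (π x) (π y) (π z) := by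
    intro x y z; simp [br3, hbr]
  have h4 : ∀ u v w t : c.Quotient, br4 u v w t = 0 := by
    intro u v w t
    obtain ⟨x, rfl⟩ := Quotient.exists_rep u
    obtain ⟨y, rfl⟩ := Quotient.exists_rep v
    obtain ⟨z, rfl⟩ := Quotient.exists_rep w
    obtain ⟨s, rfl⟩ := Quotient.exists_rep t
    have hx : ∀ r : R, (⟦r⟧ : c.Quotient) = π r := fun _ => rfl
    rw [hx, hx, hx, hx]
    have : br4 x y z s ∈ T4 R :=
      TwoSidedIdeal.subset_span ⟨x, y, z, s, rfl⟩
    have h0 : π (br4 x y z s) = 0 := (hmem _).mp this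
    rw [← h0]
    simp [br4, hbr, hbr3]
  have hmain := main_perm h4 σ (fun i => π (a i))
  rw [map_sub, map_mul, map_zsmul, map_mul, hbr, hbr3, hbr, hbr3, hmain]
  rw [smul_smul]
  have : ((Equiv.Perm.sign σ : ℤ) * (Equiv.Perm.sign σ : ℤ)) = 1 := by
    rcases Int.units_eq_one_or (Equiv.Perm.sign σ) with h | h <;> rw [h] <;> simp
  rw [this, one_smul, sub_self]
end

section
/- Let K be a commutative ring with 1/3 ∈ K, Y a nonempty set, and T4 the two-sided ideal of the free algebra K⟨Y⟩ generated by all commutators [a1,a2,a3,a4]. Then T4 is generated as a two-sided ideal by the elements [y1,y2,y3,y4], ([y1,y2][y3,y4] + [y1,y3][y2,y4])[y5,y6], and [y1,y2][y3,y4,y5], where yi range over Y. -/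
namespace T4proof

section Identities

variable {A : Type*} [Ring A]

lemma id_relA (a b c d e : A) :
    br c e * br3 a b d + br d e * br3 a b c =
    br4 a b (c*d) e - c * br4 a b d e - br4 a b c e * d - br4 a b c (br d e) := by
  simp only [br4, br3, br]; noncomm_ring

lemma id_relB (a b c d e : A) :
    br b e * br3 a c d + br b d * br3 a c e + br a c * br3 b d e + br a b * br3 c d e
      + br c d * br3 a b e + br c e * br3 a b d =
    br4 a (b*c) d e - b * br4 a c d e - br4 a b d e * c
      - br4 b d e (br a c) - br4 a b e (br c d) - br4 a b d (br c e) := by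
  simp only [br4, br3, br]; noncomm_ring

/-- `F a b c d e = h a b c d e - h e c b d a` as combination of relA/relB sums. -/
lemma id_F (a b c d e : A) :
    br a b * br3 c d e - br e c * br3 b d a =
      (br b e * br3 a c d + br b d * br3 a c e + br a c * br3 b d e + br a b * br3 c d e
        + br c d * br3 a b e + br c e * br3 a b d)
      - (br c e * br3 a b d + br d e * br3 a b c)
      - (br c d * br3 a b e + br e d * br3 a b c)
      - (br b e * br3 a c d + br d e * br3 a c b)
      - (br b d * br3 a c e + br e d * br3 a c b)
      - (br a c * br3 b d e + br e c * br3 b d a) := by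
  simp only [br3, br]; noncomm_ring

lemma id_jac (a b c d e : A) :
    br a b * br3 c d e + br a b * br3 d e c + br a b * br3 e c d = 0 := by
  simp only [br3, br]; noncomm_ring

lemma id_c2 (a b c d e : A) :
    br a b * br3 d e c - br a b * br3 c d e =
      (br a b * br3 c e d - br d c * br3 b e a)
      + (br a b * br3 d c e - br e d * br3 b c a)
      + (br a b * br3 d e c - br c d * br3 b e a)
      + (br a b * br3 e c d - br d e * br3 b c a) := by
  simp only [br3, br]; noncomm_ring

lemma id_c3 (a b c d e : A) :
    br a b * br3 e c d - br a b * br3 c d e =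
      (br a b * br3 d c e - br e d * br3 b c a)
      + (br a b * br3 e c d - br d e * br3 b c a) := by
  simp only [br3, br]; noncomm_ring

lemma id_threeh (a b c d e : A) :
    (3 : A) * (br a b * br3 c d e) =
      (br a b * br3 c d e + br a b * br3 d e c + br a b * br3 e c d)
      - (br a b * br3 d e c - br a b * br3 c d e)
      - (br a b * br3 e c d - br a b * br3 c d e) := by
  noncomm_ring

lemma id_hswap (x y z u v : A) :
    br3 x y z * br u v = br u v * br3 x y z + br4 x y z (br u v) := by
  simp only [br4, br3, br]; noncomm_ring

lemma id_Wred (a b c d e f : A) :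
    (br a b * br c d + br a c * br b d) * br e f =
      -(br3 (b*c) d a * br e f) + br4 b d c a * br e f
      + b * (br e f * br3 c d a) + c * (br e f * br3 b d a)
      + b * br4 c d a (br e f) + c * br4 b d a (br e f) := by
  simp only [br4, br3, br]; noncomm_ring

end Identities

section Sup

variable {K : Type*} [CommRing K] {A : Type*} [Ring A] [Algebra K A]

lemma t4_br4 (a b c d : A) : br4 a b c d ∈ T4 A :=
  TwoSidedIdeal.subset_span ⟨a, b, c, d, rfl⟩

lemma t4_smul (k : K) {x : A} (hx : x ∈ T4 A) : k • x ∈ T4 A := by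
  rw [Algebra.smul_def]; exact (T4 A).mul_mem_left _ _ hx

lemma t4_unthree (h3 : IsUnit (3 : K)) {x : A} (hx : (3 : A) * x ∈ T4 A) : x ∈ T4 A := by
  have h1 : ((h3.unit⁻¹ : Kˣ) : K) • ((3 : A) * x) = x := by
    have h30 : ((3 : K) • x) = (3 : A) * x := by
      rw [Algebra.smul_def, map_ofNat]
    rw [← h30, ← mul_smul]
    have : ((h3.unit⁻¹ : Kˣ) : K) * (3 : K) = 1 := by
      have h2 := h3.val_inv_mul
      exact h2

    rw [this, one_smul]
  rw [← h1]; exact t4_smul _ hx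

lemma relA_mem (a b c d e : A) : br c e * br3 a b d + br d e * br3 a b c ∈ T4 A := by
  rw [id_relA]
  exact ((T4 A).sub_mem ((T4 A).sub_mem ((T4 A).sub_mem (t4_br4 _ _ _ _)
    ((T4 A).mul_mem_left _ _ (t4_br4 _ _ _ _))) ((T4 A).mul_mem_right _ _ (t4_br4 _ _ _ _)))
    (t4_br4 _ _ _ _))

lemma relB_mem (a b c d e : A) :
    br b e * br3 a c d + br b d * br3 a c e + br a c * br3 b d e + br a b * br3 c d e
      + br c d * br3 a b e + br c e * br3 a b d ∈ T4 A := by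
  rw [id_relB]
  refine (T4 A).sub_mem ((T4 A).sub_mem ((T4 A).sub_mem ((T4 A).sub_mem ((T4 A).sub_mem
    (t4_br4 _ _ _ _) ((T4 A).mul_mem_left _ _ (t4_br4 _ _ _ _)))
    ((T4 A).mul_mem_right _ _ (t4_br4 _ _ _ _))) (t4_br4 _ _ _ _)) (t4_br4 _ _ _ _))
    (t4_br4 _ _ _ _)

lemma F_mem (a b c d e : A) : br a b * br3 c d e - br e c * br3 b d a ∈ T4 A := by
  rw [id_F]
  exact (T4 A).sub_mem ((T4 A).sub_mem ((T4 A).sub_mem ((T4 A).sub_mem ((T4 A).sub_mem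
    (relB_mem a b c d e) (relA_mem a b c d e)) (relA_mem a b c e d)) (relA_mem a c b d e))
    (relA_mem a c b e d)) (relA_mem b d a e c)

lemma h_mem (h3 : IsUnit (3 : K)) (a b c d e : A) : br a b * br3 c d e ∈ T4 A := by
  refine t4_unthree h3 ?_
  rw [id_threeh]
  have j : br a b * br3 c d e + br a b * br3 d e c + br a b * br3 e c d ∈ T4 A := by
    rw [id_jac]; exact (T4 A).zero_mem
  have m2 : br a b * br3 d e c - br a b * br3 c d e ∈ T4 A := by
    rw [id_c2]
    exact (T4 A).add_mem ((T4 A).add_mem ((T4 A).add_mem (F_mem a b c e d) (F_mem a b d c e))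
      (F_mem a b d e c)) (F_mem a b e c d)
  have m3 : br a b * br3 e c d - br a b * br3 c d e ∈ T4 A := by
    rw [id_c3]
    exact (T4 A).add_mem (F_mem a b d c e) (F_mem a b e c d)
  exact (T4 A).sub_mem ((T4 A).sub_mem j m2) m3

lemma h_mem' (h3 : IsUnit (3 : K)) (c d e a b : A) : br3 c d e * br a b ∈ T4 A := by
  rw [id_hswap]
  exact (T4 A).add_mem (h_mem h3 a b c d e) (t4_br4 _ _ _ _)

lemma W_mem (h3 : IsUnit (3 : K)) (a b c d e f : A) :
    (br a b * br c d + br a c * br b d) * br e f ∈ T4 A := by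
  rw [id_Wred]
  refine (T4 A).add_mem ((T4 A).add_mem ((T4 A).add_mem ((T4 A).add_mem ((T4 A).add_mem
    ((T4 A).neg_mem (h_mem' h3 _ _ _ _ _)) ((T4 A).mul_mem_right _ _ (t4_br4 _ _ _ _)))
    ((T4 A).mul_mem_left _ _ (h_mem h3 _ _ _ _ _)))
    ((T4 A).mul_mem_left _ _ (h_mem h3 _ _ _ _ _)))
    ((T4 A).mul_mem_left _ _ (t4_br4 _ _ _ _)))
    ((T4 A).mul_mem_left _ _ (t4_br4 _ _ _ _))

end Sup

section SplitIdentities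

variable {A : Type*} [Ring A]

@[simp] lemma br_one_left (x : A) : br 1 x = 0 := by simp [br]
@[simp] lemma br_one_right (x : A) : br x 1 = 0 := by simp [br]
@[simp] lemma br_zero_left (x : A) : br 0 x = 0 := by simp [br]
@[simp] lemma br_zero_right (x : A) : br x 0 = 0 := by simp [br]
@[simp] lemma br3_one₁ (b c : A) : br3 1 b c = 0 := by simp [br3]
@[simp] lemma br3_one₂ (a c : A) : br3 a 1 c = 0 := by simp [br3]
@[simp] lemma br3_one₃ (a b : A) : br3 a b 1 = 0 := by simp [br3]
@[simp] lemma br4_one₁ (b c d : A) : br4 1 b c d = 0 := by simp [br4]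
@[simp] lemma br4_one₂ (a c d : A) : br4 a 1 c d = 0 := by simp [br4]
@[simp] lemma br4_one₃ (a b d : A) : br4 a b 1 d = 0 := by simp [br4]
@[simp] lemma br4_one₄ (a b c : A) : br4 a b c 1 = 0 := by simp [br4]

lemma br_antisym (x y : A) : br x y = -br y x := by simp only [br]; noncomm_ring

lemma id_swap12 (a b c d : A) : br4 a b c d = -br4 b a c d := by
  simp only [br4, br3, br]; noncomm_ring

lemma id_IA (a b c d e : A) :
    br3 a b c * br d e = br d e * br3 a b c
      + (br4 a b c d * e - e * br4 a b c d) - (br4 a b c e * d - d * br4 a b c e) := by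
  simp only [br4, br3, br]; noncomm_ring

lemma id_IC (a b c d e f : A) :
    br3 a b c * br3 d e f =
      (br a b * br3 d e f) * c - br a b * br4 d e f c - c * (br a b * br3 d e f) := by
  simp only [br4, br3, br]; noncomm_ring

lemma id_P1s4 (a b c p q : A) :
    br4 a b c (p*q) = p * br4 a b c q + br4 a b c p * q := by
  simp only [br4, br3, br]; noncomm_ring

lemma id_P1s3 (a b p q d : A) :
    br4 a b (p*q) d = p * br4 a b q d + br p d * br3 a b q + br3 a b p * br q d
      + br4 a b p d * q := by
  simp only [br4, br3, br]; noncomm_ring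

lemma id_P1s2 (a p q c d : A) :
    br4 a (p*q) c d = p * br4 a q c d + br p d * br3 a q c + br p c * br3 a q d
      + br3 p c d * br a q + br a p * br3 q c d + br3 a p d * br q c + br3 a p c * br q d
      + br4 a p c d * q := by
  simp only [br4, br3, br]; noncomm_ring

lemma id_P3s1 (p q v w x y : A) :
    br (p*q) v * br3 w x y = p * (br q v * br3 w x y) + (br p v * br3 w x y) * q
      - br p v * br4 w x y q := by
  simp only [br4, br3, br]; noncomm_ring

lemma id_P3s3 (u v p q x y : A) :
    br u v * br3 (p*q) x y =
      p * (br u v * br3 q x y) + br3 u v p * br3 q x y + (br u v * br3 p x y) * q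
      - (br p y * br x q + br p x * br y q) * br u v
      + br p y * (br4 u v q x - br4 u v x q) + (br4 u v p y - br4 u v y p) * br q x
      + br p x * (br4 u v q y - br4 u v y q) + (br4 u v p x - br4 u v x p) * br q y := by
  simp only [br4, br3, br]; noncomm_ring

lemma id_P3s4 (u v x p q y : A) :
    br u v * br3 x (p*q) y =
      p * (br u v * br3 x q y) + br3 u v p * br3 x q y + (br u v * br3 x p y) * q
      + (br p y * br x q + br p x * br y q) * br u v
      + br p y * (br4 u v x q - br4 u v q x) + (br4 u v p y - br4 u v y p) * br x q
      + br x p * (br4 u v q y - br4 u v y q) + (br4 u v x p - br4 u v p x) * br q y := by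
  simp only [br4, br3, br]; noncomm_ring

lemma id_P3s5 (u v x y p q : A) :
    br u v * br3 x y (p*q) =
      p * (br u v * br3 x y q) + br3 u v p * br3 x y q + (br u v * br3 x y p) * q := by
  simp only [br4, br3, br]; noncomm_ring

lemma id_P2sa (p q b c d e f : A) :
    (br (p*q) b * br c d + br (p*q) c * br b d) * br e f =
      p * ((br q b * br c d + br q c * br b d) * br e f)
      + q * ((br p b * br c d + br p c * br b d) * br e f)
      + (br3 p b q * br c d) * br e f + (br3 p c q * br b d) * br e f := by
  simp only [br3, br]; noncomm_ring

lemma id_P2sb (a p q c d e f : A) :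
    (br a (p*q) * br c d + br a c * br (p*q) d) * br e f =
      p * ((br a q * br c d + br a c * br q d) * br e f)
      + (br3 a c p * br q d) * br e f
      + q * ((br a p * br c d + br a c * br p d) * br e f)
      + (br3 a p q * br c d) * br e f
      + br a c * (br p d * br3 q e f) - br a c * (br p d * br3 q f e)
      + br a c * (br p d * br3 e f q)
      + br a c * (br3 p d q * br e f)
      + (br3 a c q * br p d) * br e f := by
  simp only [br3, br]; noncomm_ring

lemma id_P2sd (a b c p q e f : A) :
    (br a b * br c (p*q) + br a c * br b (p*q)) * br e f =
      p * ((br a b * br c q + br a c * br b q) * br e f)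
      + (br3 a b p * br c q) * br e f + (br3 a c p * br b q) * br e f
      + ((br a b * br c p + br a c * br b p) * br e f) * q
      + br a b * (br c p * br3 q e f) + br a c * (br b p * br3 q e f)
      - br a b * (br c p * br3 q f e) - br a c * (br b p * br3 q f e) := by
  simp only [br3, br]; noncomm_ring

lemma id_P2se (a b c d p q f : A) :
    (br a b * br c d + br a c * br b d) * br (p*q) f =
      p * ((br a b * br c d + br a c * br b d) * br q f)
      + br a b * (br3 c d p * br q f) + (br3 a b p * br c d) * br q f
      + br a c * (br3 b d p * br q f) + (br3 a c p * br b d) * br q f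
      + ((br a b * br c d + br a c * br b d) * br p f) * q := by
  simp only [br3, br]; noncomm_ring

lemma br4_zero₁ (b c d : A) : br4 0 b c d = 0 := by simp [br4, br3]
lemma br4_zero₂ (a c d : A) : br4 a 0 c d = 0 := by simp [br4, br3]
lemma br4_zero₃ (a b d : A) : br4 a b 0 d = 0 := by simp [br4, br3]
lemma br4_zero₄ (a b c : A) : br4 a b c 0 = 0 := by simp [br4]

lemma br4_add₁ (x y b c d : A) : br4 (x+y) b c d = br4 x b c d + br4 y b c d := by
  simp only [br4, br3, br]; noncomm_ring
lemma br4_add₂ (a x y c d : A) : br4 a (x+y) c d = br4 a x c d + br4 a y c d := by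
  simp only [br4, br3, br]; noncomm_ring
lemma br4_add₃ (a b x y d : A) : br4 a b (x+y) d = br4 a b x d + br4 a b y d := by
  simp only [br4, br3, br]; noncomm_ring
lemma br4_add₄ (a b c x y : A) : br4 a b c (x+y) = br4 a b c x + br4 a b c y := by
  simp only [br4, br3, br]; noncomm_ring

end SplitIdentities

section Smul

variable {K : Type*} [CommRing K] {A : Type*} [Ring A] [Algebra K A]

lemma tsi_smul (I : TwoSidedIdeal A) (k : K) {x : A} (hx : x ∈ I) : k • x ∈ I := by
  rw [Algebra.smul_def]; exact I.mul_mem_left _ _ hx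

lemma br_smul_left (k : K) (x y : A) : br (k • x) y = k • br x y := by
  simp [br, smul_sub, smul_mul_assoc, mul_smul_comm]

lemma br_smul_right (k : K) (x y : A) : br x (k • y) = k • br x y := by
  simp [br, smul_sub, smul_mul_assoc, mul_smul_comm]

lemma br4_smul₁ (k : K) (x b c d : A) : br4 (k • x) b c d = k • br4 x b c d := by
  rw [br4, br3, br_smul_left, br_smul_left, br_smul_left]; rfl
lemma br4_smul₂ (k : K) (a x c d : A) : br4 a (k • x) c d = k • br4 a x c d := by
  rw [br4, br3, br_smul_right, br_smul_left, br_smul_left]; rfl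
lemma br4_smul₃ (k : K) (a b x d : A) : br4 a b (k • x) d = k • br4 a b x d := by
  rw [br4, br3, br_smul_right, br_smul_left]; rfl
lemma br4_smul₄ (k : K) (a b c x : A) : br4 a b c (k • x) = k • br4 a b c x := by
  rw [br4, br_smul_right]; rfl

end Smul


section Inf

variable {K : Type*} [CommRing K] {Y : Type*}

/-- Monomial attached to a word. -/
def mono (l : List Y) : FreeAlgebra K Y := (l.map (FreeAlgebra.ι K)).prod

/-- The generating set in the theorem. -/
def genset : Set (FreeAlgebra K Y) :=
  ({x | ∃ y1 y2 y3 y4 : Y,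
      x = br4 (FreeAlgebra.ι K y1) (FreeAlgebra.ι K y2)
            (FreeAlgebra.ι K y3) (FreeAlgebra.ι K y4)} ∪
   {x | ∃ y1 y2 y3 y4 y5 y6 : Y,
      x = (br (FreeAlgebra.ι K y1) (FreeAlgebra.ι K y2) *
             br (FreeAlgebra.ι K y3) (FreeAlgebra.ι K y4)
           + br (FreeAlgebra.ι K y1) (FreeAlgebra.ι K y3) *
             br (FreeAlgebra.ι K y2) (FreeAlgebra.ι K y4)) *
          br (FreeAlgebra.ι K y5) (FreeAlgebra.ι K y6)} ∪
   {x | ∃ y1 y2 y3 y4 y5 : Y,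
      x = br (FreeAlgebra.ι K y1) (FreeAlgebra.ι K y2) *
          br3 (FreeAlgebra.ι K y3) (FreeAlgebra.ι K y4) (FreeAlgebra.ι K y5)})

/-- The span of the generating set. -/
def Jideal : TwoSidedIdeal (FreeAlgebra K Y) := TwoSidedIdeal.span genset

lemma mono_nil : (mono [] : FreeAlgebra K Y) = 1 := rfl

lemma mono_cons (y : Y) (l : List Y) :
    (mono (y :: l) : FreeAlgebra K Y) = FreeAlgebra.ι K y * mono l := by
  simp [mono]

lemma mono_single (y : Y) : (mono [y] : FreeAlgebra K Y) = FreeAlgebra.ι K y := by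
  simp [mono]

lemma mono_append (l1 l2 : List Y) :
    (mono (l1 ++ l2) : FreeAlgebra K Y) = mono l1 * mono l2 := by
  simp [mono]

lemma gen1_mem (y1 y2 y3 y4 : Y) :
    br4 (FreeAlgebra.ι K y1) (FreeAlgebra.ι K y2) (FreeAlgebra.ι K y3) (FreeAlgebra.ι K y4)
      ∈ (Jideal : TwoSidedIdeal (FreeAlgebra K Y)) :=
  TwoSidedIdeal.subset_span (Set.mem_union_left _ (Set.mem_union_left _ ⟨y1, y2, y3, y4, rfl⟩))

lemma gen2_mem (y1 y2 y3 y4 y5 y6 : Y) :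
    (br (FreeAlgebra.ι K y1) (FreeAlgebra.ι K y2) *
       br (FreeAlgebra.ι K y3) (FreeAlgebra.ι K y4)
     + br (FreeAlgebra.ι K y1) (FreeAlgebra.ι K y3) *
       br (FreeAlgebra.ι K y2) (FreeAlgebra.ι K y4)) *
      br (FreeAlgebra.ι K y5) (FreeAlgebra.ι K y6)
      ∈ (Jideal : TwoSidedIdeal (FreeAlgebra K Y)) :=
  TwoSidedIdeal.subset_span
    (Set.mem_union_left _ (Set.mem_union_right _ ⟨y1, y2, y3, y4, y5, y6, rfl⟩))

lemma gen3_mem (y1 y2 y3 y4 y5 : Y) :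
    br (FreeAlgebra.ι K y1) (FreeAlgebra.ι K y2) *
      br3 (FreeAlgebra.ι K y3) (FreeAlgebra.ι K y4) (FreeAlgebra.ι K y5)
      ∈ (Jideal : TwoSidedIdeal (FreeAlgebra K Y)) :=
  TwoSidedIdeal.subset_span (Set.mem_union_right _ ⟨y1, y2, y3, y4, y5, rfl⟩)

lemma mem_monoSpan (x : FreeAlgebra K Y) :
    x ∈ Submodule.span K {z : FreeAlgebra K Y | ∃ l : List Y, z = mono l} := by
  have hx : x ∈ Subalgebra.toSubmodule
      (Algebra.adjoin K (Set.range (FreeAlgebra.ι K : Y → FreeAlgebra K Y))) := by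
    rw [FreeAlgebra.adjoin_range_ι]; trivial
  rw [Algebra.adjoin_eq_span] at hx
  refine Submodule.span_mono ?_ hx
  intro z hz
  induction hz using Submonoid.closure_induction with
  | mem w hw => obtain ⟨y, rfl⟩ := hw; exact ⟨[y], (mono_single y).symm⟩
  | one => exact ⟨[], rfl⟩
  | mul u v hu hv ihu ihv =>
      obtain ⟨lu, rfl⟩ := ihu
      obtain ⟨lv, rfl⟩ := ihv
      exact ⟨lu ++ lv, (mono_append lu lv).symm⟩

lemma reduce {C : FreeAlgebra K Y → Prop} (h0 : C 0)
    (hadd : ∀ x y, C x → C y → C (x + y))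
    (hsmul : ∀ (k : K) (x), C x → C (k • x))
    (hmono : ∀ l : List Y, C (mono l)) : ∀ x, C x := by
  intro x
  have hx := mem_monoSpan x
  induction hx using Submodule.span_induction with
  | mem z hz => obtain ⟨l, rfl⟩ := hz; exact hmono l
  | zero => exact h0
  | add x y _ _ ihx ihy => exact hadd x y ihx ihy
  | smul k x _ ihx => exact hsmul k x ihx

end Inf


section Master

variable (K : Type*) [CommRing K] (Y : Type*)

local notation "JJ" => (Jideal : TwoSidedIdeal (FreeAlgebra K Y))

def S1 (n : ℕ) : Prop := ∀ l1 l2 l3 l4 : List Y,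
  l1.length + l2.length + l3.length + l4.length ≤ n →
  br4 (mono (K := K) l1) (mono l2) (mono l3) (mono l4) ∈ JJ

def S2 (n : ℕ) : Prop := ∀ l1 l2 l3 l4 l5 l6 : List Y,
  l1.length + l2.length + l3.length + l4.length + l5.length + l6.length ≤ n →
  (br (mono (K := K) l1) (mono l2) * br (mono l3) (mono l4)
    + br (mono l1) (mono l3) * br (mono l2) (mono l4)) * br (mono l5) (mono l6) ∈ JJ

def S3 (n : ℕ) : Prop := ∀ l1 l2 l3 l4 l5 : List Y,
  l1.length + l2.length + l3.length + l4.length + l5.length ≤ n →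
  br (mono (K := K) l1) (mono l2) * br3 (mono l3) (mono l4) (mono l5) ∈ JJ

def S4 (n : ℕ) : Prop := ∀ l1 l2 l3 l4 l5 : List Y,
  l1.length + l2.length + l3.length + l4.length + l5.length ≤ n →
  br3 (mono (K := K) l1) (mono l2) (mono l3) * br (mono l4) (mono l5) ∈ JJ

def S6 (n : ℕ) : Prop := ∀ l1 l2 l3 l4 l5 l6 : List Y,
  l1.length + l2.length + l3.length + l4.length + l5.length + l6.length ≤ n →
  br3 (mono (K := K) l1) (mono l2) (mono l3) * br3 (mono l4) (mono l5) (mono l6) ∈ JJ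

variable {K Y}

lemma stepP6 (n : ℕ)
    (ih : ∀ k, k < n → S2 K Y k ∧ S6 K Y k ∧ S3 K Y k ∧ S4 K Y k ∧ S1 K Y k) :
    S6 K Y n := by
  intro l1 l2 l3 l4 l5 l6 hlen
  rcases l1 with _ | ⟨y1, t1⟩
  · simp only [mono_nil, br3_one₁, zero_mul]; exact Jideal.zero_mem
  rcases l3 with _ | ⟨y3, t3⟩
  · simp only [mono_nil, br3_one₃, zero_mul]; exact Jideal.zero_mem
  simp only [List.length_cons] at hlen
  rw [id_IC]
  have e1 : br (mono (y1::t1)) (mono l2) * br3 (mono l4) (mono l5) (mono l6) ∈ JJ :=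
    (ih (n-1) (by omega)).2.2.1 (y1::t1) l2 l4 l5 l6
      (by simp only [List.length_cons]; omega)
  have e2 : br4 (mono l4) (mono l5) (mono l6) (mono (y3::t3)) ∈ JJ :=
    (ih (n-1) (by omega)).2.2.2.2 l4 l5 l6 (y3::t3)
      (by simp only [List.length_cons]; omega)
  exact Jideal.sub_mem (Jideal.sub_mem (Jideal.mul_mem_right _ _ e1) (Jideal.mul_mem_left _ _ e2))
    (Jideal.mul_mem_left _ _ e1)

lemma stepP4 (n : ℕ)
    (ih : ∀ k, k < n → S2 K Y k ∧ S6 K Y k ∧ S3 K Y k ∧ S4 K Y k ∧ S1 K Y k)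
    (h3 : S3 K Y n) : S4 K Y n := by
  intro l1 l2 l3 l4 l5 hlen
  rcases l4 with _ | ⟨y4, t4⟩
  · simp only [mono_nil, br_one_left, mul_zero]; exact Jideal.zero_mem
  rcases l5 with _ | ⟨y5, t5⟩
  · simp only [mono_nil, br_one_right, mul_zero]; exact Jideal.zero_mem
  simp only [List.length_cons] at hlen
  rw [id_IA]
  have e0 := h3 (y4::t4) (y5::t5) l1 l2 l3 (by simp only [List.length_cons]; omega)
  have e1 := (ih (n-1) (by omega)).2.2.2.2 l1 l2 l3 (y4::t4)
    (by simp only [List.length_cons]; omega)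
  have e2 := (ih (n-1) (by omega)).2.2.2.2 l1 l2 l3 (y5::t5)
    (by simp only [List.length_cons]; omega)
  exact Jideal.sub_mem (Jideal.add_mem e0 (Jideal.sub_mem (Jideal.mul_mem_right _ _ e1)
    (Jideal.mul_mem_left _ _ e1)))
    (Jideal.sub_mem (Jideal.mul_mem_right _ _ e2) (Jideal.mul_mem_left _ _ e2))

lemma stepP1 (n : ℕ)
    (ih : ∀ k, k < n → S2 K Y k ∧ S6 K Y k ∧ S3 K Y k ∧ S4 K Y k ∧ S1 K Y k)
    (h3 : S3 K Y n) (h4 : S4 K Y n) : S1 K Y n := by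
  intro l1 l2 l3 l4 hlen
  rcases l1 with _ | ⟨y1, t1⟩
  · simp only [mono_nil, br4_one₁]; exact Jideal.zero_mem
  rcases l2 with _ | ⟨y2, t2⟩
  · simp only [mono_nil, br4_one₂]; exact Jideal.zero_mem
  rcases l3 with _ | ⟨y3, t3⟩
  · simp only [mono_nil, br4_one₃]; exact Jideal.zero_mem
  rcases l4 with _ | ⟨y4, t4⟩
  · simp only [mono_nil, br4_one₄]; exact Jideal.zero_mem
  simp only [List.length_cons] at hlen
  rcases eq_or_ne t4 ([] : List Y) with rfl | h4ne
  case inr =>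
    -- slot 4 long
    have hpos : 0 < t4.length := List.length_pos_iff.mpr h4ne
    rw [mono_cons y4 t4, ← mono_single y4, id_P1s4]
    refine Jideal.add_mem (Jideal.mul_mem_left _ _ ?_) (Jideal.mul_mem_right _ _ ?_)
    · exact (ih (n-1) (by omega)).2.2.2.2 (y1::t1) (y2::t2) (y3::t3) t4
        (by simp only [List.length_cons, List.length_nil]; omega)
    · exact (ih (n-1) (by omega)).2.2.2.2 (y1::t1) (y2::t2) (y3::t3) [y4]
        (by simp only [List.length_cons, List.length_nil]; omega)
  rcases eq_or_ne t3 ([] : List Y) with rfl | h3ne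
  case inr =>
    -- slot 3 long
    have hpos : 0 < t3.length := List.length_pos_iff.mpr h3ne
    rw [mono_cons y3 t3, ← mono_single y3, id_P1s3]
    refine Jideal.add_mem (Jideal.add_mem (Jideal.add_mem (Jideal.mul_mem_left _ _ ?_) ?_) ?_)
      (Jideal.mul_mem_right _ _ ?_)
    · exact (ih (n-1) (by omega)).2.2.2.2 (y1::t1) (y2::t2) t3 [y4]
        (by simp only [List.length_cons, List.length_nil]; omega)
    · exact h3 [y3] [y4] (y1::t1) (y2::t2) t3
        (by simp only [List.length_cons, List.length_nil]; omega)
    · exact h4 (y1::t1) (y2::t2) [y3] t3 [y4]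
        (by simp only [List.length_cons, List.length_nil]; omega)
    · exact (ih (n-1) (by omega)).2.2.2.2 (y1::t1) (y2::t2) [y3] [y4]
        (by simp only [List.length_cons, List.length_nil]; omega)
  rcases eq_or_ne t2 ([] : List Y) with rfl | h2ne
  case inr =>
    -- slot 2 long
    have hpos : 0 < t2.length := List.length_pos_iff.mpr h2ne
    rw [mono_cons y2 t2, ← mono_single y2, id_P1s2]
    refine Jideal.add_mem (Jideal.add_mem (Jideal.add_mem (Jideal.add_mem (Jideal.add_mem (Jideal.add_mem
      (Jideal.add_mem (Jideal.mul_mem_left _ _ ?_) ?_) ?_) ?_) ?_) ?_) ?_)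
      (Jideal.mul_mem_right _ _ ?_)
    · exact (ih (n-1) (by omega)).2.2.2.2 (y1::t1) t2 [y3] [y4]
        (by simp only [List.length_cons, List.length_nil]; omega)
    · exact h3 [y2] [y4] (y1::t1) t2 [y3]
        (by simp only [List.length_cons, List.length_nil]; omega)
    · exact h3 [y2] [y3] (y1::t1) t2 [y4]
        (by simp only [List.length_cons, List.length_nil]; omega)
    · exact h4 [y2] [y3] [y4] (y1::t1) t2
        (by simp only [List.length_cons, List.length_nil]; omega)
    · exact h3 (y1::t1) [y2] t2 [y3] [y4]
        (by simp only [List.length_cons, List.length_nil]; omega)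
    · exact h4 (y1::t1) [y2] [y4] t2 [y3]
        (by simp only [List.length_cons, List.length_nil]; omega)
    · exact h4 (y1::t1) [y2] [y3] t2 [y4]
        (by simp only [List.length_cons, List.length_nil]; omega)
    · exact (ih (n-1) (by omega)).2.2.2.2 (y1::t1) [y2] [y3] [y4]
        (by simp only [List.length_cons, List.length_nil]; omega)
  rcases eq_or_ne t1 ([] : List Y) with rfl | h1ne
  case inr =>
    -- slot 1 long
    have hpos : 0 < t1.length := List.length_pos_iff.mpr h1ne
    rw [id_swap12]
    refine Jideal.neg_mem ?_
    rw [mono_cons y1 t1, ← mono_single y1, id_P1s2]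
    refine Jideal.add_mem (Jideal.add_mem (Jideal.add_mem (Jideal.add_mem (Jideal.add_mem (Jideal.add_mem
      (Jideal.add_mem (Jideal.mul_mem_left _ _ ?_) ?_) ?_) ?_) ?_) ?_) ?_)
      (Jideal.mul_mem_right _ _ ?_)
    · exact (ih (n-1) (by omega)).2.2.2.2 [y2] t1 [y3] [y4]
        (by simp only [List.length_cons, List.length_nil]; omega)
    · exact h3 [y1] [y4] [y2] t1 [y3]
        (by simp only [List.length_cons, List.length_nil]; omega)
    · exact h3 [y1] [y3] [y2] t1 [y4]
        (by simp only [List.length_cons, List.length_nil]; omega)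
    · exact h4 [y1] [y3] [y4] [y2] t1
        (by simp only [List.length_cons, List.length_nil]; omega)
    · exact h3 [y2] [y1] t1 [y3] [y4]
        (by simp only [List.length_cons, List.length_nil]; omega)
    · exact h4 [y2] [y1] [y4] t1 [y3]
        (by simp only [List.length_cons, List.length_nil]; omega)
    · exact h4 [y2] [y1] [y3] t1 [y4]
        (by simp only [List.length_cons, List.length_nil]; omega)
    · exact (ih (n-1) (by omega)).2.2.2.2 [y2] [y1] [y3] [y4]
        (by simp only [List.length_cons, List.length_nil]; omega)
  -- base case: all singletons
  simp only [mono_single]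
  exact gen1_mem y1 y2 y3 y4


lemma stepP2 (n : ℕ)
    (ih : ∀ k, k < n → S2 K Y k ∧ S6 K Y k ∧ S3 K Y k ∧ S4 K Y k ∧ S1 K Y k) :
    S2 K Y n := by
  intro l1 l2 l3 l4 l5 l6 hlen
  rcases l1 with _ | ⟨y1, t1⟩
  · simp only [mono_nil, br_one_left, br_one_right, zero_mul, mul_zero, add_zero, zero_add]
    exact Jideal.zero_mem
  rcases l2 with _ | ⟨y2, t2⟩
  · simp only [mono_nil, br_one_left, br_one_right, zero_mul, mul_zero, add_zero, zero_add]
    exact Jideal.zero_mem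
  rcases l3 with _ | ⟨y3, t3⟩
  · simp only [mono_nil, br_one_left, br_one_right, zero_mul, mul_zero, add_zero, zero_add]
    exact Jideal.zero_mem
  rcases l4 with _ | ⟨y4, t4⟩
  · simp only [mono_nil, br_one_left, br_one_right, zero_mul, mul_zero, add_zero, zero_add]
    exact Jideal.zero_mem
  rcases l5 with _ | ⟨y5, t5⟩
  · simp only [mono_nil, br_one_left, br_one_right, zero_mul, mul_zero, add_zero, zero_add]
    exact Jideal.zero_mem
  rcases l6 with _ | ⟨y6, t6⟩
  · simp only [mono_nil, br_one_left, br_one_right, zero_mul, mul_zero, add_zero, zero_add]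
    exact Jideal.zero_mem
  simp only [List.length_cons] at hlen
  rcases eq_or_ne t1 ([] : List Y) with rfl | h1ne
  case inr =>
    have hpos : 0 < t1.length := List.length_pos_iff.mpr h1ne
    rw [mono_cons y1 t1, ← mono_single y1, id_P2sa]
    refine Jideal.add_mem (Jideal.add_mem (Jideal.add_mem (Jideal.mul_mem_left _ _ ?_)
      (Jideal.mul_mem_left _ _ ?_)) (Jideal.mul_mem_right _ _ ?_))
      (Jideal.mul_mem_right _ _ ?_)
    · exact (ih (n-1) (by omega)).1 t1 (y2::t2) (y3::t3) (y4::t4) (y5::t5) (y6::t6)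
        (by simp only [List.length_cons, List.length_nil]; omega)
    · exact (ih (n-1) (by omega)).1 [y1] (y2::t2) (y3::t3) (y4::t4) (y5::t5) (y6::t6)
        (by simp only [List.length_cons, List.length_nil]; omega)
    · exact (ih (n-1) (by omega)).2.2.2.1 [y1] (y2::t2) t1 (y3::t3) (y4::t4)
        (by simp only [List.length_cons, List.length_nil]; omega)
    · exact (ih (n-1) (by omega)).2.2.2.1 [y1] (y3::t3) t1 (y2::t2) (y4::t4)
        (by simp only [List.length_cons, List.length_nil]; omega)
  rcases eq_or_ne t2 ([] : List Y) with rfl | h2ne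
  case inr =>
    have hpos : 0 < t2.length := List.length_pos_iff.mpr h2ne
    rw [mono_cons y2 t2, ← mono_single y2, id_P2sb]
    refine Jideal.add_mem (Jideal.add_mem (Jideal.add_mem (Jideal.sub_mem (Jideal.add_mem
      (Jideal.add_mem (Jideal.add_mem (Jideal.add_mem (Jideal.mul_mem_left _ _ ?_)
      (Jideal.mul_mem_right _ _ ?_)) (Jideal.mul_mem_left _ _ ?_))
      (Jideal.mul_mem_right _ _ ?_)) (Jideal.mul_mem_left _ _ ?_))
      (Jideal.mul_mem_left _ _ ?_)) (Jideal.mul_mem_left _ _ ?_))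
      (Jideal.mul_mem_left _ _ ?_)) (Jideal.mul_mem_right _ _ ?_)
    · exact (ih (n-1) (by omega)).1 [y1] t2 (y3::t3) (y4::t4) (y5::t5) (y6::t6)
        (by simp only [List.length_cons, List.length_nil]; omega)
    · exact (ih (n-1) (by omega)).2.2.2.1 [y1] (y3::t3) [y2] t2 (y4::t4)
        (by simp only [List.length_cons, List.length_nil]; omega)
    · exact (ih (n-1) (by omega)).1 [y1] [y2] (y3::t3) (y4::t4) (y5::t5) (y6::t6)
        (by simp only [List.length_cons, List.length_nil]; omega)
    · exact (ih (n-1) (by omega)).2.2.2.1 [y1] [y2] t2 (y3::t3) (y4::t4)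
        (by simp only [List.length_cons, List.length_nil]; omega)
    · exact (ih (n-1) (by omega)).2.2.1 [y2] (y4::t4) t2 (y5::t5) (y6::t6)
        (by simp only [List.length_cons, List.length_nil]; omega)
    · exact (ih (n-1) (by omega)).2.2.1 [y2] (y4::t4) t2 (y6::t6) (y5::t5)
        (by simp only [List.length_cons, List.length_nil]; omega)
    · exact (ih (n-1) (by omega)).2.2.1 [y2] (y4::t4) (y5::t5) (y6::t6) t2
        (by simp only [List.length_cons, List.length_nil]; omega)
    · exact (ih (n-1) (by omega)).2.2.2.1 [y2] (y4::t4) t2 (y5::t5) (y6::t6)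
        (by simp only [List.length_cons, List.length_nil]; omega)
    · exact (ih (n-1) (by omega)).2.2.2.1 [y1] (y3::t3) t2 [y2] (y4::t4)
        (by simp only [List.length_cons, List.length_nil]; omega)
  rcases eq_or_ne t3 ([] : List Y) with rfl | h3ne
  case inr =>
    have hpos : 0 < t3.length := List.length_pos_iff.mpr h3ne
    rw [add_comm (br (mono [y1]) (mono [y2]) * br (mono (y3 :: t3)) (mono (y4 :: t4)))]
    rw [mono_cons y3 t3, ← mono_single y3, id_P2sb]
    refine Jideal.add_mem (Jideal.add_mem (Jideal.add_mem (Jideal.sub_mem (Jideal.add_mem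
      (Jideal.add_mem (Jideal.add_mem (Jideal.add_mem (Jideal.mul_mem_left _ _ ?_)
      (Jideal.mul_mem_right _ _ ?_)) (Jideal.mul_mem_left _ _ ?_))
      (Jideal.mul_mem_right _ _ ?_)) (Jideal.mul_mem_left _ _ ?_))
      (Jideal.mul_mem_left _ _ ?_)) (Jideal.mul_mem_left _ _ ?_))
      (Jideal.mul_mem_left _ _ ?_)) (Jideal.mul_mem_right _ _ ?_)
    · exact (ih (n-1) (by omega)).1 [y1] t3 [y2] (y4::t4) (y5::t5) (y6::t6)
        (by simp only [List.length_cons, List.length_nil]; omega)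
    · exact (ih (n-1) (by omega)).2.2.2.1 [y1] [y2] [y3] t3 (y4::t4)
        (by simp only [List.length_cons, List.length_nil]; omega)
    · exact (ih (n-1) (by omega)).1 [y1] [y3] [y2] (y4::t4) (y5::t5) (y6::t6)
        (by simp only [List.length_cons, List.length_nil]; omega)
    · exact (ih (n-1) (by omega)).2.2.2.1 [y1] [y3] t3 [y2] (y4::t4)
        (by simp only [List.length_cons, List.length_nil]; omega)
    · exact (ih (n-1) (by omega)).2.2.1 [y3] (y4::t4) t3 (y5::t5) (y6::t6)
        (by simp only [List.length_cons, List.length_nil]; omega)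
    · exact (ih (n-1) (by omega)).2.2.1 [y3] (y4::t4) t3 (y6::t6) (y5::t5)
        (by simp only [List.length_cons, List.length_nil]; omega)
    · exact (ih (n-1) (by omega)).2.2.1 [y3] (y4::t4) (y5::t5) (y6::t6) t3
        (by simp only [List.length_cons, List.length_nil]; omega)
    · exact (ih (n-1) (by omega)).2.2.2.1 [y3] (y4::t4) t3 (y5::t5) (y6::t6)
        (by simp only [List.length_cons, List.length_nil]; omega)
    · exact (ih (n-1) (by omega)).2.2.2.1 [y1] [y2] t3 [y3] (y4::t4)
        (by simp only [List.length_cons, List.length_nil]; omega)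
  rcases eq_or_ne t4 ([] : List Y) with rfl | h4ne
  case inr =>
    have hpos : 0 < t4.length := List.length_pos_iff.mpr h4ne
    rw [mono_cons y4 t4, ← mono_single y4, id_P2sd]
    refine Jideal.sub_mem (Jideal.sub_mem (Jideal.add_mem (Jideal.add_mem (Jideal.add_mem
      (Jideal.add_mem (Jideal.add_mem (Jideal.mul_mem_left _ _ ?_)
      (Jideal.mul_mem_right _ _ ?_)) (Jideal.mul_mem_right _ _ ?_))
      (Jideal.mul_mem_right _ _ ?_)) (Jideal.mul_mem_left _ _ ?_))
      (Jideal.mul_mem_left _ _ ?_)) (Jideal.mul_mem_left _ _ ?_))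
      (Jideal.mul_mem_left _ _ ?_)
    · exact (ih (n-1) (by omega)).1 [y1] [y2] [y3] t4 (y5::t5) (y6::t6)
        (by simp only [List.length_cons, List.length_nil]; omega)
    · exact (ih (n-1) (by omega)).2.2.2.1 [y1] [y2] [y4] [y3] t4
        (by simp only [List.length_cons, List.length_nil]; omega)
    · exact (ih (n-1) (by omega)).2.2.2.1 [y1] [y3] [y4] [y2] t4
        (by simp only [List.length_cons, List.length_nil]; omega)
    · exact (ih (n-1) (by omega)).1 [y1] [y2] [y3] [y4] (y5::t5) (y6::t6)
        (by simp only [List.length_cons, List.length_nil]; omega)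
    · exact (ih (n-1) (by omega)).2.2.1 [y3] [y4] t4 (y5::t5) (y6::t6)
        (by simp only [List.length_cons, List.length_nil]; omega)
    · exact (ih (n-1) (by omega)).2.2.1 [y2] [y4] t4 (y5::t5) (y6::t6)
        (by simp only [List.length_cons, List.length_nil]; omega)
    · exact (ih (n-1) (by omega)).2.2.1 [y3] [y4] t4 (y6::t6) (y5::t5)
        (by simp only [List.length_cons, List.length_nil]; omega)
    · exact (ih (n-1) (by omega)).2.2.1 [y2] [y4] t4 (y6::t6) (y5::t5)
        (by simp only [List.length_cons, List.length_nil]; omega)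
  rcases eq_or_ne t5 ([] : List Y) with rfl | h5ne
  case inr =>
    have hpos : 0 < t5.length := List.length_pos_iff.mpr h5ne
    rw [mono_cons y5 t5, ← mono_single y5, id_P2se]
    refine Jideal.add_mem (Jideal.add_mem (Jideal.add_mem (Jideal.add_mem (Jideal.add_mem
      (Jideal.mul_mem_left _ _ ?_) (Jideal.mul_mem_left _ _ ?_))
      (Jideal.mul_mem_right _ _ ?_)) (Jideal.mul_mem_left _ _ ?_))
      (Jideal.mul_mem_right _ _ ?_)) (Jideal.mul_mem_right _ _ ?_)
    · exact (ih (n-1) (by omega)).1 [y1] [y2] [y3] [y4] t5 (y6::t6)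
        (by simp only [List.length_cons, List.length_nil]; omega)
    · exact (ih (n-1) (by omega)).2.2.2.1 [y3] [y4] [y5] t5 (y6::t6)
        (by simp only [List.length_cons, List.length_nil]; omega)
    · exact (ih (n-1) (by omega)).2.2.2.1 [y1] [y2] [y5] [y3] [y4]
        (by simp only [List.length_cons, List.length_nil]; omega)
    · exact (ih (n-1) (by omega)).2.2.2.1 [y2] [y4] [y5] t5 (y6::t6)
        (by simp only [List.length_cons, List.length_nil]; omega)
    · exact (ih (n-1) (by omega)).2.2.2.1 [y1] [y3] [y5] [y2] [y4]
        (by simp only [List.length_cons, List.length_nil]; omega)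
    · exact (ih (n-1) (by omega)).1 [y1] [y2] [y3] [y4] [y5] (y6::t6)
        (by simp only [List.length_cons, List.length_nil]; omega)
  rcases eq_or_ne t6 ([] : List Y) with rfl | h6ne
  case inr =>
    have hpos : 0 < t6.length := List.length_pos_iff.mpr h6ne
    rw [br_antisym (mono [y5]) (mono (y6 :: t6)), mul_neg]
    refine Jideal.neg_mem ?_
    rw [mono_cons y6 t6, ← mono_single y6, id_P2se]
    refine Jideal.add_mem (Jideal.add_mem (Jideal.add_mem (Jideal.add_mem (Jideal.add_mem
      (Jideal.mul_mem_left _ _ ?_) (Jideal.mul_mem_left _ _ ?_))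
      (Jideal.mul_mem_right _ _ ?_)) (Jideal.mul_mem_left _ _ ?_))
      (Jideal.mul_mem_right _ _ ?_)) (Jideal.mul_mem_right _ _ ?_)
    · exact (ih (n-1) (by omega)).1 [y1] [y2] [y3] [y4] t6 [y5]
        (by simp only [List.length_cons, List.length_nil]; omega)
    · exact (ih (n-1) (by omega)).2.2.2.1 [y3] [y4] [y6] t6 [y5]
        (by simp only [List.length_cons, List.length_nil]; omega)
    · exact (ih (n-1) (by omega)).2.2.2.1 [y1] [y2] [y6] [y3] [y4]
        (by simp only [List.length_cons, List.length_nil]; omega)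
    · exact (ih (n-1) (by omega)).2.2.2.1 [y2] [y4] [y6] t6 [y5]
        (by simp only [List.length_cons, List.length_nil]; omega)
    · exact (ih (n-1) (by omega)).2.2.2.1 [y1] [y3] [y6] [y2] [y4]
        (by simp only [List.length_cons, List.length_nil]; omega)
    · exact (ih (n-1) (by omega)).1 [y1] [y2] [y3] [y4] [y6] [y5]
        (by simp only [List.length_cons, List.length_nil]; omega)
  simp only [mono_single]
  exact gen2_mem y1 y2 y3 y4 y5 y6

lemma stepP3 (n : ℕ)
    (ih : ∀ k, k < n → S2 K Y k ∧ S6 K Y k ∧ S3 K Y k ∧ S4 K Y k ∧ S1 K Y k)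
    (h2 : S2 K Y n) (h6 : S6 K Y n) : S3 K Y n := by
  intro l1 l2 l3 l4 l5 hlen
  rcases l1 with _ | ⟨y1, t1⟩
  · simp only [mono_nil, br_one_left, zero_mul]; exact Jideal.zero_mem
  rcases l2 with _ | ⟨y2, t2⟩
  · simp only [mono_nil, br_one_right, zero_mul]; exact Jideal.zero_mem
  rcases l3 with _ | ⟨y3, t3⟩
  · simp only [mono_nil, br3_one₁, mul_zero]; exact Jideal.zero_mem
  rcases l4 with _ | ⟨y4, t4⟩
  · simp only [mono_nil, br3_one₂, mul_zero]; exact Jideal.zero_mem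
  rcases l5 with _ | ⟨y5, t5⟩
  · simp only [mono_nil, br3_one₃, mul_zero]; exact Jideal.zero_mem
  simp only [List.length_cons] at hlen
  rcases eq_or_ne t1 ([] : List Y) with rfl | h1ne
  case inr =>
    have hpos : 0 < t1.length := List.length_pos_iff.mpr h1ne
    rw [mono_cons y1 t1, ← mono_single y1, id_P3s1]
    refine Jideal.sub_mem (Jideal.add_mem (Jideal.mul_mem_left _ _ ?_)
      (Jideal.mul_mem_right _ _ ?_)) (Jideal.mul_mem_left _ _ ?_)
    · exact (ih (n-1) (by omega)).2.2.1 t1 (y2::t2) (y3::t3) (y4::t4) (y5::t5)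
        (by simp only [List.length_cons, List.length_nil]; omega)
    · exact (ih (n-1) (by omega)).2.2.1 [y1] (y2::t2) (y3::t3) (y4::t4) (y5::t5)
        (by simp only [List.length_cons, List.length_nil]; omega)
    · exact (ih (n-1) (by omega)).2.2.2.2 (y3::t3) (y4::t4) (y5::t5) t1
        (by simp only [List.length_cons, List.length_nil]; omega)
  rcases eq_or_ne t2 ([] : List Y) with rfl | h2ne
  case inr =>
    have hpos : 0 < t2.length := List.length_pos_iff.mpr h2ne
    rw [br_antisym (mono [y1]) (mono (y2 :: t2)), neg_mul]
    refine Jideal.neg_mem ?_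
    rw [mono_cons y2 t2, ← mono_single y2, id_P3s1]
    refine Jideal.sub_mem (Jideal.add_mem (Jideal.mul_mem_left _ _ ?_)
      (Jideal.mul_mem_right _ _ ?_)) (Jideal.mul_mem_left _ _ ?_)
    · exact (ih (n-1) (by omega)).2.2.1 t2 [y1] (y3::t3) (y4::t4) (y5::t5)
        (by simp only [List.length_cons, List.length_nil]; omega)
    · exact (ih (n-1) (by omega)).2.2.1 [y2] [y1] (y3::t3) (y4::t4) (y5::t5)
        (by simp only [List.length_cons, List.length_nil]; omega)
    · exact (ih (n-1) (by omega)).2.2.2.2 (y3::t3) (y4::t4) (y5::t5) t2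
        (by simp only [List.length_cons, List.length_nil]; omega)
  rcases eq_or_ne t3 ([] : List Y) with rfl | h3ne
  case inr =>
    have hpos : 0 < t3.length := List.length_pos_iff.mpr h3ne
    rw [mono_cons y3 t3, ← mono_single y3, id_P3s3]
    refine Jideal.add_mem (Jideal.add_mem (Jideal.add_mem (Jideal.add_mem (Jideal.sub_mem
      (Jideal.add_mem (Jideal.add_mem (Jideal.mul_mem_left _ _ ?_) ?_)
      (Jideal.mul_mem_right _ _ ?_)) ?_) (Jideal.mul_mem_left _ _ ?_))
      (Jideal.mul_mem_right _ _ ?_)) (Jideal.mul_mem_left _ _ ?_))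
      (Jideal.mul_mem_right _ _ ?_)
    · exact (ih (n-1) (by omega)).2.2.1 [y1] [y2] t3 (y4::t4) (y5::t5)
        (by simp only [List.length_cons, List.length_nil]; omega)
    · exact h6 [y1] [y2] [y3] t3 (y4::t4) (y5::t5)
        (by simp only [List.length_cons, List.length_nil]; omega)
    · exact (ih (n-1) (by omega)).2.2.1 [y1] [y2] [y3] (y4::t4) (y5::t5)
        (by simp only [List.length_cons, List.length_nil]; omega)
    · exact h2 [y3] (y5::t5) (y4::t4) t3 [y1] [y2]
        (by simp only [List.length_cons, List.length_nil]; omega)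
    · exact Jideal.sub_mem
        ((ih (n-1) (by omega)).2.2.2.2 [y1] [y2] t3 (y4::t4)
          (by simp only [List.length_cons, List.length_nil]; omega))
        ((ih (n-1) (by omega)).2.2.2.2 [y1] [y2] (y4::t4) t3
          (by simp only [List.length_cons, List.length_nil]; omega))
    · exact Jideal.sub_mem
        ((ih (n-1) (by omega)).2.2.2.2 [y1] [y2] [y3] (y5::t5)
          (by simp only [List.length_cons, List.length_nil]; omega))
        ((ih (n-1) (by omega)).2.2.2.2 [y1] [y2] (y5::t5) [y3]
          (by simp only [List.length_cons, List.length_nil]; omega))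
    · exact Jideal.sub_mem
        ((ih (n-1) (by omega)).2.2.2.2 [y1] [y2] t3 (y5::t5)
          (by simp only [List.length_cons, List.length_nil]; omega))
        ((ih (n-1) (by omega)).2.2.2.2 [y1] [y2] (y5::t5) t3
          (by simp only [List.length_cons, List.length_nil]; omega))
    · exact Jideal.sub_mem
        ((ih (n-1) (by omega)).2.2.2.2 [y1] [y2] [y3] (y4::t4)
          (by simp only [List.length_cons, List.length_nil]; omega))
        ((ih (n-1) (by omega)).2.2.2.2 [y1] [y2] (y4::t4) [y3]
          (by simp only [List.length_cons, List.length_nil]; omega))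
  rcases eq_or_ne t4 ([] : List Y) with rfl | h4ne
  case inr =>
    have hpos : 0 < t4.length := List.length_pos_iff.mpr h4ne
    rw [mono_cons y4 t4, ← mono_single y4, id_P3s4]
    refine Jideal.add_mem (Jideal.add_mem (Jideal.add_mem (Jideal.add_mem (Jideal.add_mem
      (Jideal.add_mem (Jideal.add_mem (Jideal.mul_mem_left _ _ ?_) ?_)
      (Jideal.mul_mem_right _ _ ?_)) ?_) (Jideal.mul_mem_left _ _ ?_))
      (Jideal.mul_mem_right _ _ ?_)) (Jideal.mul_mem_left _ _ ?_))
      (Jideal.mul_mem_right _ _ ?_)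
    · exact (ih (n-1) (by omega)).2.2.1 [y1] [y2] [y3] t4 (y5::t5)
        (by simp only [List.length_cons, List.length_nil]; omega)
    · exact h6 [y1] [y2] [y4] [y3] t4 (y5::t5)
        (by simp only [List.length_cons, List.length_nil]; omega)
    · exact (ih (n-1) (by omega)).2.2.1 [y1] [y2] [y3] [y4] (y5::t5)
        (by simp only [List.length_cons, List.length_nil]; omega)
    · exact h2 [y4] (y5::t5) [y3] t4 [y1] [y2]
        (by simp only [List.length_cons, List.length_nil]; omega)
    · exact Jideal.sub_mem
        ((ih (n-1) (by omega)).2.2.2.2 [y1] [y2] [y3] t4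
          (by simp only [List.length_cons, List.length_nil]; omega))
        ((ih (n-1) (by omega)).2.2.2.2 [y1] [y2] t4 [y3]
          (by simp only [List.length_cons, List.length_nil]; omega))
    · exact Jideal.sub_mem
        ((ih (n-1) (by omega)).2.2.2.2 [y1] [y2] [y4] (y5::t5)
          (by simp only [List.length_cons, List.length_nil]; omega))
        ((ih (n-1) (by omega)).2.2.2.2 [y1] [y2] (y5::t5) [y4]
          (by simp only [List.length_cons, List.length_nil]; omega))
    · exact Jideal.sub_mem
        ((ih (n-1) (by omega)).2.2.2.2 [y1] [y2] t4 (y5::t5)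
          (by simp only [List.length_cons, List.length_nil]; omega))
        ((ih (n-1) (by omega)).2.2.2.2 [y1] [y2] (y5::t5) t4
          (by simp only [List.length_cons, List.length_nil]; omega))
    · exact Jideal.sub_mem
        ((ih (n-1) (by omega)).2.2.2.2 [y1] [y2] [y3] [y4]
          (by simp only [List.length_cons, List.length_nil]; omega))
        ((ih (n-1) (by omega)).2.2.2.2 [y1] [y2] [y4] [y3]
          (by simp only [List.length_cons, List.length_nil]; omega))
  rcases eq_or_ne t5 ([] : List Y) with rfl | h5ne
  case inr =>
    have hpos : 0 < t5.length := List.length_pos_iff.mpr h5ne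
    rw [mono_cons y5 t5, ← mono_single y5, id_P3s5]
    refine Jideal.add_mem (Jideal.add_mem (Jideal.mul_mem_left _ _ ?_) ?_)
      (Jideal.mul_mem_right _ _ ?_)
    · exact (ih (n-1) (by omega)).2.2.1 [y1] [y2] [y3] [y4] t5
        (by simp only [List.length_cons, List.length_nil]; omega)
    · exact h6 [y1] [y2] [y5] [y3] [y4] t5
        (by simp only [List.length_cons, List.length_nil]; omega)
    · exact (ih (n-1) (by omega)).2.2.1 [y1] [y2] [y3] [y4] [y5]
        (by simp only [List.length_cons, List.length_nil]; omega)
  simp only [mono_single]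
  exact gen3_mem y1 y2 y3 y4 y5

lemma master : ∀ n : ℕ, S2 K Y n ∧ S6 K Y n ∧ S3 K Y n ∧ S4 K Y n ∧ S1 K Y n := by
  intro n
  induction n using Nat.strong_induction_on with
  | _ n ih =>
    have h2 : S2 K Y n := stepP2 n ih
    have h6 : S6 K Y n := stepP6 n ih
    have h3 : S3 K Y n := stepP3 n ih h2 h6
    have h4 : S4 K Y n := stepP4 n ih h3
    have h1 : S1 K Y n := stepP1 n ih h3 h4
    exact ⟨h2, h6, h3, h4, h1⟩



lemma peel4 (l1 l2 l3 : List Y) :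
    ∀ d, br4 (mono (K := K) l1) (mono l2) (mono l3) d ∈ JJ := by
  refine reduce ?_ ?_ ?_ ?_
  · rw [br4_zero₄]; exact Jideal.zero_mem
  · intro x y hx hy; rw [br4_add₄]; exact Jideal.add_mem hx hy
  · intro k x hx; rw [br4_smul₄]; exact tsi_smul _ k hx
  · intro l; exact (master _).2.2.2.2 l1 l2 l3 l (le_refl _)

lemma peel3 (l1 l2 : List Y) :
    ∀ c d, br4 (mono (K := K) l1) (mono l2) c d ∈ JJ := by
  refine reduce (C := fun c => ∀ d, br4 (mono (K := K) l1) (mono l2) c d ∈ JJ) ?_ ?_ ?_ ?_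
  · intro d; rw [br4_zero₃]; exact Jideal.zero_mem
  · intro x y hx hy d; rw [br4_add₃]; exact Jideal.add_mem (hx d) (hy d)
  · intro k x hx d; rw [br4_smul₃]; exact tsi_smul _ k (hx d)
  · intro l; exact peel4 l1 l2 l

lemma peel2 (l1 : List Y) :
    ∀ b c d, br4 (mono (K := K) l1) b c d ∈ JJ := by
  refine reduce (C := fun b => ∀ c d, br4 (mono (K := K) l1) b c d ∈ JJ) ?_ ?_ ?_ ?_
  · intro c d; rw [br4_zero₂]; exact Jideal.zero_mem
  · intro x y hx hy c d; rw [br4_add₂]; exact Jideal.add_mem (hx c d) (hy c d)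
  · intro k x hx c d; rw [br4_smul₂]; exact tsi_smul _ k (hx c d)
  · intro l; exact peel3 l1 l

lemma br4_mem_J : ∀ a b c d : FreeAlgebra K Y, br4 a b c d ∈ JJ := by
  refine reduce (C := fun a => ∀ b c d, br4 a b c d ∈ JJ) ?_ ?_ ?_ ?_
  · intro b c d; rw [br4_zero₁]; exact Jideal.zero_mem
  · intro x y hx hy b c d; rw [br4_add₁]; exact Jideal.add_mem (hx b c d) (hy b c d)
  · intro k x hx b c d; rw [br4_smul₁]; exact tsi_smul _ k (hx b c d)
  · intro l; exact peel2 l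

end Master

end T4proof

open T4proof in

theorem T4_free_algebra_generators_inv3 (K : Type*) [CommRing K] (h3 : IsUnit (3 : K))
    (Y : Type*) [Nonempty Y] :
    T4 (FreeAlgebra K Y) =
      TwoSidedIdeal.span
        ({x | ∃ y1 y2 y3 y4 : Y,
            x = br4 (FreeAlgebra.ι K y1) (FreeAlgebra.ι K y2)
                  (FreeAlgebra.ι K y3) (FreeAlgebra.ι K y4)} ∪
         {x | ∃ y1 y2 y3 y4 y5 y6 : Y,
            x = (br (FreeAlgebra.ι K y1) (FreeAlgebra.ι K y2) *
                   br (FreeAlgebra.ι K y3) (FreeAlgebra.ι K y4)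
                 + br (FreeAlgebra.ι K y1) (FreeAlgebra.ι K y3) *
                   br (FreeAlgebra.ι K y2) (FreeAlgebra.ι K y4)) *
                br (FreeAlgebra.ι K y5) (FreeAlgebra.ι K y6)} ∪
         {x | ∃ y1 y2 y3 y4 y5 : Y,
            x = br (FreeAlgebra.ι K y1) (FreeAlgebra.ι K y2) *
                br3 (FreeAlgebra.ι K y3) (FreeAlgebra.ι K y4) (FreeAlgebra.ι K y5)}) := by
  apply le_antisymm
  · intro x hx
    have hx' : x ∈ TwoSidedIdeal.span
        {z | ∃ a b c d : FreeAlgebra K Y, z = br4 a b c d} := hx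
    rw [TwoSidedIdeal.mem_span_iff] at hx'
    refine hx' _ ?_
    rintro z ⟨a, b, c, d, rfl⟩
    exact br4_mem_J a b c d
  · intro x hx
    rw [TwoSidedIdeal.mem_span_iff] at hx
    refine hx _ ?_
    rintro z ((⟨y1, y2, y3, y4, rfl⟩ | ⟨y1, y2, y3, y4, y5, y6, rfl⟩) |
      ⟨y1, y2, y3, y4, y5, rfl⟩)
    · exact t4_br4 _ _ _ _
    · exact W_mem h3 _ _ _ _ _ _
    · exact h_mem h3 _ _ _ _ _
end

section
/- Let H be the free abelian group with basis { h_σ : σ ∈ S_{2k+3} } indexed by permutations of {1,...,2k+3} (writing h_{i1...i_{2k+3}} for the basis element corresponding to the permutation j ↦ i_j). Let P be the subgroup of H generated by all elements h_{i1...i_{2k+3}} − sgn(σ)·h_{i_{σ(1)}...i_{σ(2k+3)}} for σ ∈ S_{2k+3}, together with all elements h_{i1...i_{2k} i_{2k+1} i_{2k+2} i_{2k+3}} + h_{i1...i_{2k} i_{2k+2} i_{2k+3} i_{2k+1}} + h_{i1...i_{2k} i_{2k+3} i_{2k+1} i_{2k+2}}. Then the basis element h_{1 2 ... (2k+3)}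 corresponding to the identity permutation does not belong to P. -/
/-- The 3-cycle on the last three elements of `Fin (2*k+3)`:
it sends position `2k` to `2k+1`, `2k+1` to `2k+2` and `2k+2` to `2k`
(0-based; these are the 1-based positions `2k+1, 2k+2, 2k+3`). -/
def lastThreeCycle (k : ℕ) : Equiv.Perm (Fin (2 * k + 3)) :=
  Equiv.swap ⟨2 * k, by omega⟩ ⟨2 * k + 1, by omega⟩ *
    Equiv.swap ⟨2 * k + 1, by omega⟩ ⟨2 * k + 2, by omega⟩

/-- The invariant homomorphism sending `single ρ c` to `c * sgn ρ` in `ZMod 3`. -/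
noncomputable def phi (k : ℕ) : (Equiv.Perm (Fin (2 * k + 3)) →₀ ℤ) →+ ZMod 3 :=
  Finsupp.liftAddHom fun σ =>
    (Int.castAddHom (ZMod 3)).comp (AddMonoidHom.mulLeft ((Equiv.Perm.sign σ : ℤ)))

lemma phi_single (k : ℕ) (ρ : Equiv.Perm (Fin (2 * k + 3))) (c : ℤ) :
    phi k (Finsupp.single ρ c) = ((Equiv.Perm.sign ρ : ℤ) * c : ℤ) := by
  simp [phi]

lemma sign_lastThreeCycle (k : ℕ) : Equiv.Perm.sign (lastThreeCycle k) = 1 := by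
  have h1 : (⟨2 * k, by omega⟩ : Fin (2 * k + 3)) ≠ ⟨2 * k + 1, by omega⟩ := by
    simp [Fin.ext_iff]
  have h2 : (⟨2 * k + 1, by omega⟩ : Fin (2 * k + 3)) ≠ ⟨2 * k + 2, by omega⟩ := by
    simp [Fin.ext_iff]
  simp [lastThreeCycle, Equiv.Perm.sign_swap h1, Equiv.Perm.sign_swap h2]

theorem single_one_not_mem_P (k : ℕ) (hk : 1 ≤ k) :
    Finsupp.single (1 : Equiv.Perm (Fin (2 * k + 3))) (1 : ℤ) ∉
      AddSubgroup.closure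
        ({x | ∃ ρ σ : Equiv.Perm (Fin (2 * k + 3)),
            x = Finsupp.single ρ (1 : ℤ)
              - (Equiv.Perm.sign σ : ℤ) • Finsupp.single (ρ * σ) (1 : ℤ)} ∪
         {x | ∃ ρ : Equiv.Perm (Fin (2 * k + 3)),
            x = Finsupp.single ρ (1 : ℤ)
              + Finsupp.single (ρ * lastThreeCycle k) (1 : ℤ)
              + Finsupp.single (ρ * lastThreeCycle k * lastThreeCycle k) (1 : ℤ)}) := by
  intro hmem
  have hsub : AddSubgroup.closure
      ({x | ∃ ρ σ : Equiv.Perm (Fin (2 * k + 3)),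
          x = Finsupp.single ρ (1 : ℤ)
            - (Equiv.Perm.sign σ : ℤ) • Finsupp.single (ρ * σ) (1 : ℤ)} ∪
       {x | ∃ ρ : Equiv.Perm (Fin (2 * k + 3)),
          x = Finsupp.single ρ (1 : ℤ)
            + Finsupp.single (ρ * lastThreeCycle k) (1 : ℤ)
            + Finsupp.single (ρ * lastThreeCycle k * lastThreeCycle k) (1 : ℤ)})
      ≤ (phi k).ker := by
    rw [AddSubgroup.closure_le]
    rintro x (⟨ρ, σ, rfl⟩ | ⟨ρ, rfl⟩)
    · have : (Equiv.Perm.sign σ : ℤ) • Finsupp.single (ρ * σ) (1 : ℤ)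
        = Finsupp.single (ρ * σ) ((Equiv.Perm.sign σ : ℤ)) := by
        rw [Finsupp.smul_single, smul_eq_mul, mul_one]
      rcases Int.units_eq_one_or (Equiv.Perm.sign σ) with h | h <;>
        simp [SetLike.mem_coe, AddMonoidHom.mem_ker, this, phi_single,
          Equiv.Perm.sign_mul, Units.val_mul, h]
    · have hc := sign_lastThreeCycle k
      simp only [SetLike.mem_coe, AddMonoidHom.mem_ker, map_add, phi_single,
        Equiv.Perm.sign_mul, hc, mul_one, Units.val_mul, Units.val_one]
      push_cast
      ring_nf
      have : ((Equiv.Perm.sign ρ : ℤ) : ZMod 3) * 3 = 0 := by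
        rw [show ((3 : ZMod 3)) = 0 by decide, mul_zero]
      linear_combination this
  have h0 : phi k (Finsupp.single (1 : Equiv.Perm (Fin (2 * k + 3))) (1 : ℤ)) = 0 :=
    hsub hmem
  rw [phi_single] at h0
  simp at h0
end

section
/- Let I be a left ideal of the free associative ring ℤ⟨X⟩ generated, as a left ideal, by a subset S of the subring Γ generated by all left-normed commutators in the generators. Then I ∩ Γ = Γ·S, the left ideal of Γ generated by S. -/
/-- The free unital associative ring `ℤ⟨X⟩` on countably many generators. -/
abbrev FreeRing' : Type := FreeAlgebra ℤ ℕ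

/-- The generator `x_i`. -/
noncomputable def x (i : ℕ) : FreeRing' := FreeAlgebra.ι ℤ i

/-- The unital subring `Γ` of `ℤ⟨X⟩` generated by all left-normed commutators
`[x_{i1}, ..., x_{il}]` of the free generators, of length `l ≥ 2`. -/
noncomputable def Gamma : Subring FreeRing' :=
  Subring.closure
    {g | ∃ (i j : ℕ) (rest : List ℕ),
      g = rest.foldl (fun acc m => br acc (x m)) (br (x i) (x j))}

/-!
Every `r ∈ ℤ⟨X⟩` has a component `π r ∈ Γ`, namely its summand for the empty word in
`ℤ⟨X⟩ = ⊕ x_w Γ` (`w` sorted), and `π` is right `Γ`-linear and fixes `Γ`. So if `u = ∑ rᵢ sᵢ` lies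
in `Γ` with `sᵢ ∈ S`, then `u = π u = ∑ π(rᵢ) sᵢ ∈ Γ S`.

To construct `π`, let `ℤ⟨X⟩` act on the free right `ℤ⟨X⟩`-module on all words, `e_w` standing for
`x_w`: the generator `x_k` inserts `k` into a sorted word, and each smaller letter `x_j` it passes
leaves a commutator `[x_k, x_j]`, which is pushed to the right end of the word using
`c x_j = x_j c + [c, x_j]`. On sorted words every element of `Γ` then acts just by moving to the
right end; on the commutator generators this comes down to the Jacobi identity (the overlap
`x_k x_j x_i` of the diamond lemma). Then `π r` is the coefficient of `e_[]` in `r • e_[]`, and it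
lies in `Γ` because `Γ` is closed under `[·, x_j]`.
-/

open MulOpposite Finsupp

theorem Ideal.span_inter_eq_closure_of_retraction {R : Type*} [Ring R] {Γ : Subring R}
    (π : R →+ R) (hπ_mem : ∀ r, π r ∈ Γ) (hπ_mul : ∀ r, ∀ s ∈ Γ, π (r * s) = π r * s)
    (hπ_one : π 1 = 1) {S : Set R} (hS : S ⊆ Γ) :
    (Ideal.span S : Set R) ∩ Γ = AddSubgroup.closure {y | ∃ g ∈ Γ, ∃ s ∈ S, y = g * s} := by
  set C := AddSubgroup.closure {y | ∃ g ∈ Γ, ∃ s ∈ S, y = g * s}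
  apply Set.Subset.antisymm
  · rintro u ⟨hu, huΓ⟩
    have key : ∀ v ∈ Ideal.span S, ∀ r, π (r * v) ∈ C := by
      intro v hv
      induction hv using Submodule.span_induction with
      | mem s hs =>
        intro r
        rw [hπ_mul r s (hS hs)]
        exact AddSubgroup.subset_closure ⟨_, hπ_mem r, s, hs, rfl⟩
      | zero => simp [C.zero_mem]
      | add v w _ _ hv hw => intro r; rw [mul_add, map_add]; exact C.add_mem (hv r) (hw r)
      | smul a v _ hv => intro r; rw [smul_eq_mul, ← mul_assoc]; exact hv _
    have hπu : π u = u := by simpa [hπ_one] using hπ_mul 1 u huΓ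
    simpa [hπu] using key u hu 1
  · have : C ≤ (Ideal.span S).toAddSubgroup ⊓ Γ.toAddSubgroup := by
      refine (AddSubgroup.closure_le _).2 ?_
      rintro _ ⟨g, hg, s, hs, rfl⟩
      exact ⟨Ideal.mul_mem_left _ g (Ideal.subset_span hs), Γ.mul_mem hg (hS hs)⟩
    exact fun y hy => this hy

theorem Finsupp.mapDomain_apply_mem {α β M S : Type*} [AddCommMonoid M] [SetLike S M]
    [AddSubmonoidClass S M] {A : S} (f : α → β) {v : α →₀ M} (hv : ∀ a, v a ∈ A) (b : β) :
    mapDomain f v b ∈ A := by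
  rw [mapDomain, sum_apply]
  refine sum_mem fun a _ => ?_
  change single (f a) (v a) b ∈ A
  obtain rfl | hb := eq_or_ne (f a) b
  · rw [single_eq_same]; exact hv a
  · rw [single_eq_of_ne' hb]; exact zero_mem A

theorem List.Pairwise.le_of_mem_of_le_head {α : Type*} [Preorder α] {i j a : α} {w : List α}
    (hw : (j :: w).Pairwise (· ≤ ·)) (hij : i ≤ j) (ha : a ∈ j :: w) : i ≤ a := by
  rcases List.mem_cons.1 ha with rfl | ha
  exacts [hij, hij.trans (List.rel_of_pairwise_cons hw ha)]

theorem br_add_left {R : Type*} [Ring R] (a b c : R) : br (a + b) c = br a c + br b c := by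
  simp only [br]; noncomm_ring

theorem br_mul_left {R : Type*} [Ring R] (a b c : R) : br (a * b) c = a * br b c + br a c * b := by
  simp only [br]; noncomm_ring

theorem br_neg_left {R : Type*} [Ring R] (a c : R) : br (-a) c = -br a c := by
  simp only [br]; noncomm_ring

theorem br_one_left {R : Type*} [Ring R] (c : R) : br 1 c = 0 := by
  simp [br]

theorem br_self {R : Type*} [Ring R] (a : R) : br a a = 0 := sub_self _

theorem br_comm {R : Type*} [Ring R] (a b : R) : br a b = -br b a := by
  simp only [br]; noncomm_ring

theorem br_x_mem_Gamma {c : FreeRing'} (hc : c ∈ Gamma) (k : ℕ) : br c (x k) ∈ Gamma := by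
  induction hc using Subring.closure_induction with
  | mem c hc =>
    obtain ⟨i, j, rest, rfl⟩ := hc
    exact Subring.subset_closure ⟨i, j, rest ++ [k], by rw [List.foldl_append]; rfl⟩
  | zero => simp [br, Gamma.zero_mem]
  | one => simp [br_one_left, Gamma.zero_mem]
  | add a b _ _ ha hb => rw [br_add_left]; exact Gamma.add_mem ha hb
  | neg a _ ha => rw [br_neg_left]; exact Gamma.neg_mem ha
  | mul a b ha' hb' ha hb =>
    rw [br_mul_left]; exact Gamma.add_mem (Gamma.mul_mem ha' hb) (Gamma.mul_mem ha hb')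

theorem Gamma_le_of_br_mem {T : Subring FreeRing'} (hbase : ∀ i j, br (x i) (x j) ∈ T)
    (hstep : ∀ c ∈ T, ∀ k, br c (x k) ∈ T) : Gamma ≤ T := by
  refine Subring.closure_le.2 ?_
  rintro _ ⟨i, j, rest, rfl⟩
  induction rest using List.reverseRecOn with
  | nil => exact hbase i j
  | append_singleton rest k ih => rw [List.foldl_append]; exact hstep _ ih k

namespace NormalForm

/-- `f` stands for `∑ u, x_u * f u`; scalars in `ℤ⟨X⟩ᵐᵒᵖ` multiply the coefficients on the
right. -/
abbrev Expansion : Type := List ℕ →₀ FreeRing'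

noncomputable def prepend (j : ℕ) : Expansion →ₗ[FreeRing'ᵐᵒᵖ] Expansion :=
  lmapDomain FreeRing' FreeRing'ᵐᵒᵖ (List.cons j)

/-- `pushPast w c` is `c * x_w` rewritten with `c x_j = x_j c + [c, x_j]`. -/
noncomputable def pushPast : List ℕ → FreeRing' →+ Expansion
  | [] => singleAddHom []
  | j :: w => (prepend j).toAddMonoidHom.comp (pushPast w) +
      (pushPast w).comp (AddMonoidHom.mulRight (x j) - AddMonoidHom.mulLeft (x j))

/-- For sorted `w`, `insertGen k w` is `x_k * x_w` rewritten as a combination of sorted words. -/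
noncomputable def insertGen (k : ℕ) : List ℕ → Expansion
  | [] => single [k] 1
  | j :: w => if k ≤ j then single (k :: j :: w) 1
      else prepend j (insertGen k w) + pushPast w (br (x k) (x j))

noncomputable def opSMulRight (v : Expansion) : FreeRing' →ₗ[FreeRing'ᵐᵒᵖ] Expansion where
  toFun γ := op γ • v
  map_add' a b := by simp [op_add, add_smul]
  map_smul' m γ := by
    change op (γ * m.unop) • v = m • op γ • v
    rw [op_mul, op_unop, mul_smul]

noncomputable def extend (v : List ℕ → Expansion) : Expansion →ₗ[FreeRing'ᵐᵒᵖ] Expansion :=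
  lsum ℤ fun w => opSMulRight (v w)

noncomputable def insertOp (k : ℕ) : Expansion →ₗ[FreeRing'ᵐᵒᵖ] Expansion :=
  extend (insertGen k)

theorem pushPast_nil (c : FreeRing') : pushPast [] c = single [] c := rfl

theorem pushPast_cons (j : ℕ) (w : List ℕ) (c : FreeRing') :
    pushPast (j :: w) c = prepend j (pushPast w c) + pushPast w (br c (x j)) := rfl

theorem insertGen_cons_of_le {k j : ℕ} (h : k ≤ j) (w : List ℕ) :
    insertGen k (j :: w) = single (k :: j :: w) 1 := if_pos h

theorem insertGen_cons_of_lt {k j : ℕ} (h : j < k) (w : List ℕ) :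
    insertGen k (j :: w) = prepend j (insertGen k w) + pushPast w (br (x k) (x j)) :=
  if_neg h.not_ge

@[simp] theorem prepend_single (j : ℕ) (w : List ℕ) (γ : FreeRing') :
    prepend j (single w γ) = single (j :: w) γ :=
  mapDomain_single

@[simp] theorem extend_single (v : List ℕ → Expansion) (w : List ℕ) (γ : FreeRing') :
    extend v (single w γ) = op γ • v w :=
  lsum_single _ _ _ _

theorem single_eq_op_smul (w : List ℕ) (γ : FreeRing') : single w γ = op γ • single w 1 := by
  rw [smul_single, op_smul_eq_mul, one_mul]

theorem hom_ext_single_one {F G : Expansion →ₗ[FreeRing'ᵐᵒᵖ] Expansion}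
    (h : ∀ w, F (single w 1) = G (single w 1)) : F = G :=
  lhom_ext fun w γ => by rw [single_eq_op_smul, map_smul, map_smul, h]

theorem extend_eq_of_support {v : List ℕ → Expansion} {F : Expansion →ₗ[FreeRing'ᵐᵒᵖ] Expansion}
    {s : Set (List ℕ)} (h : ∀ w ∈ s, F (single w 1) = v w) {f : Expansion}
    (hf : f ∈ supported FreeRing' FreeRing'ᵐᵒᵖ s) : F f = extend v f := by
  rw [← sum_single f, map_finsuppSum, map_finsuppSum]
  refine sum_congr fun w hw => ?_
  rw [extend_single, single_eq_op_smul, map_smul, h w (hf hw)]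

theorem extend_mem_supported {v : List ℕ → Expansion} {s t : Set (List ℕ)}
    (hv : ∀ w ∈ s, v w ∈ supported FreeRing' FreeRing'ᵐᵒᵖ t) {f : Expansion}
    (hf : f ∈ supported FreeRing' FreeRing'ᵐᵒᵖ s) :
    extend v f ∈ supported FreeRing' FreeRing'ᵐᵒᵖ t := by
  rw [extend, lsum_apply]
  exact Submodule.finsuppSum_mem _ _ _ _ fun w hw =>
    Submodule.smul_mem _ _ (hv w (hf (mem_support_iff.2 hw)))

noncomputable def pushOp (c : FreeRing') : Expansion →ₗ[FreeRing'ᵐᵒᵖ] Expansion :=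
  extend fun w => pushPast w c

@[simp] theorem pushOp_single (c : FreeRing') (w : List ℕ) (γ : FreeRing') :
    pushOp c (single w γ) = op γ • pushPast w c :=
  extend_single _ _ _

theorem pushOp_prepend (c : FreeRing') (j : ℕ) (f : Expansion) :
    pushOp c (prepend j f) = prepend j (pushOp c f) + pushOp (br c (x j)) f := by
  have : pushOp c ∘ₗ prepend j = prepend j ∘ₗ pushOp c + pushOp (br c (x j)) :=
    hom_ext_single_one fun w => by simp [pushPast_cons]
  exact LinearMap.congr_fun this f

theorem pushOp_pushPast (c d : FreeRing') (w : List ℕ) :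
    pushOp c (pushPast w d) = pushPast w (c * d) := by
  induction w generalizing c d with
  | nil =>
    rw [pushPast_nil, pushOp_single, pushPast_nil, pushPast_nil, smul_single, op_smul_eq_mul]
  | cons j w ih =>
    rw [pushPast_cons, map_add, pushOp_prepend, ih, ih, ih, pushPast_cons, br_mul_left, map_add]
    abel

theorem pushPast_one (w : List ℕ) : pushPast w 1 = single w 1 := by
  induction w with
  | nil => rfl
  | cons j w ih => rw [pushPast_cons, br_one_left, map_zero, ih, prepend_single, add_zero]

noncomputable def pushHom : FreeRing' →+* Module.End FreeRing'ᵐᵒᵖ Expansion where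
  toFun := pushOp
  map_one' := hom_ext_single_one fun w => by simp [pushPast_one]
  map_mul' c d := hom_ext_single_one fun w => by simp [pushOp_pushPast]
  map_zero' := hom_ext_single_one fun w => by simp
  map_add' c d := hom_ext_single_one fun w => by simp

theorem pushHom_apply (c : FreeRing') : pushHom c = pushOp c := rfl

@[simp] theorem insertOp_single (k : ℕ) (w : List ℕ) (γ : FreeRing') :
    insertOp k (single w γ) = op γ • insertGen k w :=
  extend_single _ _ _

theorem insertOp_prepend_of_lt {j k : ℕ} (h : j < k) (f : Expansion) :
    insertOp k (prepend j f) = prepend j (insertOp k f) + pushOp (br (x k) (x j)) f := by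
  have : insertOp k ∘ₗ prepend j = prepend j ∘ₗ insertOp k + pushOp (br (x k) (x j)) :=
    hom_ext_single_one fun w => by simp [insertGen_cons_of_lt h]
  exact LinearMap.congr_fun this f

theorem insertGen_of_forall_le {k : ℕ} {w : List ℕ} (h : ∀ a ∈ w, k ≤ a) :
    insertGen k w = single (k :: w) 1 := by
  cases w with
  | nil => rfl
  | cons j w => exact insertGen_cons_of_le (h j List.mem_cons_self) w

theorem pushPast_mem_supported (w : List ℕ) (c : FreeRing') :
    pushPast w c ∈ supported FreeRing' FreeRing'ᵐᵒᵖ {u | u.Sublist w} := by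
  induction w generalizing c with
  | nil => exact single_mem_supported _ _ List.Sublist.slnil
  | cons j w ih =>
    rw [pushPast_cons]
    exact add_mem
      (supported_comap_lmapDomain _ _ _ _ (supported_mono (fun u hu => hu.cons_cons j) (ih c)))
      (supported_mono (fun u hu => hu.cons j) (ih _))

theorem insertGen_mem_supported (k : ℕ) {w : List ℕ} (hw : w.Pairwise (· ≤ ·)) :
    insertGen k w ∈ supported FreeRing' FreeRing'ᵐᵒᵖ {u | u.Pairwise (· ≤ ·) ∧ u ⊆ k :: w} := by
  induction w with
  | nil => exact single_mem_supported _ _ ⟨List.pairwise_singleton _ _, List.Subset.refl _⟩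
  | cons j w ih =>
    obtain ⟨hj, hw'⟩ := List.pairwise_cons.1 hw
    rcases le_or_gt k j with hkj | hjk
    · rw [insertGen_cons_of_le hkj]
      exact single_mem_supported _ _
        ⟨List.pairwise_cons.2 ⟨fun _ => hw.le_of_mem_of_le_head hkj, hw⟩, List.Subset.refl _⟩
    · rw [insertGen_cons_of_lt hjk]
      refine add_mem (supported_comap_lmapDomain _ _ _ _ (supported_mono ?_ (ih hw')))
        (supported_mono ?_ (pushPast_mem_supported w _))
      · rintro u ⟨hu, hsub⟩
        refine ⟨List.pairwise_cons.2 ⟨fun a ha => ?_, hu⟩, ?_⟩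
        · rcases List.mem_cons.1 (hsub ha) with rfl | ha
          exacts [hjk.le, hj a ha]
        · exact List.cons_subset.2 ⟨by simp, List.Subset.trans hsub (by simp)⟩
      · intro u hu
        exact ⟨hw'.sublist hu, List.Subset.trans hu.subset (by simp)⟩

theorem insertOp_eq_prepend {k : ℕ} {f : Expansion}
    (hf : f ∈ supported FreeRing' FreeRing'ᵐᵒᵖ {u | ∀ a ∈ u, k ≤ a}) :
    insertOp k f = prepend k f :=
  (extend_eq_of_support (fun w hw => by rw [prepend_single, insertGen_of_forall_le hw]) hf).symm

theorem pushOp_insertGen_of_forall_le (c : FreeRing') {k : ℕ} {w : List ℕ}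
    (h : ∀ a ∈ w, k ≤ a) :
    pushOp c (insertGen k w) = insertOp k (pushPast w c) + pushPast w (br c (x k)) := by
  have hsupp : pushPast w c ∈ supported FreeRing' FreeRing'ᵐᵒᵖ {u | ∀ a ∈ u, k ≤ a} :=
    supported_mono (fun _ hu a ha => h a (List.Sublist.subset hu ha)) (pushPast_mem_supported w c)
  rw [insertGen_of_forall_le h, pushOp_single, op_one, one_smul, pushPast_cons,
    insertOp_eq_prepend hsupp]

theorem pushOp_insertGen (c : FreeRing') (k : ℕ) {w : List ℕ} (hw : w.Pairwise (· ≤ ·)) :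
    pushOp c (insertGen k w) = insertOp k (pushPast w c) + pushPast w (br c (x k)) := by
  induction w generalizing c with
  | nil => exact pushOp_insertGen_of_forall_le c (by simp)
  | cons j w ih =>
    rcases le_or_gt k j with hkj | hjk
    · exact pushOp_insertGen_of_forall_le c fun _ => hw.le_of_mem_of_le_head hkj
    · have jacobi : br (br c (x j)) (x k) =
          br (x k) (x j) * c + br (br c (x k)) (x j) - c * br (x k) (x j) := by
        simp only [br]; noncomm_ring
      rw [insertGen_cons_of_lt hjk, map_add, pushOp_prepend, ih c hw.of_cons, ih _ hw.of_cons,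
        pushOp_pushPast, pushPast_cons j w c, pushPast_cons j w, (insertOp k).map_add,
        insertOp_prepend_of_lt hjk, pushOp_pushPast, jacobi, map_sub, map_add, map_add]
      abel

theorem insertOp_insertGen_of_forall_le {i k : ℕ} (hik : i < k) {w : List ℕ}
    (hw : w.Pairwise (· ≤ ·)) (h : ∀ a ∈ w, i ≤ a) :
    insertOp i (insertGen k w) = insertOp k (insertGen i w) + pushPast w (br (x i) (x k)) := by
  have hsupp : insertGen k w ∈ supported FreeRing' FreeRing'ᵐᵒᵖ {u | ∀ a ∈ u, i ≤ a} := by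
    refine supported_mono (fun u hu a ha => ?_) (insertGen_mem_supported k hw)
    rcases List.mem_cons.1 (hu.2 ha) with rfl | ha
    exacts [hik.le, h a ha]
  rw [insertOp_eq_prepend hsupp, insertGen_of_forall_le h, insertOp_single, op_one, one_smul,
    insertGen_cons_of_lt hik, br_comm (x i), map_neg]
  abel

theorem insertOp_insertGen {i k : ℕ} (hik : i < k) {w : List ℕ} (hw : w.Pairwise (· ≤ ·)) :
    insertOp i (insertGen k w) = insertOp k (insertGen i w) + pushPast w (br (x i) (x k)) := by
  induction w with
  | nil => exact insertOp_insertGen_of_forall_le hik hw (by simp)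
  | cons j w ih =>
    rcases le_or_gt i j with hij | hji
    · exact insertOp_insertGen_of_forall_le hik hw fun _ => hw.le_of_mem_of_le_head hij
    · have jacobi : br (br (x i) (x j)) (x k) =
          br (br (x k) (x j)) (x i) + br (br (x i) (x k)) (x j) := by
        simp only [br]; noncomm_ring
      rw [insertGen_cons_of_lt (hji.trans hik), insertGen_cons_of_lt hji, map_add, map_add,
        insertOp_prepend_of_lt hji, insertOp_prepend_of_lt (hji.trans hik), ih hw.of_cons,
        pushOp_insertGen _ k hw.of_cons, pushOp_insertGen _ i hw.of_cons, pushPast_cons, jacobi,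
        (pushPast w).map_add, (prepend j).map_add]
      abel

noncomputable def wordAction : FreeRing' →ₐ[ℤ] Module.End FreeRing'ᵐᵒᵖ Expansion :=
  FreeAlgebra.lift ℤ insertOp

@[simp] theorem wordAction_x (k : ℕ) : wordAction (x k) = insertOp k :=
  FreeAlgebra.lift_ι_apply _ _

abbrev sortedPart : Submodule FreeRing'ᵐᵒᵖ Expansion :=
  supported FreeRing' FreeRing'ᵐᵒᵖ {w | w.Pairwise (· ≤ ·)}

theorem pushOp_mem_sortedPart (c : FreeRing') {f : Expansion} (hf : f ∈ sortedPart) :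
    pushOp c f ∈ sortedPart := by
  refine extend_mem_supported (fun w (hw : w.Pairwise (· ≤ ·)) => ?_) hf
  exact supported_mono (fun _ hu => List.Pairwise.sublist hu hw) (pushPast_mem_supported w c)

noncomputable def pushCompatible : Subring FreeRing' where
  carrier := {r | ∀ f ∈ sortedPart, wordAction r f = pushHom r f}
  zero_mem' _ _ := by simp
  one_mem' _ _ := by simp
  add_mem' ha hb f hf := by simp [ha f hf, hb f hf]
  neg_mem' ha f hf := by simp [ha f hf]
  mul_mem' {a b} ha hb f hf := by
    rw [map_mul, map_mul, Module.End.mul_apply, Module.End.mul_apply, hb f hf]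
    exact ha _ (pushOp_mem_sortedPart b hf)

theorem mem_pushCompatible {r : FreeRing'}
    (h : ∀ w : List ℕ, w.Pairwise (· ≤ ·) → wordAction r (single w 1) = pushPast w r) :
    r ∈ pushCompatible :=
  fun _ hf => extend_eq_of_support h hf

theorem br_x_mem_pushCompatible {c : FreeRing'} (hc : c ∈ pushCompatible) (k : ℕ) :
    br c (x k) ∈ pushCompatible := by
  refine mem_pushCompatible fun w hw => ?_
  have hc' : ∀ f ∈ sortedPart, wordAction c f = pushOp c f := hc
  have hsorted : insertGen k w ∈ sortedPart :=
    supported_mono (fun _ hu => hu.1) (insertGen_mem_supported k hw)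
  rw [br, map_sub, map_mul, map_mul, LinearMap.sub_apply, Module.End.mul_apply,
    Module.End.mul_apply, wordAction_x, insertOp_single, op_one, one_smul, hc' _ hsorted,
    hc' _ (single_mem_supported _ _ hw), pushOp_single, op_one, one_smul, pushOp_insertGen c k hw]
  abel

theorem br_x_x_mem_pushCompatible (i k : ℕ) : br (x i) (x k) ∈ pushCompatible := by
  refine mem_pushCompatible fun w hw => ?_
  rw [br, map_sub, map_mul, map_mul, LinearMap.sub_apply, Module.End.mul_apply,
    Module.End.mul_apply, wordAction_x, wordAction_x, insertOp_single, insertOp_single, op_one,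
    one_smul, one_smul]
  rcases lt_trichotomy i k with hik | rfl | hki
  · rw [insertOp_insertGen hik hw]
    abel
  · rw [sub_self, ← br, br_self, map_zero]
  · rw [insertOp_insertGen hki hw, br_comm, map_neg]
    abel

theorem Gamma_le_pushCompatible : Gamma ≤ pushCompatible :=
  Gamma_le_of_br_mem br_x_x_mem_pushCompatible fun _ hc k => br_x_mem_pushCompatible hc k

def gammaCoeffs : AddSubgroup Expansion where
  carrier := {f | ∀ u, f u ∈ Gamma}
  add_mem' hf hg u := Gamma.add_mem (hf u) (hg u)
  zero_mem' _ := Gamma.zero_mem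
  neg_mem' hf u := Gamma.neg_mem (hf u)

theorem single_mem_gammaCoeffs {γ : FreeRing'} (hγ : γ ∈ Gamma) (w : List ℕ) :
    single w γ ∈ gammaCoeffs := by
  intro u
  obtain rfl | hu := eq_or_ne w u
  · rwa [single_eq_same]
  · rw [single_eq_of_ne' hu]
    exact Gamma.zero_mem

theorem pushPast_mem_gammaCoeffs (w : List ℕ) {c : FreeRing'} (hc : c ∈ Gamma) :
    pushPast w c ∈ gammaCoeffs := by
  induction w generalizing c with
  | nil => exact single_mem_gammaCoeffs hc []
  | cons j w ih => exact add_mem (mapDomain_apply_mem _ (ih hc)) (ih (br_x_mem_Gamma hc j))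

theorem insertGen_mem_gammaCoeffs (k : ℕ) (w : List ℕ) : insertGen k w ∈ gammaCoeffs := by
  induction w with
  | nil => exact single_mem_gammaCoeffs Gamma.one_mem _
  | cons j w ih =>
    rcases le_or_gt k j with hkj | hjk
    · rw [insertGen_cons_of_le hkj]
      exact single_mem_gammaCoeffs Gamma.one_mem _
    · rw [insertGen_cons_of_lt hjk]
      exact add_mem (mapDomain_apply_mem _ ih)
        (pushPast_mem_gammaCoeffs w (Subring.subset_closure ⟨k, j, [], rfl⟩))

theorem extend_mem_gammaCoeffs {v : List ℕ → Expansion} (hv : ∀ w, v w ∈ gammaCoeffs)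
    {f : Expansion} (hf : f ∈ gammaCoeffs) : extend v f ∈ gammaCoeffs := by
  intro u
  rw [extend, lsum_apply, Finsupp.sum_apply]
  exact sum_mem fun w _ => Gamma.mul_mem (hv w u) (hf w)

theorem wordAction_mem_gammaCoeffs (r : FreeRing') {f : Expansion} (hf : f ∈ gammaCoeffs) :
    wordAction r f ∈ gammaCoeffs := by
  induction r using FreeAlgebra.induction generalizing f with
  | grade0 z =>
    rw [AlgHom.commutes, Algebra.algebraMap_eq_smul_one, LinearMap.smul_apply,
      Module.End.one_apply]
    exact zsmul_mem hf z
  | grade1 k =>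
    rw [← x, wordAction_x]
    exact extend_mem_gammaCoeffs (insertGen_mem_gammaCoeffs k) hf
  | mul a b ha hb => rw [map_mul]; exact ha (hb hf)
  | add a b ha hb => rw [map_add]; exact add_mem (ha hf) (hb hf)

theorem wordAction_single_nil {γ : FreeRing'} (hγ : γ ∈ Gamma) :
    wordAction γ (single [] 1) = single [] γ := by
  rw [Gamma_le_pushCompatible hγ _ (single_mem_supported _ _ List.Pairwise.nil), pushHom_apply,
    pushOp_single, op_one, one_smul, pushPast_nil]

noncomputable def gammaProj : FreeRing' →+ FreeRing' where
  toFun r := wordAction r (single [] 1) []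
  map_zero' := by simp
  map_add' a b := by simp

theorem gammaProj_mem (r : FreeRing') : gammaProj r ∈ Gamma :=
  wordAction_mem_gammaCoeffs r (single_mem_gammaCoeffs Gamma.one_mem []) []

theorem gammaProj_mul (r : FreeRing') {s : FreeRing'} (hs : s ∈ Gamma) :
    gammaProj (r * s) = gammaProj r * s := by
  change wordAction (r * s) _ [] = wordAction r _ [] * s
  rw [map_mul, Module.End.mul_apply, wordAction_single_nil hs, single_eq_op_smul, map_smul,
    Finsupp.smul_apply, op_smul_eq_mul]

theorem gammaProj_one : gammaProj 1 = 1 := by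
  simp [gammaProj]

end NormalForm

theorem left_ideal_inter_Gamma (S : Set FreeRing') (hS : S ⊆ (Gamma : Set FreeRing')) :
    (Ideal.span S : Set FreeRing') ∩ (Gamma : Set FreeRing') =
      (AddSubgroup.closure {y : FreeRing' | ∃ g ∈ Gamma, ∃ s ∈ S, y = g * s} :
        Set FreeRing') :=
  Ideal.span_inter_eq_closure_of_retraction NormalForm.gammaProj NormalForm.gammaProj_mem
    NormalForm.gammaProj_mul NormalForm.gammaProj_one hS
end

section
/- The additive group of the free associative ring ℤ⟨X⟩ on X = {x1, x2, ...} is the direct sum of the subgroups x_{i1} x_{i2} ··· x_{is} Γ over all s ≥ 0 and all weakly increasing index sequences i1 ≤ i2 ≤ ... ≤ is, where Γ is the unital subring generated by all left-normed commutators of the generators. -/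
/-- For a weakly increasing list `w = [i1, ..., is]`, the additive subgroup
`x_{i1} x_{i2} ⋯ x_{is} · Γ` of `ℤ⟨X⟩`. -/
noncomputable def monomialGamma (w : List ℕ) : AddSubgroup FreeRing' :=
  AddSubgroup.map (AddMonoidHom.mulLeft ((w.map x).prod)) Gamma.toAddSubgroup

/-!
Spanning: a product `x_u γ` with `u` unsorted is straightened by adjacent swaps
`x_b x_a = x_a x_b + [x_b, x_a]`; the commutator is pushed to the right through the remaining
letters (`c x_m = x_m c + [c, x_m]`, again a left-normed commutator) until it is absorbed into `Γ`,
so all correction terms are words of smaller length times elements of `Γ`, and induction on the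
length applies.

Independence: the ring map `x_i ↦ x_i + t_i` into `ℤ⟨X⟩[t_1, t_2, …]` with central `t_i` fixes
`Γ`, because central summands drop out of commutators. It sends `x_w γ` to `∏ (x_i + t_i) · γ`,
whose coefficient at `t^w` is `γ` and all of whose monomials divide `t^w`. In a vanishing finite
sum `∑ x_w γ_w`, the coefficient at `t^w` for a `w` with divisibility-maximal `t^w` is `γ_w`,
so `γ_w = 0`.
-/

open AddMonoidAlgebra

noncomputable section

section Commutator

variable {R : Type*} [Ring R]

lemma map_br {S F : Type*} [Ring S] [FunLike F R S] [RingHomClass F R S] (f : F) (a b : R) :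
    f (br a b) = br (f a) (f b) := by
  simp only [br, map_sub, map_mul]

lemma br_add_left_of_commute {z : R} (hz : ∀ y, Commute z y) (a b : R) :
    br (z + a) b = br a b := by
  simp only [br, add_mul, mul_add, (hz b).eq]
  abel

lemma br_add_right_of_commute {z : R} (hz : ∀ y, Commute z y) (a b : R) :
    br a (z + b) = br a b := by
  simp only [br, add_mul, mul_add, (hz a).eq]
  abel

end Commutator

def leftNormedComms : Set FreeRing' :=
  {g | ∃ (i j : ℕ) (rest : List ℕ), g = rest.foldl (fun acc m => br acc (x m)) (br (x i) (x j))}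

lemma leftNormedComms_subset_Gamma : leftNormedComms ⊆ Gamma := Subring.subset_closure

lemma br_x_mem_leftNormedComms {c : FreeRing'} (hc : c ∈ leftNormedComms) (m : ℕ) :
    br c (x m) ∈ leftNormedComms := by
  obtain ⟨i, j, rest, rfl⟩ := hc
  exact ⟨i, j, rest ++ [m], by rw [List.foldl_append, List.foldl_cons, List.foldl_nil]⟩

lemma leftNormedComms_induction {P : FreeRing' → Prop} (base : ∀ i j, P (br (x i) (x j)))
    (step : ∀ c m, P c → P (br c (x m))) : ∀ c ∈ leftNormedComms, P c := by
  have foldl_step : ∀ (rest : List ℕ) (c : FreeRing'), P c →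
      P (rest.foldl (fun acc m => br acc (x m)) c) := by
    intro rest
    induction rest with
    | nil => exact fun _ => id
    | cons m rest ih => exact fun c hc => ih _ (step c m hc)
  rintro _ ⟨i, j, rest, rfl⟩
  exact foldl_step rest _ (base i j)

def wordMonomial (w : List ℕ) : FreeRing' := (w.map x).prod

@[simp]
lemma wordMonomial_nil : wordMonomial [] = 1 := rfl

@[simp]
lemma wordMonomial_cons (i : ℕ) (w : List ℕ) : wordMonomial (i :: w) = x i * wordMonomial w :=
  List.prod_cons

abbrev SortedWord : Type := {l : List ℕ // l.Pairwise (· ≤ ·)}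

lemma wordMonomial_mul_mem_monomialGamma (w : List ℕ) {γ : FreeRing'} (hγ : γ ∈ Gamma) :
    wordMonomial w * γ ∈ monomialGamma w :=
  AddSubgroup.mem_map.2 ⟨γ, hγ, rfl⟩

section Spanning

def spanLengthLT (n : ℕ) : AddSubgroup FreeRing' :=
  AddSubgroup.closure {a | ∃ u γ, u.length < n ∧ γ ∈ Gamma ∧ wordMonomial u * γ = a}

lemma wordMonomial_mul_mem_spanLengthLT {u : List ℕ} {n : ℕ} (hu : u.length < n)
    {γ : FreeRing'} (hγ : γ ∈ Gamma) : wordMonomial u * γ ∈ spanLengthLT n :=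
  AddSubgroup.subset_closure ⟨u, γ, hu, hγ, rfl⟩

lemma spanLengthLT_mono : Monotone spanLengthLT := fun _ _ hmn =>
  AddSubgroup.closure_mono fun _ ⟨u, γ, hu, hγ, ha⟩ => ⟨u, γ, hu.trans_le hmn, hγ, ha⟩

lemma x_mul_mem_spanLengthLT (i : ℕ) {n : ℕ} {a : FreeRing'} (ha : a ∈ spanLengthLT n) :
    x i * a ∈ spanLengthLT (n + 1) := by
  suffices spanLengthLT n ≤ (spanLengthLT (n + 1)).comap (AddMonoidHom.mulLeft (x i)) from this ha
  refine AddSubgroup.closure_le _ |>.2 ?_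
  rintro _ ⟨u, γ, hu, hγ, rfl⟩
  simpa [← mul_assoc] using wordMonomial_mul_mem_spanLengthLT (u := i :: u) (by simpa) hγ

lemma leftNormedComm_mul_mem_spanLengthLT (s : List ℕ) {c γ : FreeRing'} (hc : c ∈ leftNormedComms)
    (hγ : γ ∈ Gamma) : c * (wordMonomial s * γ) ∈ spanLengthLT (s.length + 1) := by
  induction s generalizing c with
  | nil =>
    simpa using wordMonomial_mul_mem_spanLengthLT (u := []) Nat.one_pos
      (Gamma.mul_mem (leftNormedComms_subset_Gamma hc) hγ)
  | cons m s ih =>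
    have hsplit : c * (wordMonomial (m :: s) * γ)
        = x m * (c * (wordMonomial s * γ)) + br c (x m) * (wordMonomial s * γ) := by
      simp only [wordMonomial_cons, br]
      noncomm_ring
    rw [hsplit]
    exact add_mem (x_mul_mem_spanLengthLT m (ih hc))
      (spanLengthLT_mono (by simp) (ih (br_x_mem_leftNormedComms hc m)))

lemma wordMonomial_mul_sub_mem_spanLengthLT {u v : List ℕ} (huv : u.Perm v) {γ : FreeRing'}
    (hγ : γ ∈ Gamma) : wordMonomial u * γ - wordMonomial v * γ ∈ spanLengthLT u.length := by
  induction huv with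
  | nil => simp
  | cons i _ ih =>
    simpa [mul_assoc, ← mul_sub] using x_mul_mem_spanLengthLT i ih
  | swap i j l =>
    have hswap : wordMonomial (j :: i :: l) * γ - wordMonomial (i :: j :: l) * γ
        = br (x j) (x i) * (wordMonomial l * γ) := by
      simp only [wordMonomial_cons, br]
      noncomm_ring
    rw [hswap]
    have hc : br (x j) (x i) ∈ leftNormedComms := ⟨j, i, [], rfl⟩
    exact spanLengthLT_mono (by simp) (leftNormedComm_mul_mem_spanLengthLT l hc hγ)
  | trans h₁₂ _ ih₁₂ ih₂₃ =>
    rw [← sub_add_sub_cancel]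
    exact add_mem ih₁₂ (h₁₂.length_eq ▸ ih₂₃)

lemma spanLengthLT_le_iSup (n : ℕ) : spanLengthLT n ≤ ⨆ w : SortedWord, monomialGamma w.1 := by
  induction n using Nat.strong_induction_on with
  | _ n ih =>
    refine AddSubgroup.closure_le _ |>.2 ?_
    rintro _ ⟨u, γ, hu, hγ, rfl⟩
    set v := u.insertionSort (· ≤ ·)
    have hsorted : wordMonomial v * γ ∈ ⨆ w : SortedWord, monomialGamma w.1 :=
      le_iSup (fun w : SortedWord => monomialGamma w.1) ⟨v, List.pairwise_insertionSort _ u⟩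
        (wordMonomial_mul_mem_monomialGamma v hγ)
    rw [← sub_add_cancel (wordMonomial u * γ) (wordMonomial v * γ)]
    exact add_mem (ih _ hu <|
      wordMonomial_mul_sub_mem_spanLengthLT (List.perm_insertionSort _ u).symm hγ) hsorted

lemma wordMonomial_mem_iSup (w : List ℕ) :
    wordMonomial w ∈ ⨆ w : SortedWord, monomialGamma w.1 := by
  simpa using spanLengthLT_le_iSup _ (wordMonomial_mul_mem_spanLengthLT (Nat.lt_succ_self _)
    Gamma.one_mem)

lemma iSup_monomialGamma_eq_top : ⨆ w : SortedWord, monomialGamma w.1 = ⊤ := by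
  rw [eq_top_iff]
  rintro a -
  have ha : a ∈ Subalgebra.toSubmodule (Algebra.adjoin ℤ (Set.range x)) := by
    rw [show Set.range x = Set.range (FreeAlgebra.ι ℤ) from rfl, FreeAlgebra.adjoin_range_ι]
    trivial
  rw [Algebra.adjoin_eq_span, ← FreeMonoid.mrange_lift] at ha
  induction ha using Submodule.span_induction with
  | mem _ hy =>
    obtain ⟨w, rfl⟩ := hy
    rw [FreeMonoid.lift_apply]
    exact wordMonomial_mem_iSup w.toList
  | zero => exact zero_mem _
  | add _ _ _ _ hy hz => exact add_mem hy hz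
  | smul n _ _ hy => exact zsmul_mem hy n

end Spanning

section TopCoefficient

variable {A : Type*} [Ring A]

def centralVar (i : ℕ) : A[ℕ →₀ ℕ] := single (Finsupp.single i 1) 1

lemma centralVar_commute (i : ℕ) (f : A[ℕ →₀ ℕ]) : Commute (centralVar i) f :=
  single_commute (fun _ => AddCommute.all _ _) (fun _ => Commute.one_left _) f

lemma coeff_centralVar_mul_single_add (i : ℕ) (f : A[ℕ →₀ ℕ]) (d : ℕ →₀ ℕ) :
    (centralVar i * f).coeff (Finsupp.single i 1 + d) = f.coeff d := by
  rw [centralVar, coeff_single_mul_eq_mul_coeff d (fun _ _ => add_right_inj _), one_mul]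

lemma coeff_centralVar_mul_of_not_le {i : ℕ} (f : A[ℕ →₀ ℕ]) {d : ℕ →₀ ℕ}
    (h : ¬ Finsupp.single i 1 ≤ d) : (centralVar i * f).coeff d = 0 :=
  coeff_single_mul_of_forall_add_ne _ _ fun _ hd => h (hd ▸ le_self_add)

def HasTopCoeff (f : A[ℕ →₀ ℕ]) (e : ℕ →₀ ℕ) (c : A) : Prop :=
  f.coeff e = c ∧ ∀ d, ¬ d ≤ e → f.coeff d = 0

lemma hasTopCoeff_single_zero (c : A) : HasTopCoeff (single 0 c) 0 c :=
  ⟨Finsupp.single_eq_same, fun _ hd => Finsupp.single_eq_of_ne fun h => hd (h ▸ le_rfl)⟩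

lemma HasTopCoeff.centralVar_add_single_zero_mul {f : A[ℕ →₀ ℕ]} {e : ℕ →₀ ℕ} {c : A}
    (hf : HasTopCoeff f e c) (i : ℕ) (a : A) :
    HasTopCoeff ((centralVar i + single 0 a) * f) (Finsupp.single i 1 + e) c := by
  have hne : ¬ Finsupp.single i 1 + e ≤ e := fun h =>
    one_ne_zero (Finsupp.single_eq_zero.1 (nonpos_iff_eq_zero.1 (add_le_iff_nonpos_left.1 h)))
  refine ⟨?_, fun d hd => ?_⟩
  · rw [add_mul, coeff_add, Finsupp.add_apply, coeff_centralVar_mul_single_add,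
      coeff_single_zero_mul, hf.2 _ hne, mul_zero, add_zero, hf.1]
  · rw [add_mul, coeff_add, Finsupp.add_apply, coeff_single_zero_mul,
      hf.2 d fun h => hd (h.trans le_add_self), mul_zero, add_zero]
    by_cases hi : Finsupp.single i 1 ≤ d
    · obtain ⟨d', rfl⟩ := exists_add_of_le hi
      rw [coeff_centralVar_mul_single_add]
      exact hf.2 d' fun h => hd (add_le_add le_rfl h)
    · exact coeff_centralVar_mul_of_not_le f hi

def multidegree (w : List ℕ) : ℕ →₀ ℕ := Multiset.toFinsupp w

@[simp]
lemma multidegree_nil : multidegree [] = 0 := Multiset.toFinsupp_zero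

lemma multidegree_cons (i : ℕ) (w : List ℕ) :
    multidegree (i :: w) = Finsupp.single i 1 + multidegree w := by
  rw [multidegree, multidegree, ← Multiset.cons_coe, ← Multiset.singleton_add,
    Multiset.toFinsupp_add, Multiset.toFinsupp_singleton]

lemma eq_of_multidegree_eq {w w' : List ℕ} (hw : w.Pairwise (· ≤ ·)) (hw' : w'.Pairwise (· ≤ ·))
    (h : multidegree w = multidegree w') : w = w' :=
  List.Perm.eq_of_pairwise' hw hw' (Multiset.coe_eq_coe.1 (Multiset.toFinsupp.injective h))

lemma hasTopCoeff_prod_mul (a : ℕ → A) (w : List ℕ) (c : A) :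
    HasTopCoeff ((w.map fun i => centralVar i + single 0 (a i)).prod * single 0 c)
      (multidegree w) c := by
  induction w with
  | nil => simpa using hasTopCoeff_single_zero c
  | cons i w ih =>
    rw [List.map_cons, List.prod_cons, mul_assoc, multidegree_cons]
    exact ih.centralVar_add_single_zero_mul i (a i)

end TopCoefficient

section Independence

def centralShift : FreeRing' →ₐ[ℤ] FreeRing'[ℕ →₀ ℕ] :=
  FreeAlgebra.lift ℤ fun i => centralVar i + single 0 (x i)

lemma centralShift_x (i : ℕ) : centralShift (x i) = centralVar i + single 0 (x i) :=
  FreeAlgebra.lift_ι_apply _ _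

lemma centralShift_of_mem_Gamma {γ : FreeRing'} (hγ : γ ∈ Gamma) : centralShift γ = single 0 γ := by
  change γ ∈ RingHom.eqLocus centralShift.toRingHom (singleZeroRingHom (M := ℕ →₀ ℕ))
  refine Subring.closure_le.2 (leftNormedComms_induction (fun i j => ?_) (fun c m hc => ?_)) hγ
  · change centralShift (br (x i) (x j)) = single 0 (br (x i) (x j))
    rw [map_br, centralShift_x, centralShift_x, br_add_left_of_commute (centralVar_commute i),
      br_add_right_of_commute (centralVar_commute j)]
    exact (map_br (singleZeroRingHom (M := ℕ →₀ ℕ)) (x i) (x j)).symm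
  · change centralShift (br c (x m)) = single 0 (br c (x m))
    rw [map_br, show centralShift c = single 0 c from hc, centralShift_x,
      br_add_right_of_commute (centralVar_commute m)]
    exact (map_br (singleZeroRingHom (M := ℕ →₀ ℕ)) c (x m)).symm

lemma hasTopCoeff_centralShift_wordMonomial_mul (w : List ℕ) {γ : FreeRing'} (hγ : γ ∈ Gamma) :
    HasTopCoeff (centralShift (wordMonomial w * γ)) (multidegree w) γ := by
  rw [map_mul, centralShift_of_mem_Gamma hγ, wordMonomial, map_list_prod, List.map_map,
    show ⇑centralShift ∘ x = fun i => centralVar i + single 0 (x i) from funext centralShift_x]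
  exact hasTopCoeff_prod_mul x w γ

lemma coeAddMonoidHom_monomialGamma_injective :
    Function.Injective (DirectSum.coeAddMonoidHom fun w : SortedWord => monomialGamma w.1) := by
  classical
  rw [injective_iff_map_eq_zero]
  intro f hf
  by_contra hne
  obtain ⟨w₀, hw₀, hmax⟩ := f.support.exists_maximalFor (fun w => multidegree w.1)
    (Finset.nonempty_iff_ne_empty.2 (mt DFinsupp.support_eq_empty.1 hne))
  choose γ hγ hfγ using fun w => AddSubgroup.mem_map.1 (f w).2
  have hcoeff : ∀ w ∈ f.support, w ≠ w₀ →
      (centralShift (f w : FreeRing')).coeff (multidegree w₀.1) = 0 := by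
    intro w hw hww₀
    rw [← hfγ w]
    refine (hasTopCoeff_centralShift_wordMonomial_mul w.1 (hγ w)).2 _ fun hle => hww₀ ?_
    exact Subtype.ext (eq_of_multidegree_eq w.2 w₀.2 (le_antisymm (hmax hw hle) hle))
  have htop : (centralShift (DirectSum.coeAddMonoidHom _ f)).coeff (multidegree w₀.1) = γ w₀ := by
    rw [DirectSum.coeAddMonoidHom_eq_dfinsuppSum, DFinsupp.sum, map_sum, coeff_sum,
      Finset.sum_apply', Finset.sum_eq_single_of_mem w₀ hw₀ hcoeff, ← hfγ]
    exact (hasTopCoeff_centralShift_wordMonomial_mul w₀.1 (hγ w₀)).1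
  rw [hf, map_zero] at htop
  refine DFinsupp.mem_support_iff.1 hw₀ (Subtype.ext ?_)
  rw [← hfγ, ← htop]
  simp

end Independence

end

/-- The additive group of `ℤ⟨X⟩` is the internal direct sum of the subgroups
`x_{i1} ⋯ x_{is} Γ` over all weakly increasing index sequences (including the
empty one, whose summand is `Γ` itself). -/
theorem free_ring_direct_sum_decomposition :
    DirectSum.IsInternal
      (fun w : {l : List ℕ // l.Pairwise (· ≤ ·)} => monomialGamma w.1) := by
  have hrange : ⨆ w : SortedWord, monomialGamma w.1
      ≤ (DirectSum.coeAddMonoidHom fun w : SortedWord => monomialGamma w.1).range :=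
    iSup_le fun w b hb => ⟨DirectSum.of (fun w : SortedWord => monomialGamma w.1) w ⟨b, hb⟩,
      DirectSum.coeAddMonoidHom_of _ w _⟩
  refine ⟨coeAddMonoidHom_monomialGamma_injective, fun a => hrange ?_⟩
  rw [iSup_monomialGamma_eq_top]
  trivial
end

section
/- Let R be a ring, T4 the two-sided ideal generated by all commutators [a1,a2,a3,a4], and I2 the two-sided ideal generated by all [a1,a2,a3,a4] together with all products [a1,a2,a3]·[a4,a5,a6] (ai ∈ R). Then every product of two triple commutators [b1,b2,b3]·[b4,b5,b6] is central modulo the ideal generated by fourth commutators; i.e., for all b1,...,b6, c ∈ R, the commutator [[b1,b2,b3]·[b4,b5,b6], c] lies in the ideal generated by all [a1,a2,a3,a4]. -/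
theorem comm33_central_mod_T4 {R : Type*} [Ring R] (b1 b2 b3 b4 b5 b6 c : R) :
    br (br3 b1 b2 b3 * br3 b4 b5 b6) c ∈ T4 R := by
  have h1 : br4 b4 b5 b6 c ∈ T4 R := TwoSidedIdeal.subset_span ⟨_, _, _, _, rfl⟩
  have h2 : br4 b1 b2 b3 c ∈ T4 R := TwoSidedIdeal.subset_span ⟨_, _, _, _, rfl⟩
  have key : br (br3 b1 b2 b3 * br3 b4 b5 b6) c
      = br3 b1 b2 b3 * br4 b4 b5 b6 c + br4 b1 b2 b3 c * br3 b4 b5 b6 := by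
    simp only [br, br3, br4]; noncomm_ring
  rw [key]
  exact (T4 R).add_mem ((T4 R).mul_mem_left _ _ h1) ((T4 R).mul_mem_right _ _ h2)
end

section
/- Let R be a ring and let I3 be the two-sided ideal of R generated by all elements [a1,a2,a3,a4], [a1,a2,a3][a4,a5,a6], and [a1,a2][a3,a4,a5] − sgn(σ)[a_{σ(1)},a_{σ(2)}][a_{σ(3)},a_{σ(4)},a_{σ(5)}] for σ ∈ S5 (all ai ∈ R). Then for all a1,...,a7 ∈ R, the element [([a1,a2][a3,a4] + [a1,a3][a2,a4])[a5,a6], a7] belongs to I3; i.e., ([a1,a2][a3,a4] + [a1,a3][a2,a4])[a5,a6] is central modulo I3. -/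
/-- The two-sided ideal `I3` generated by fourth commutators, products of two triple
commutators, and the alternating relations for `[a1,a2][a3,a4,a5]`. -/
def I3 (R : Type*) [Ring R] : TwoSidedIdeal R :=
  TwoSidedIdeal.span
    ({x | ∃ a b c d : R, x = br4 a b c d} ∪
     {x | ∃ a1 a2 a3 a4 a5 a6 : R, x = br3 a1 a2 a3 * br3 a4 a5 a6} ∪
     {x | ∃ (a : Fin 5 → R) (σ : Equiv.Perm (Fin 5)),
        x = br (a 0) (a 1) * br3 (a 2) (a 3) (a 4)
          - (Equiv.Perm.sign σ : ℤ) •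
            (br (a (σ 0)) (a (σ 1)) * br3 (a (σ 2)) (a (σ 3)) (a (σ 4)))})

/-- Abstract computation: in any ring where all fourth left-normed commutators vanish and
`[x,y]·[z,w,u]` satisfies the alternating relations, `([a1,a2][a3,a4]+[a1,a3][a2,a4])[a5,a6]`
is central. -/
theorem key_comm222 {Q : Type*} [Ring Q]
    (H4 : ∀ a b c d : Q, br4 a b c d = 0)
    (HA : ∀ (a : Fin 5 → Q) (σ : Equiv.Perm (Fin 5)),
      br (a 0) (a 1) * br3 (a 2) (a 3) (a 4)
        = (Equiv.Perm.sign σ : ℤ) • (br (a (σ 0)) (a (σ 1)) * br3 (a (σ 2)) (a (σ 3)) (a (σ 4))))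
    (a1 a2 a3 a4 a5 a6 a7 : Q) :
    br ((br a1 a2 * br a3 a4 + br a1 a3 * br a2 a4) * br a5 a6) a7 = 0 := by
  -- triple commutators are central
  have comm3 : ∀ x y z w : Q, br3 x y z * w = w * br3 x y z := by
    intro x y z w
    have h := H4 x y z w
    simp only [br4, br] at h
    exact sub_eq_zero.mp h
  -- double commutators commute with each other
  have comm2 : ∀ x y z w : Q, br x y * br z w = br z w * br x y := by
    intro x y z w
    have h : br x y * br z w - br z w * br x y = br4 x y z w - br4 x y w z := by
      simp only [br4, br3, br]; noncomm_ring
    rw [H4, H4, sub_self] at h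
    exact sub_eq_zero.mp h
  have hT12 : ∀ x0 x1 x2 x3 x4 : Q,
      br x0 x1 * br3 x2 x3 x4 = -(br x0 x2 * br3 x1 x3 x4) := by
    intro x0 x1 x2 x3 x4
    have h := HA ![x0,x1,x2,x3,x4] (Equiv.swap 1 2)
    simpa [Equiv.swap_apply_def, Equiv.Perm.sign_swap] using h
  have hcyc : ∀ x0 x1 x2 x3 x4 : Q,
      br x0 x1 * br3 x2 x3 x4 = br x1 x2 * br3 x0 x3 x4 := by
    intro x0 x1 x2 x3 x4
    have h := HA ![x0,x1,x2,x3,x4] (Equiv.swap 0 1 * Equiv.swap 1 2)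
    simpa [Equiv.swap_apply_def, Equiv.Perm.sign_swap] using h
  have hA : ∀ x0 x1 x2 x3 x4 : Q,
      br x0 x1 * br3 x2 x3 x4 = br x2 x3 * br3 x0 x1 x4 := by
    intro x0 x1 x2 x3 x4
    have h := HA ![x0,x1,x2,x3,x4] (Equiv.swap 0 2 * Equiv.swap 1 3)
    simpa [Equiv.swap_apply_def, Equiv.Perm.sign_swap] using h
  -- the key sign computation: [a1,a3][a2,a4]c3(567) = -[a1,a2][a3,a4]c3(567)
  have hkey : br a1 a3 * (br a2 a4 * br3 a5 a6 a7)
      = -(br a1 a2 * (br a3 a4 * br3 a5 a6 a7)) := by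
    rw [hcyc a2 a4 a5 a6 a7]
    rw [show br a1 a3 * (br a4 a5 * br3 a2 a6 a7)
        = br a4 a5 * (br a1 a3 * br3 a2 a6 a7) by
      rw [← mul_assoc, comm2, mul_assoc]]
    rw [hT12 a1 a3 a2 a6 a7, mul_neg]
    rw [show br a4 a5 * (br a1 a2 * br3 a3 a6 a7)
        = br a1 a2 * (br a4 a5 * br3 a3 a6 a7) by
      rw [← mul_assoc, comm2, mul_assoc]]
    rw [hcyc a4 a5 a3 a6 a7, hcyc a5 a3 a4 a6 a7]
  -- Leibniz expansion
  have expand : br ((br a1 a2 * br a3 a4 + br a1 a3 * br a2 a4) * br a5 a6) a7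
      = br a1 a2 * br a3 a4 * br3 a5 a6 a7
      + br a1 a3 * br a2 a4 * br3 a5 a6 a7
      + (br a1 a2 * br3 a3 a4 a7) * br a5 a6
      + (br3 a1 a2 a7 * br a3 a4) * br a5 a6
      + (br a1 a3 * br3 a2 a4 a7) * br a5 a6
      + (br3 a1 a3 a7 * br a2 a4) * br a5 a6 := by
    simp only [br3, br]; noncomm_ring
  rw [expand]
  -- normalize each term to ±E where E = br a1 a2 * (br a3 a4 * br3 a5 a6 a7)
  have t3 : (br a1 a2 * br3 a3 a4 a7) * br a5 a6
      = br a1 a2 * (br a3 a4 * br3 a5 a6 a7) := by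
    rw [mul_assoc, comm3 a3 a4 a7 (br a5 a6), hA a5 a6 a3 a4 a7]
  have t4 : (br3 a1 a2 a7 * br a3 a4) * br a5 a6
      = br a1 a2 * (br a3 a4 * br3 a5 a6 a7) := by
    rw [mul_assoc, comm3 a1 a2 a7 (br a3 a4 * br a5 a6), mul_assoc,
      hA a5 a6 a1 a2 a7, ← mul_assoc, comm2 a3 a4 a1 a2, mul_assoc]
  have t5 : (br a1 a3 * br3 a2 a4 a7) * br a5 a6
      = br a1 a3 * (br a2 a4 * br3 a5 a6 a7) := by
    rw [mul_assoc, comm3 a2 a4 a7 (br a5 a6), hA a5 a6 a2 a4 a7]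
  have t6 : (br3 a1 a3 a7 * br a2 a4) * br a5 a6
      = br a1 a3 * (br a2 a4 * br3 a5 a6 a7) := by
    rw [mul_assoc, comm3 a1 a3 a7 (br a2 a4 * br a5 a6), mul_assoc,
      hA a5 a6 a1 a3 a7, ← mul_assoc, comm2 a2 a4 a1 a3, mul_assoc]
  rw [t3, t4, t5, t6, mul_assoc (br a1 a2), mul_assoc (br a1 a3), hkey]
  abel

theorem comm222_central_mod_I3 {R : Type*} [Ring R] (a1 a2 a3 a4 a5 a6 a7 : R) :
    br ((br a1 a2 * br a3 a4 + br a1 a3 * br a2 a4) * br a5 a6) a7 ∈ I3 R := by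
  set c := (I3 R).ringCon with hc
  let f : R →+* c.Quotient := c.mk'
  have hmem : ∀ x : R, x ∈ I3 R → f x = 0 := by
    intro x hx
    have hcx : c x 0 := hx
    have h0 : f x = f 0 := Quotient.sound' hcx
    simpa using h0
  have hsurj : Function.Surjective f := fun x => Quot.inductionOn x fun r => ⟨r, rfl⟩
  have hbr : ∀ x y : R, f (br x y) = br (f x) (f y) := by
    intro x y; simp [br, map_mul, map_sub]
  have hbr3 : ∀ x y z : R, f (br3 x y z) = br3 (f x) (f y) (f z) := by
    intro x y z; simp [br3, hbr]
  have hbr4 : ∀ x y z w : R, f (br4 x y z w) = br4 (f x) (f y) (f z) (f w) := by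
    intro x y z w; simp [br4, hbr, hbr3]
  have H4 : ∀ x y z w : c.Quotient, br4 x y z w = 0 := by
    intro x y z w
    obtain ⟨x, rfl⟩ := hsurj x; obtain ⟨y, rfl⟩ := hsurj y
    obtain ⟨z, rfl⟩ := hsurj z; obtain ⟨w, rfl⟩ := hsurj w
    rw [← hbr4]
    exact hmem _ (TwoSidedIdeal.subset_span (Or.inl (Or.inl ⟨x, y, z, w, rfl⟩)))
  have HA : ∀ (a : Fin 5 → c.Quotient) (σ : Equiv.Perm (Fin 5)),
      br (a 0) (a 1) * br3 (a 2) (a 3) (a 4)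
        = (Equiv.Perm.sign σ : ℤ) •
            (br (a (σ 0)) (a (σ 1)) * br3 (a (σ 2)) (a (σ 3)) (a (σ 4))) := by
    intro a σ
    choose b hb using fun i => hsurj (a i)
    have hgen : br (b 0) (b 1) * br3 (b 2) (b 3) (b 4)
        - (Equiv.Perm.sign σ : ℤ) •
          (br (b (σ 0)) (b (σ 1)) * br3 (b (σ 2)) (b (σ 3)) (b (σ 4))) ∈ I3 R :=
      TwoSidedIdeal.subset_span (Or.inr ⟨b, σ, rfl⟩)
    have hz := hmem _ hgen
    rw [map_sub, sub_eq_zero] at hz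
    have h2 : ∀ x y z w u : R,
        f (br x y * br3 z w u) = br (f x) (f y) * br3 (f z) (f w) (f u) := by
      intro x y z w u; simp [map_mul, hbr, hbr3]
    rw [h2, map_zsmul, h2] at hz
    simpa [hb] using hz
  have hfin : f (br ((br a1 a2 * br a3 a4 + br a1 a3 * br a2 a4) * br a5 a6) a7) = 0 := by
    have hrw : f (br ((br a1 a2 * br a3 a4 + br a1 a3 * br a2 a4) * br a5 a6) a7)
        = br ((br (f a1) (f a2) * br (f a3) (f a4) + br (f a1) (f a3) * br (f a2) (f a4))
            * br (f a5) (f a6)) (f a7) := by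
      simp [hbr, map_mul, map_add]
    rw [hrw]
    exact key_comm222 H4 HA (f a1) (f a2) (f a3) (f a4) (f a5) (f a6) (f a7)
  have : c (br ((br a1 a2 * br a3 a4 + br a1 a3 * br a2 a4) * br a5 a6) a7) 0 := by
    have h0 : f (br ((br a1 a2 * br a3 a4 + br a1 a3 * br a2 a4) * br a5 a6) a7) = f 0 := by
      simpa using hfin
    exact Quotient.exact' h0
  exact this
end

section
/- Let K be a commutative unital ring and K⟨X⟩ the free associative unital K-algebra on a countable set X. Let T be a multihomogeneous T-ideal of K⟨X⟩ (an ideal invariant under all K-algebra endomorphisms and closed under taking multihomogeneous components), and let Γ be the unital subalgebra generated by all left-normed commutators of the free generators. If T is generated as a two-sided ideal by T ∩ Γ, then T is also generated as a left ideal by T ∩ Γ. -/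
open scoped Classical

/-- The free unital associative `K`-algebra `K⟨X⟩` on countably many generators,
realized as the monoid algebra of the free monoid on `ℕ`. -/
abbrev FreeAlg (K : Type*) [CommRing K] : Type _ := MonoidAlgebra K (FreeMonoid ℕ)

/-- The free generator `x_i`. -/
noncomputable def xgen (K : Type*) [CommRing K] (i : ℕ) : FreeAlg K :=
  MonoidAlgebra.of K (FreeMonoid ℕ) (FreeMonoid.of i)

/-- The unital subalgebra `Γ` generated by all left-normed commutators
`[x_{i1},...,x_{il}]`, `l ≥ 2`, of the free generators. -/
noncomputable def GammaK (K : Type*) [CommRing K] : Subalgebra K (FreeAlg K) :=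
  Algebra.adjoin K
    {g | ∃ (i j : ℕ) (rest : List ℕ),
      g = rest.foldl (fun acc m => br acc (xgen K m)) (br (xgen K i) (xgen K j))}

/-- The multihomogeneous component of multidegree `d` of an element of `K⟨X⟩`:
the part supported on words containing exactly `d i` occurrences of each letter `i`. -/
noncomputable def component (K : Type*) [CommRing K] (d : ℕ → ℕ) (f : FreeAlg K) :
    FreeAlg K :=
  MonoidAlgebra.ofCoeff
    (Finsupp.filter (fun w : FreeMonoid ℕ => ∀ i, (FreeMonoid.toList w).count i = d i) f.coeff)

/-!
Since `[T ∩ Γ, x_i] ⊆ T ∩ Γ` (`T` is an ideal and `Γ` is closed under `[·, x_i]`), right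
multiplication by a generator can be rewritten as `s * x_i = x_i * s + [s, x_i]`, which stays in
the left ideal spanned by `T ∩ Γ`. The generators generate `K⟨X⟩` as an algebra, so this left
ideal is two-sided, hence equal to the two-sided ideal spanned by `T ∩ Γ`, which is `T`.
-/

theorem Ideal.isTwoSided_of_mul_mem_of_adjoin_eq_top {K A : Type*} [CommRing K] [Ring A]
    [Algebra K A] {s : Set A} (hs : Algebra.adjoin K s = ⊤) {I : Ideal A}
    (hI : ∀ f ∈ I, ∀ a ∈ s, f * a ∈ I) : I.IsTwoSided := by
  let rightMultipliers : Subalgebra K A :=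
    { carrier := {b | ∀ f ∈ I, f * b ∈ I}
      mul_mem' := fun ha hb f hf => mul_assoc f _ _ ▸ hb _ (ha f hf)
      add_mem' := fun ha hb f hf => mul_add f _ _ ▸ add_mem (ha f hf) (hb f hf)
      algebraMap_mem' := fun r f hf => by
        rw [← Algebra.commutes]
        exact I.mul_mem_left _ hf }
  have hle : Algebra.adjoin K s ≤ rightMultipliers :=
    Algebra.adjoin_le fun a ha f hf => hI f hf a ha
  exact ⟨fun b hf => hle (hs ▸ Algebra.mem_top : b ∈ Algebra.adjoin K s) _ hf⟩

theorem Ideal.mul_mem_span_of_br_mem {A : Type*} [Ring A] {S : Set A} {a : A}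
    (hS : ∀ x ∈ S, br x a ∈ Ideal.span S) :
    ∀ f ∈ Ideal.span S, f * a ∈ Ideal.span S := by
  intro f hf
  induction hf using Submodule.span_induction with
  | mem x hx =>
    have hswap : x * a = a * x + br x a := by simp only [br]; abel
    rw [hswap]
    exact add_mem (Ideal.mul_mem_left _ a (Ideal.subset_span hx)) (hS x hx)
  | zero => simp
  | add x y _ _ hx hy => rw [add_mul]; exact add_mem hx hy
  | smul b x _ hx => rw [smul_eq_mul, mul_assoc]; exact Ideal.mul_mem_left _ b hx

theorem TwoSidedIdeal.mem_span_iff_mem_ideal_span {A : Type*} [Ring A] {S : Set A}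
    [(Ideal.span S).IsTwoSided] {x : A} : x ∈ TwoSidedIdeal.span S ↔ x ∈ Ideal.span S := by
  constructor
  · intro hx
    have hle : TwoSidedIdeal.span S ≤ (Ideal.span S).toTwoSided :=
      TwoSidedIdeal.span_le.2 fun s hs => Ideal.mem_toTwoSided.2 (Ideal.subset_span hs)
    exact Ideal.mem_toTwoSided.1 (hle hx)
  · intro hx
    have hle : Ideal.span S ≤ (TwoSidedIdeal.span S).asIdeal :=
      Ideal.span_le.2 fun s hs => TwoSidedIdeal.mem_asIdeal.2 (TwoSidedIdeal.subset_span hs)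
    exact TwoSidedIdeal.mem_asIdeal.1 (hle hx)

theorem adjoin_range_xgen (K : Type*) [CommRing K] :
    Algebra.adjoin K (Set.range (xgen K)) = ⊤ := by
  set G := Algebra.adjoin K (Set.range (xgen K))
  have hwords : ∀ w, MonoidAlgebra.of K (FreeMonoid ℕ) w ∈ G := by
    have hle : Submonoid.closure (Set.range FreeMonoid.of) ≤
        G.toSubmonoid.comap (MonoidAlgebra.of K (FreeMonoid ℕ)) :=
      Submonoid.closure_le.2 fun _ ⟨i, hi⟩ => Algebra.subset_adjoin ⟨i, hi ▸ rfl⟩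
    intro w
    exact hle (FreeMonoid.closure_range_of ▸ Submonoid.mem_top w)
  refine eq_top_iff.2 fun f _ => ?_
  exact Algebra.adjoin_le (Set.image_subset_iff.2 fun w _ => hwords w)
    (MonoidAlgebra.mem_adjoin_support f)

theorem br_xgen_mem_GammaK {K : Type*} [CommRing K] {g : FreeAlg K} (hg : g ∈ GammaK K)
    (i : ℕ) : br g (xgen K i) ∈ GammaK K := by
  induction hg using Algebra.adjoin_induction with
  | mem x hx =>
    obtain ⟨a, b, rest, rfl⟩ := hx
    exact Algebra.subset_adjoin ⟨a, b, rest ++ [i], by simp [List.foldl_append]⟩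
  | algebraMap r => rw [br, Algebra.commutes, sub_self]; exact zero_mem _
  | add x y _ _ hx hy =>
    have hexpand : br (x + y) (xgen K i) = br x (xgen K i) + br y (xgen K i) := by
      simp only [br]; noncomm_ring
    exact hexpand ▸ add_mem hx hy
  | mul x y hx' hy' hx hy =>
    have hleibniz : br (x * y) (xgen K i) = x * br y (xgen K i) + br x (xgen K i) * y := by
      simp only [br]; noncomm_ring
    exact hleibniz ▸ add_mem (mul_mem hx' hy) (mul_mem hx hy')

theorem multihomogeneous_T_ideal_left_generation_general (K : Type*) [CommRing K]
    (T : TwoSidedIdeal (FreeAlg K))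
    -- `T` is generated as a two-sided ideal by `T ∩ Γ`
    (hgen : ∀ x, x ∈ T ↔
      x ∈ TwoSidedIdeal.span ((T : Set (FreeAlg K)) ∩ (GammaK K : Set (FreeAlg K)))) :
    -- then `T` is generated as a left ideal by `T ∩ Γ`
    ∀ x, x ∈ T ↔
      x ∈ Ideal.span ((T : Set (FreeAlg K)) ∩ (GammaK K : Set (FreeAlg K))) := by
  set S : Set (FreeAlg K) := (T : Set (FreeAlg K)) ∩ (GammaK K : Set (FreeAlg K))
  have hbr : ∀ s ∈ S, ∀ i, br s (xgen K i) ∈ S := fun s ⟨hsT, hsΓ⟩ i =>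
    ⟨T.sub_mem (T.mul_mem_right _ _ hsT) (T.mul_mem_left _ _ hsT), br_xgen_mem_GammaK hsΓ i⟩
  have : (Ideal.span S).IsTwoSided := by
    refine Ideal.isTwoSided_of_mul_mem_of_adjoin_eq_top (adjoin_range_xgen K) ?_
    rintro f hf _ ⟨i, rfl⟩
    exact Ideal.mul_mem_span_of_br_mem (fun s hs => Ideal.subset_span (hbr s hs i)) f hf
  intro x
  rw [hgen x, TwoSidedIdeal.mem_span_iff_mem_ideal_span]

theorem multihomogeneous_T_ideal_left_generation (K : Type*) [CommRing K]
    (T : TwoSidedIdeal (FreeAlg K))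
    -- `T` is a T-ideal: invariant under all `K`-algebra endomorphisms
    (hTideal : ∀ f : FreeAlg K →ₐ[K] FreeAlg K, ∀ x ∈ T, f x ∈ T)
    -- `T` is multihomogeneous: closed under taking multihomogeneous components
    (hmh : ∀ x ∈ T, ∀ d : ℕ → ℕ, component K d x ∈ T)
    -- `T` is generated as a two-sided ideal by `T ∩ Γ`
    (hgen : ∀ x, x ∈ T ↔
      x ∈ TwoSidedIdeal.span ((T : Set (FreeAlg K)) ∩ (GammaK K : Set (FreeAlg K)))) :
    -- then `T` is generated as a left ideal by `T ∩ Γ`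
    ∀ x, x ∈ T ↔
      x ∈ Ideal.span ((T : Set (FreeAlg K)) ∩ (GammaK K : Set (FreeAlg K))) :=
  multihomogeneous_T_ideal_left_generation_general K T hgen
end
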